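/- arXiv:1410.5968 — 7 statements merged into one kernel-verified Lean document; each statement's English description precedes it below -/
import Mathlib

section
/- Let n ≥ 1 and K ≥ 1. If z ∈ ℝⁿ is a non-zero vector with non-negative coordinates and logarithmic diameter ℓ(z) ≤ K, then there exists a non-zero binary vector ξ ∈ {0,1}ⁿ such that ⟨z,ξ⟩/(‖z‖‖ξ‖) ≥ 1/√(log K + 1). -/
open scoped BigOperators

/-- Euclidean norm of a real vector. -/
noncomputable def enR {n : ℕ} (v : Fin n → ℝ) : ℝ :=
  Real.sqrt (∑ i, v i ^ 2)

/-- Logarithmic diameter of a real vector. -/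
noncomputable def logDiamR {n : ℕ} (z : Fin n → ℝ) : ℝ :=
  (⨆ i, |z i|) / sInf {r | ∃ i, z i ≠ 0 ∧ r = |z i|}

open Finset

/-- `(a-b)/a ≤ log a - log b` for `0 < b ≤ a`. -/
lemma log_gap (a b : ℝ) (hb : 0 < b) (hab : b ≤ a) :
    (a - b) / a ≤ Real.log a - Real.log b := by
  have ha : 0 < a := lt_of_lt_of_le hb hab
  have h1 : Real.log (b / a) ≤ b / a - 1 := Real.log_le_sub_one_of_pos (by positivity)
  have h2 : Real.log (b / a) = Real.log b - Real.log a := Real.log_div (ne_of_gt hb) (ne_of_gt ha)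
  have : (a - b) / a = 1 - b / a := by field_simp
  linarith [this, h1, h2]

/-- Abel summation identity. -/
lemma abel_id (u : ℕ → ℝ) (m : ℕ) :
    ∑ i ∈ range m, u i ^ 2
      = (∑ k ∈ range m, (u k - u (k+1)) * (∑ i ∈ range (k+1), u i))
        + u m * (∑ i ∈ range m, u i) := by
  induction m with
  | zero => simp
  | succ m ih =>
    rw [sum_range_succ, ih, sum_range_succ (fun k => (u k - u (k+1)) * _)]
    rw [sum_range_succ u m]
    ring

lemma core (u : ℕ → ℝ) (s : ℕ) (hs : 1 ≤ s)
    (hmono : ∀ i j, i ≤ j → u j ≤ u i)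
    (hposu : ∀ i, i < s → 0 < u i)
    (hzero : u s = 0)
    (K : ℝ) (hK : 1 ≤ K)
    (hratio : ∀ i, i < s → u 0 ≤ K * u i)
    (Z c : ℝ) (hZ : 0 < Z) (hc : 0 < c)
    (hZ2 : Z^2 = ∑ i ∈ range s, u i ^ 2)
    (hcL : c^2 * (Real.log K + 1) = 1)
    (H : ∀ k, 1 ≤ k → k ≤ s → ∑ i ∈ range k, u i < c * Z * Real.sqrt k) :
    False := by
  have hcZ : 0 < c * Z := mul_pos hc hZ
  -- Step 1 : √(k+1) * u k < c*Z for k < s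
  have step1 : ∀ k, k < s → Real.sqrt (k+1) * u k < c * Z := by
    intro k hk
    have h1 : ((k+1 : ℕ) : ℝ) * u k ≤ ∑ i ∈ range (k+1), u i := by
      have := Finset.card_nsmul_le_sum (range (k+1)) u (u k)
        (fun x hx => hmono x k (by simpa using Nat.lt_succ_iff.mp (mem_range.mp hx)))
      simpa [nsmul_eq_mul] using this
    have h2 := H (k+1) (by omega) (by omega)
    have hsq : Real.sqrt ((k:ℝ)+1) ^ 2 = ((k:ℝ)+1) := Real.sq_sqrt (by positivity)
    have hsqpos : 0 < Real.sqrt ((k:ℝ)+1) := Real.sqrt_pos.mpr (by positivity)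
    push_cast at h1 h2 ⊢
    nlinarith [hposu k hk, hsq, hsqpos, h1, h2]
  -- obtain t with s = t+1
  obtain ⟨t, rfl⟩ : ∃ t, s = t + 1 := ⟨s - 1, by omega⟩
  set A : ℕ → ℝ := fun k => ∑ i ∈ range k, u i with hA
  -- Abel
  have habel : Z^2 = ∑ k ∈ range (t+1), (u k - u (k+1)) * A (k+1) := by
    rw [hZ2, abel_id u (t+1), hzero]; ring
  -- bound each term
  have hterm : ∀ k ∈ range (t+1), (u k - u (k+1)) * A (k+1)
      ≤ (u k - u (k+1)) * (c * Z * Real.sqrt ((k:ℝ)+1)) := by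
    intro k hk
    have hk' := mem_range.mp hk
    have hd : 0 ≤ u k - u (k+1) := sub_nonneg.mpr (hmono k (k+1) (by omega))
    have h := H (k+1) (by omega) (by omega)
    push_cast at h
    exact mul_le_mul_of_nonneg_left (le_of_lt h) hd
  have hb1 : Z^2 ≤ c * Z * ∑ k ∈ range (t+1), (u k - u (k+1)) * Real.sqrt ((k:ℝ)+1) := by
    rw [habel, Finset.mul_sum]
    refine Finset.sum_le_sum fun k hk => ?_
    have := hterm k hk
    calc (u k - u (k+1)) * A (k+1) ≤ (u k - u (k+1)) * (c * Z * Real.sqrt ((k:ℝ)+1)) := this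
      _ = c * Z * ((u k - u (k+1)) * Real.sqrt ((k:ℝ)+1)) := by ring
  -- bound the sum by c*Z*(log K + 1)
  have hb2 : ∑ k ∈ range (t+1), (u k - u (k+1)) * Real.sqrt ((k:ℝ)+1)
      < c * Z * (Real.log K + 1) := by
    rw [sum_range_succ]
    -- last term: (u t - u (t+1)) * √(t+1) = u t * √(t+1) < c*Z
    have hlast : (u t - u (t+1)) * Real.sqrt ((t:ℝ)+1) < c * Z := by
      rw [hzero]
      have := step1 t (by omega)
      nlinarith [this]
    have hmain : ∑ k ∈ range t, (u k - u (k+1)) * Real.sqrt ((k:ℝ)+1)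
        ≤ c * Z * Real.log K := by
      have htele : ∑ k ∈ range t, (Real.log (u k) - Real.log (u (k+1)))
          = Real.log (u 0) - Real.log (u t) := Finset.sum_range_sub' (fun k => Real.log (u k)) t
      have hlogK : Real.log (u 0) - Real.log (u t) ≤ Real.log K := by
        have hut : 0 < u t := hposu t (by omega)
        have hu0 : 0 < u 0 := hposu 0 (by omega)
        have h1 : u 0 / u t ≤ K := by
          rw [div_le_iff₀ hut]; exact hratio t (by omega)
        have h2 : Real.log (u 0 / u t) ≤ Real.log K :=
          Real.log_le_log (by positivity) h1
        rwa [Real.log_div (ne_of_gt hu0) (ne_of_gt hut)] at h2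
      calc ∑ k ∈ range t, (u k - u (k+1)) * Real.sqrt ((k:ℝ)+1)
          ≤ ∑ k ∈ range t, c * Z * (Real.log (u k) - Real.log (u (k+1))) := by
            refine Finset.sum_le_sum fun k hk => ?_
            have hkt := mem_range.mp hk
            have huk : 0 < u k := hposu k (by omega)
            have huk1 : 0 < u (k+1) := hposu (k+1) (by omega)
            have hd : 0 ≤ u k - u (k+1) := sub_nonneg.mpr (hmono k (k+1) (by omega))
            have hsq : Real.sqrt ((k:ℝ)+1) ≤ c * Z / u k := by
              rw [le_div_iff₀ huk]
              exact le_of_lt (by have := step1 k (by omega); linarith [this])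
            have hlg : (u k - u (k+1)) / u k ≤ Real.log (u k) - Real.log (u (k+1)) :=
              log_gap (u k) (u (k+1)) huk1 (hmono k (k+1) (by omega))
            calc (u k - u (k+1)) * Real.sqrt ((k:ℝ)+1)
                ≤ (u k - u (k+1)) * (c * Z / u k) := mul_le_mul_of_nonneg_left hsq hd
              _ = c * Z * ((u k - u (k+1)) / u k) := by field_simp
              _ ≤ c * Z * (Real.log (u k) - Real.log (u (k+1))) :=
                  mul_le_mul_of_nonneg_left hlg (le_of_lt hcZ)
        _ = c * Z * (Real.log (u 0) - Real.log (u t)) := by rw [← Finset.mul_sum, htele]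
        _ ≤ c * Z * Real.log K := mul_le_mul_of_nonneg_left hlogK (le_of_lt hcZ)
    nlinarith [hmain, hlast]
  have : Z^2 < c * Z * (c * Z * (Real.log K + 1)) :=
    lt_of_le_of_lt hb1 (mul_lt_mul_of_pos_left hb2 hcZ)
  nlinarith [this, hcL, hZ]

theorem stmt4 {n : ℕ} (hn : 1 ≤ n) (K : ℝ) (hK : 1 ≤ K)
    (z : Fin n → ℝ) (hz : z ≠ 0) (hpos : ∀ i, 0 ≤ z i)
    (hl : logDiamR z ≤ K) :
    ∃ ξ : Fin n → ℝ, (∀ i, ξ i = 0 ∨ ξ i = 1) ∧ ξ ≠ 0 ∧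
      (∑ i, z i * ξ i) / (enR z * enR ξ) ≥ 1 / Real.sqrt (Real.log K + 1) := by
  classical
  -- basic facts
  obtain ⟨i₀, hi₀⟩ : ∃ i, z i ≠ 0 := by
    by_contra h; push_neg at h; exact hz (funext h)
  have hKpos : (0:ℝ) < K := lt_of_lt_of_le one_pos hK
  -- ratio : ∀ j i, z i ≠ 0 → z j ≤ K * z i
  have hratioZ : ∀ j i, z i ≠ 0 → z j ≤ K * z i := by
    intro j i hi
    set S : Set ℝ := {r | ∃ i, z i ≠ 0 ∧ r = |z i|} with hS
    have hSne : S.Nonempty := ⟨|z i₀|, i₀, hi₀, rfl⟩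
    have hSfin : S.Finite := by
      apply Set.Finite.subset (Set.finite_range fun i : Fin n => |z i|)
      rintro r ⟨i, _, rfl⟩; exact ⟨i, rfl⟩
    have hmS := Set.Nonempty.csInf_mem hSne hSfin
    obtain ⟨i₁, hi₁, hmi₁⟩ := hmS
    have hm_pos : 0 < sInf S := by
      rw [hmi₁]; exact abs_pos.mpr hi₁
    have hsup : |z j| ≤ ⨆ i, |z i| :=
      le_ciSup (f := fun i => |z i|) (Set.Finite.bddAbove (Set.finite_range _)) j
    have hsupK : (⨆ i, |z i|) ≤ K * sInf S := by
      have := hl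
      rw [logDiamR, div_le_iff₀ hm_pos] at this
      exact this
    have hinf_le : sInf S ≤ |z i| :=
      csInf_le (Set.Finite.bddBelow hSfin) ⟨i, hi, rfl⟩
    have : z j ≤ K * |z i| := by
      calc z j ≤ |z j| := le_abs_self _
        _ ≤ ⨆ i', |z i'| := hsup
        _ ≤ K * sInf S := hsupK
        _ ≤ K * |z i| := mul_le_mul_of_nonneg_left hinf_le (le_of_lt hKpos)
    rwa [abs_of_nonneg (hpos i)] at this
  -- sorting
  set e : Equiv.Perm (Fin n) := Equiv.trans (Fin.revPerm) (Tuple.sort z) with he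
  have heval : ∀ i : Fin n, e i = Tuple.sort z (Fin.rev i) := fun i => rfl
  set u : ℕ → ℝ := fun i => if h : i < n then z (e ⟨i, h⟩) else 0 with hu
  have huval : ∀ i : Fin n, u (i : ℕ) = z (e i) := by
    intro i; simp only [hu, i.isLt, dif_pos, Fin.eta]
  have hmono : ∀ i j : ℕ, i ≤ j → u j ≤ u i := by
    intro i j hij
    by_cases hj : j < n
    · have hi : i < n := lt_of_le_of_lt hij hj
      simp only [hu, dif_pos hi, dif_pos hj, heval]
      exact Tuple.monotone_sort z (Fin.rev_le_rev.mpr (by exact Fin.mk_le_mk.mpr hij))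
    · simp only [hu, dif_neg hj]
      by_cases hi : i < n
      · simp only [dif_pos hi]; exact hpos _
      · simp only [dif_neg hi]; exact le_refl _
  have hunn : ∀ i, 0 ≤ u i := by
    intro i
    by_cases hi : i < n
    · simp only [hu, dif_pos hi]; exact hpos _
    · simp only [hu, dif_neg hi]; exact le_refl _
  -- u 0 > 0
  have hu0 : 0 < u 0 := by
    have h1 : 0 < u ((e.symm i₀ : Fin n) : ℕ) := by
      rw [huval, Equiv.apply_symm_apply]
      exact lt_of_le_of_ne (hpos i₀) (Ne.symm hi₀)
    exact lt_of_lt_of_le h1 (hmono 0 _ (Nat.zero_le _))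
  -- define s
  have hexz : ∃ k, u k = 0 := ⟨n, by simp [hu]⟩
  set s : ℕ := Nat.find hexz with hsdef
  have hus : u s = 0 := Nat.find_spec hexz
  have hposu : ∀ i, i < s → 0 < u i := fun i hi =>
    lt_of_le_of_ne (hunn i) (Ne.symm (Nat.find_min hexz hi))
  have hs1 : 1 ≤ s := by
    rcases Nat.eq_zero_or_pos s with h | h
    · rw [h] at hus; rw [hus] at hu0; exact absurd hu0 (lt_irrefl 0)
    · exact h
  have hsn : s ≤ n := Nat.find_le (by simp [hu])
  have huzero : ∀ i, s ≤ i → u i = 0 :=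
    fun i hi => le_antisymm (hus ▸ hmono s i hi) (hunn i)
  -- ratio for u
  have hratio : ∀ i, i < s → u 0 ≤ K * u i := by
    intro i hi
    have hin : i < n := lt_of_lt_of_le hi hsn
    have h1 : u i = z (e ⟨i, hin⟩) := by simp only [hu, dif_pos hin]
    have h2 : u 0 = z (e ⟨0, lt_of_lt_of_le Nat.one_pos hn⟩) := by
      simp only [hu, dif_pos (lt_of_lt_of_le Nat.one_pos hn)]
    have hne : z (e ⟨i, hin⟩) ≠ 0 := by
      rw [← h1]; exact ne_of_gt (hposu i hi)
    rw [h1, h2]; exact hratioZ _ _ hne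
  -- Z
  set Z : ℝ := enR z with hZdef
  have hsum_pos : 0 < ∑ i, z i ^ 2 :=
    Finset.sum_pos' (fun i _ => sq_nonneg _) ⟨i₀, mem_univ _, by positivity⟩
  have hZpos : 0 < Z := Real.sqrt_pos.mpr hsum_pos
  have hZ2 : Z ^ 2 = ∑ i ∈ range s, u i ^ 2 := by
    have h1 : Z ^ 2 = ∑ i, z i ^ 2 := Real.sq_sqrt (le_of_lt hsum_pos)
    have h2 : ∑ i, z i ^ 2 = ∑ i : Fin n, z (e i) ^ 2 := (Equiv.sum_comp e fun i => z i ^ 2).symm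
    have h3 : ∑ i : Fin n, z (e i) ^ 2 = ∑ i ∈ range n, u i ^ 2 := by
      rw [← Fin.sum_univ_eq_sum_range (fun i => u i ^ 2) n]
      exact Finset.sum_congr rfl fun i _ => by rw [huval]
    have h4 : ∑ i ∈ range n, u i ^ 2 = ∑ i ∈ range s, u i ^ 2 := by
      refine (Finset.sum_subset (Finset.range_subset_range.mpr hsn) ?_).symm
      intro x _ hx
      rw [huzero x (by simpa using hx)]; ring
    rw [h1, h2, h3, h4]
  -- constants
  set L : ℝ := Real.log K + 1 with hLdef
  have hlogK : 0 ≤ Real.log K := Real.log_nonneg hK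
  have hLpos : 0 < L := by positivity
  set c : ℝ := 1 / Real.sqrt L with hcdef
  have hsqrtL : 0 < Real.sqrt L := Real.sqrt_pos.mpr hLpos
  have hcpos : 0 < c := by positivity
  have hcL : c ^ 2 * L = 1 := by
    rw [hcdef, div_pow, one_pow, Real.sq_sqrt (le_of_lt hLpos)]
    field_simp
  -- key existence
  have key : ∃ k, 1 ≤ k ∧ k ≤ s ∧ c * Z * Real.sqrt k ≤ ∑ i ∈ range k, u i := by
    by_contra hcon
    push_neg at hcon
    exact core u s hs1 hmono hposu hus K hK hratio Z c hZpos hcpos hZ2 hcL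
      (fun k h1 h2 => hcon k h1 h2)
  obtain ⟨k, hk1, hks, hkA⟩ := key
  have hkn : k ≤ n := le_trans hks hsn
  -- witness
  refine ⟨fun j => if ((e.symm j : Fin n) : ℕ) < k then 1 else 0, fun i => ?_, ?_, ?_⟩
  · by_cases h : ((e.symm i : Fin n) : ℕ) < k
    · right; simp [h]
    · left; simp [h]
  · intro hcontra
    have h0n : 0 < n := lt_of_lt_of_le Nat.one_pos hn
    have := congrFun hcontra (e ⟨0, h0n⟩)
    simp only [Equiv.symm_apply_apply, Pi.zero_apply] at this
    rw [if_pos (lt_of_lt_of_le Nat.one_pos hk1)] at this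
    exact one_ne_zero this
  · -- the inequality
    set ξ : Fin n → ℝ := fun j => if ((e.symm j : Fin n) : ℕ) < k then 1 else 0 with hξ
    have hsum1 : ∑ j, z j * ξ j = ∑ i ∈ range k, u i := by
      have h1 : ∑ j, z j * ξ j = ∑ i : Fin n, z (e i) * ξ (e i) :=
        (Equiv.sum_comp e fun j => z j * ξ j).symm
      have h2 : ∀ i : Fin n, z (e i) * ξ (e i) = if (i : ℕ) < k then u i else 0 := by
        intro i
        simp only [hξ, Equiv.symm_apply_apply, huval]
        by_cases h : (i:ℕ) < k <;> simp [h]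
      rw [h1, Finset.sum_congr rfl fun i _ => h2 i,
        Fin.sum_univ_eq_sum_range (fun i => if i < k then u i else 0) n]
      have h3 : ∑ i ∈ range n, (if i < k then u i else 0)
          = ∑ i ∈ range k, (if i < k then u i else 0) :=
        (Finset.sum_subset (Finset.range_subset_range.mpr hkn)
          (fun x _ hx => if_neg (by simpa using hx))).symm
      rw [h3]
      exact Finset.sum_congr rfl fun i hi => if_pos (mem_range.mp hi)
    have hsum2 : ∑ j, ξ j ^ 2 = (k : ℝ) := by
      have h1 : ∑ j, ξ j ^ 2 = ∑ i : Fin n, ξ (e i) ^ 2 :=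
        (Equiv.sum_comp e fun j => ξ j ^ 2).symm
      have h2 : ∀ i : Fin n, ξ (e i) ^ 2 = if (i : ℕ) < k then (1:ℝ) else 0 := by
        intro i
        simp only [hξ, Equiv.symm_apply_apply]
        by_cases h : (i:ℕ) < k <;> simp [h]
      rw [h1, Finset.sum_congr rfl fun i _ => h2 i,
        Fin.sum_univ_eq_sum_range (fun i => if i < k then (1:ℝ) else 0) n]
      have h3 : ∑ i ∈ range n, (if i < k then (1:ℝ) else 0)
          = ∑ i ∈ range k, (if i < k then (1:ℝ) else 0) :=
        (Finset.sum_subset (Finset.range_subset_range.mpr hkn)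
          (fun x _ hx => if_neg (by simpa using hx))).symm
      rw [h3, Finset.sum_congr rfl fun i hi => if_pos (mem_range.mp hi)]
      simp
    have henξ : enR ξ = Real.sqrt k := by rw [enR, hsum2]
    have hkR : (0:ℝ) < (k:ℝ) := by exact_mod_cast lt_of_lt_of_le Nat.one_pos hk1
    have hsqk : 0 < Real.sqrt (k:ℝ) := Real.sqrt_pos.mpr hkR
    rw [ge_iff_le, hsum1, henξ]
    show c ≤ (∑ i ∈ range k, u i) / (Z * Real.sqrt (k:ℝ))
    rw [le_div_iff₀ (mul_pos hZpos hsqk)]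
    calc c * (Z * Real.sqrt (k:ℝ)) = c * Z * Real.sqrt (k:ℝ) := by ring
      _ ≤ ∑ i ∈ range k, u i := hkA
end

section
/- Let n ≥ 1 and K ≥ 1. If z ∈ ℝⁿ is a non-zero vector with logarithmic diameter ℓ(z) ≤ K, then there exists a non-zero binary vector ξ ∈ {0,1}ⁿ such that |⟨z,ξ⟩|/(‖z‖‖ξ‖) ≥ 1/√(2(log K + 1)). -/
open scoped BigOperators

/-!
Replace `z` by its sign class carrying at least half of `‖z‖²` (this costs the factor `2`) and
list the absolute values there as `c₀ ≥ c₁ ≥ ⋯ ≥ c_s > 0`, so that `c₀ / c_s ≤ K`; the indicator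
of the best prefix works. Indeed, if every prefix sum satisfies `P_k ≤ √k R`, Abel summation gives
`‖c‖² = c_s P_{s+1} + ∑ (c_i - c_{i+1}) P_{i+1} ≤ R (√(s+1) c_s + ∑ √(i+1) (c_i - c_{i+1}))`, and
Cauchy–Schwarz against the weights `(i+1)(c_i² - c_{i+1}²)`, which telescope to
`‖c‖² - (s+1) c_s²`, and `(c_i - c_{i+1}) / (c_i + c_{i+1}) ≤ log (c_i / c_{i+1})`, which sum to
at most `log K`, bounds the bracket by `‖c‖ √(1 + log K)`. So the largest `P_k / √k` is at least
`‖c‖ / √(1 + log K)`.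
-/

open Finset Real

theorem div_add_le_log_sub {x y : ℝ} (hy : 0 < y) (hyx : y ≤ x) :
    (x - y) / (x + y) ≤ log x - log y := by
  have hx : 0 < x := hy.trans_le hyx
  calc (x - y) / (x + y) ≤ (x - y) / x := by gcongr; linarith
    _ = 1 - (x / y)⁻¹ := by field_simp
    _ ≤ log (x / y) := one_sub_inv_le_log_of_pos (by positivity)
    _ = log x - log y := log_div hx.ne' hy.ne'

theorem sq_add_le_mul_one_add {a X W L : ℝ} (hL : 0 ≤ L)
    (haW : a ^ 2 ≤ W) (h : X ^ 2 ≤ (W - a ^ 2) * L) : (a + X) ^ 2 ≤ W * (1 + L) := by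
  have h2 : 2 * a * X ≤ W - a ^ 2 + a ^ 2 * L := by
    nlinarith [sq_nonneg (W - a ^ 2 - a ^ 2 * L), mul_le_mul_of_nonneg_left h (sq_nonneg (2 * a)),
      mul_nonneg (sq_nonneg a) hL]
  nlinarith

theorem sum_range_succ_sq_eq (c : ℕ → ℝ) (s : ℕ) :
    ∑ m ∈ range (s + 1), c m ^ 2 = c s * ∑ m ∈ range (s + 1), c m +
      ∑ i ∈ range s, (c i - c (i + 1)) * ∑ m ∈ range (i + 1), c m := by
  induction s with
  | zero => simp [sq]
  | succ s ih =>
    rw [sum_range_succ (fun m => c m ^ 2), ih, sum_range_succ (fun i => (c i - c (i + 1)) * _),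
      sum_range_succ c (s + 1)]
    ring

theorem sum_range_mul_sub_eq (b : ℕ → ℝ) (s : ℕ) :
    ∑ i ∈ range s, ((i : ℝ) + 1) * (b i - b (i + 1)) =
      ∑ i ∈ range (s + 1), b i - ((s : ℝ) + 1) * b s := by
  induction s with
  | zero => simp
  | succ s ih =>
    rw [sum_range_succ, ih, sum_range_succ _ (s + 1)]
    push_cast
    ring

section AntitoneSeq

variable {c : ℕ → ℝ} {s : ℕ} (hpos : ∀ m ≤ s, 0 < c m) (hanti : AntitoneOn c (Set.Iic s))
include hpos hanti

theorem sum_div_add_le_log_div :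
    ∑ i ∈ range s, (c i - c (i + 1)) / (c i + c (i + 1)) ≤ log (c 0 / c s) :=
  calc ∑ i ∈ range s, (c i - c (i + 1)) / (c i + c (i + 1))
      ≤ ∑ i ∈ range s, (log (c i) - log (c (i + 1))) := by
        gcongr with i hi
        have hi : i < s := mem_range.1 hi
        exact div_add_le_log_sub (hpos _ hi) (hanti (Set.mem_Iic.2 hi.le) (Set.mem_Iic.2 hi)
          i.le_succ)
    _ = log (c 0 / c s) := by
        rw [sum_range_sub', log_div (hpos 0 s.zero_le).ne' (hpos s le_rfl).ne']

theorem sq_sum_sqrt_mul_sub_le :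
    (∑ i ∈ range s, √((i : ℝ) + 1) * (c i - c (i + 1))) ^ 2 ≤
      (∑ m ∈ range (s + 1), c m ^ 2 - ((s : ℝ) + 1) * c s ^ 2) * log (c 0 / c s) := by
  rw [← sum_range_mul_sub_eq (fun m => c m ^ 2) s]
  have hgap : ∀ i ∈ range s, 0 < c (i + 1) ∧ c (i + 1) ≤ c i := fun i hi =>
    have hi : i < s := mem_range.1 hi
    ⟨hpos _ hi, hanti (Set.mem_Iic.2 hi.le) (Set.mem_Iic.2 hi) i.le_succ⟩
  refine (sum_sq_le_sum_mul_sum_of_sq_le_mul _ (fun i hi => ?_) (fun i hi => ?_)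
    (fun i hi => le_of_eq ?_)).trans
    (mul_le_mul_of_nonneg_left (sum_div_add_le_log_div hpos hanti) (sum_nonneg fun i hi => ?_))
  all_goals
    obtain ⟨h0, h1⟩ := hgap i hi
    have hsq : c (i + 1) ^ 2 ≤ c i ^ 2 := by gcongr
  · nlinarith
  · exact div_nonneg (sub_nonneg.2 h1) (by linarith)
  · have : c i + c (i + 1) ≠ 0 := by linarith
    rw [mul_pow, sq_sqrt (by positivity)]
    field_simp
    ring
  · nlinarith

theorem sq_weighted_sum_sub_le :
    (√((s : ℝ) + 1) * c s + ∑ i ∈ range s, √((i : ℝ) + 1) * (c i - c (i + 1))) ^ 2 ≤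
      (∑ m ∈ range (s + 1), c m ^ 2) * (1 + log (c 0 / c s)) := by
  have hs : 0 < c s := hpos s le_rfl
  have hlast : ∀ m ∈ range (s + 1), c s ≤ c m := fun m hm =>
    hanti (Set.mem_Iic.2 (Nat.lt_succ_iff.1 (mem_range.1 hm))) (Set.mem_Iic.2 le_rfl)
      (Nat.lt_succ_iff.1 (mem_range.1 hm))
  have hsq : (√((s : ℝ) + 1) * c s) ^ 2 = ((s : ℝ) + 1) * c s ^ 2 := by
    rw [mul_pow, sq_sqrt (by positivity)]
  refine sq_add_le_mul_one_add ?_ ?_ (hsq ▸ sq_sum_sqrt_mul_sub_le hpos hanti)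
  · exact log_nonneg ((one_le_div hs).2 (hlast 0 (by simp)))
  · calc (√((s : ℝ) + 1) * c s) ^ 2 = ∑ m ∈ range (s + 1), c s ^ 2 := by simp [hsq]
      _ ≤ ∑ m ∈ range (s + 1), c m ^ 2 := by
        gcongr with m hm
        exact hlast m hm

theorem sum_range_sq_le_mul_of_sum_range_le {R : ℝ}
    (hR : ∀ j ∈ Icc 1 (s + 1), ∑ m ∈ range j, c m ≤ √(j : ℝ) * R) :
    ∑ m ∈ range (s + 1), c m ^ 2 ≤
      R * (√((s : ℝ) + 1) * c s + ∑ i ∈ range s, √((i : ℝ) + 1) * (c i - c (i + 1))) :=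
  calc ∑ m ∈ range (s + 1), c m ^ 2
      = c s * ∑ m ∈ range (s + 1), c m +
          ∑ i ∈ range s, (c i - c (i + 1)) * ∑ m ∈ range (i + 1), c m :=
        sum_range_succ_sq_eq c s
    _ ≤ c s * (√((s + 1 : ℕ) : ℝ) * R) +
          ∑ i ∈ range s, (c i - c (i + 1)) * (√((i + 1 : ℕ) : ℝ) * R) := by
        gcongr with i hi
        · exact (hpos s le_rfl).le
        · exact hR _ (by simp)
        · have hi : i < s := mem_range.1 hi
          exact sub_nonneg.2 (hanti (Set.mem_Iic.2 hi.le) (Set.mem_Iic.2 hi) i.le_succ)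
        · exact hR _ (by simpa using (mem_range.1 hi).le)
    _ = _ := by
        push_cast
        rw [mul_add, mul_sum]
        congr 1
        · ring
        · exact sum_congr rfl fun i _ => by ring

theorem exists_mul_sum_sq_le_sq_sum :
    ∃ k ∈ Icc 1 (s + 1), (k : ℝ) * ∑ m ∈ range (s + 1), c m ^ 2 ≤
      (∑ m ∈ range k, c m) ^ 2 * (1 + log (c 0 / c s)) := by
  set P : ℕ → ℝ := fun k => ∑ m ∈ range k, c m
  set W := ∑ m ∈ range (s + 1), c m ^ 2
  obtain ⟨k, hk, hmax⟩ := (Icc 1 (s + 1)).exists_max_image (fun k => P k / √k) ⟨1, by simp⟩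
  have hsqrt : ∀ j ∈ Icc 1 (s + 1), 0 < √(j : ℝ) := fun j hj =>
    sqrt_pos.2 (Nat.cast_pos.2 (mem_Icc.1 hj).1)
  have hW := sum_range_sq_le_mul_of_sum_range_le hpos hanti (R := P k / √k) fun j hj => by
    rw [mul_comm, ← div_le_iff₀ (hsqrt j hj)]
    exact hmax j hj
  have hW0 : 0 < W :=
    sum_pos (fun m hm => pow_pos (hpos m (Nat.lt_succ_iff.1 (mem_range.1 hm))) 2) ⟨0, by simp⟩
  have hWW : W * W ≤ W * (P k ^ 2 / √k ^ 2 * (1 + log (c 0 / c s))) :=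
    calc W * W ≤ (P k / √k) ^ 2 * (√((s : ℝ) + 1) * c s +
            ∑ i ∈ range s, √((i : ℝ) + 1) * (c i - c (i + 1))) ^ 2 := by
          rw [← sq, ← mul_pow]; exact pow_le_pow_left₀ hW0.le hW 2
      _ ≤ (P k / √k) ^ 2 * (W * (1 + log (c 0 / c s))) := by
          gcongr; exact sq_weighted_sum_sub_le hpos hanti
      _ = W * (P k ^ 2 / √k ^ 2 * (1 + log (c 0 / c s))) := by ring
  have hWle := le_of_mul_le_mul_left hWW hW0
  rw [sq_sqrt (Nat.cast_nonneg k), div_mul_eq_mul_div,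
    le_div_iff₀ (Nat.cast_pos.2 (mem_Icc.1 hk).1)] at hWle
  exact ⟨k, hk, by linarith⟩

end AntitoneSeq

theorem Finset.exists_equiv_antitone {ι : Type*} (S : Finset ι) (w : ι → ℝ) :
    ∃ e : Fin #S ≃ S, Antitone fun j => w (e j) := by
  set g : Fin #S → ℝᵒᵈ := fun j => OrderDual.toDual (w (S.equivFin.symm j))
  exact ⟨(Tuple.sort g).trans S.equivFin.symm, monotone_toDual_comp_iff.1 (Tuple.monotone_sort g)⟩

theorem Finset.exists_subset_card_mul_sum_sq_le {ι : Type*} {S : Finset ι}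
    (hS : S.Nonempty) {w : ι → ℝ} {K : ℝ} (hw : ∀ i ∈ S, 0 < w i)
    (hK : ∀ i ∈ S, ∀ j ∈ S, w i ≤ K * w j) :
    ∃ T ⊆ S, T.Nonempty ∧ #T * ∑ i ∈ S, w i ^ 2 ≤ (∑ i ∈ T, w i) ^ 2 * (1 + log K) := by
  obtain ⟨e, he⟩ := S.exists_equiv_antitone w
  obtain ⟨s, hs⟩ : ∃ s, #S = s + 1 := Nat.exists_eq_succ_of_ne_zero hS.card_pos.ne'
  set c : ℕ → ℝ := fun m => if h : m < #S then w (e ⟨m, h⟩) else 0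
  have hc : ∀ m (h : m < #S), c m = w (e ⟨m, h⟩) := fun m h => dif_pos h
  have hpos : ∀ m ≤ s, 0 < c m := fun m hm => by
    rw [hc m (by omega)]; exact hw _ (e _).2
  have hanti : AntitoneOn c (Set.Iic s) := fun a ha b hb hab => by
    rw [hc a (by simp at ha; omega), hc b (by simp at hb; omega)]
    exact he (Fin.mk_le_mk.2 hab)
  obtain ⟨k, hk, hkey⟩ := exists_mul_sum_sq_le_sq_sum hpos hanti
  have hkS : k ≤ #S := hs ▸ (mem_Icc.1 hk).2
  set T := (univ : Finset (Fin k)).map ((Fin.castLEEmb hkS).trans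
    (e.toEmbedding.trans (Function.Embedding.subtype (· ∈ S))))
  have hT : #T = k := by simp [T]
  have hsumT : ∑ i ∈ T, w i = ∑ m ∈ range k, c m := by
    rw [sum_map, ← Fin.sum_univ_eq_sum_range]
    exact sum_congr rfl fun j _ => (hc j _).symm
  have hsumS : ∑ i ∈ S, w i ^ 2 = ∑ m ∈ range (s + 1), c m ^ 2 := by
    rw [← hs, ← Fin.sum_univ_eq_sum_range, ← sum_coe_sort S, ← e.sum_comp]
    exact sum_congr rfl fun j _ => by rw [hc j j.2]
  have hlog : log (c 0 / c s) ≤ log K := by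
    have h0 := hpos 0 s.zero_le
    have hs' := hpos s le_rfl
    refine log_le_log (div_pos h0 hs') ((div_le_iff₀ hs').2 ?_)
    rw [hc 0 (by omega), hc s (by omega)]
    exact hK _ (e _).2 _ (e _).2
  refine ⟨T, fun i hi => ?_, card_pos.1 (hT ▸ (mem_Icc.1 hk).1), ?_⟩
  · obtain ⟨j, -, rfl⟩ := mem_map.1 hi
    exact (e _).2
  · rw [hT, hsumT, hsumS]
    exact hkey.trans (by gcongr)

theorem abs_le_mul_abs_of_logDiamR_le {n : ℕ} {z : Fin n → ℝ} {K : ℝ} (hl : logDiamR z ≤ K)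
    (i : Fin n) {j : Fin n} (hj : z j ≠ 0) : |z i| ≤ K * |z j| := by
  set A := {r | ∃ i, z i ≠ 0 ∧ r = |z i|}
  have hAfin : A.Finite := (Set.finite_range fun i => |z i|).subset fun r ⟨i, _, hr⟩ => ⟨i, hr.symm⟩
  obtain ⟨i₀, hi₀, hmin⟩ := Set.Nonempty.csInf_mem (s := A) ⟨|z j|, j, hj, rfl⟩ hAfin
  have hmin0 : 0 < sInf A := hmin ▸ abs_pos.2 hi₀
  have hminj : sInf A ≤ |z j| := csInf_le ⟨0, fun r ⟨_, _, hr⟩ => hr ▸ abs_nonneg _⟩ ⟨j, hj, rfl⟩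
  have hsup : |z i| ≤ ⨆ i, |z i| := le_ciSup (Set.finite_range fun i => |z i|).bddAbove i
  have hsupK : (⨆ i, |z i|) ≤ K * sInf A := (div_le_iff₀ hmin0).1 hl
  have hK : 0 ≤ K := by nlinarith [abs_nonneg (z i)]
  exact hsup.trans (hsupK.trans (mul_le_mul_of_nonneg_left hminj hK))

theorem one_div_sqrt_le_abs_div {x k P M : ℝ} (hx : 0 < x) (hk : 0 < k) (h : k * x ≤ P ^ 2 * M) :
    1 / √M ≤ |P| / (√x * √k) := by
  have hM : 0 < M := lt_of_not_ge fun hM =>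
    (mul_pos hk hx).not_ge (h.trans (mul_nonpos_of_nonneg_of_nonpos (sq_nonneg P) hM))
  rw [div_le_div_iff₀ (sqrt_pos.2 hM) (by positivity), one_mul]
  calc √x * √k = √(k * x) := by rw [← sqrt_mul hx.le, mul_comm]
    _ ≤ √(P ^ 2 * M) := sqrt_le_sqrt h
    _ = |P| * √M := by rw [sqrt_mul (sq_nonneg P), sqrt_sq_eq_abs]

theorem sum_sq_pos_of_ne_zero {ι : Type*} [Fintype ι] {v : ι → ℝ} (hv : v ≠ 0) :
    0 < ∑ i, v i ^ 2 := by
  obtain ⟨i, hi⟩ := Function.ne_iff.1 hv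
  exact sum_pos' (fun i _ => sq_nonneg _) ⟨i, mem_univ _, sq_pos_of_ne_zero hi⟩

theorem sum_sq_filter_pos_add_sum_sq_filter_neg {ι : Type*} [Fintype ι] (v : ι → ℝ) :
    ∑ i ∈ univ.filter (0 < v ·), v i ^ 2 + ∑ i ∈ univ.filter (0 < -v ·), (-v i) ^ 2 =
      ∑ i, v i ^ 2 := by
  rw [sum_filter, sum_filter, ← sum_add_distrib]
  refine sum_congr rfl fun i _ => ?_
  rcases lt_trichotomy (v i) 0 with h | h | h
  · simp [h, h.not_gt]
  · simp [h]
  · simp [h, h.le]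

theorem exists_finset_card_mul_sum_sq_le {ι : Type*} [Fintype ι] {v : ι → ℝ}
    (hv : v ≠ 0) {K : ℝ} (hK : ∀ i j, v j ≠ 0 → |v i| ≤ K * |v j|) :
    ∃ T : Finset ι, T.Nonempty ∧ #T * ∑ i, v i ^ 2 ≤ (∑ i ∈ T, v i) ^ 2 * (2 * (log K + 1)) := by
  wlog hhalf : ∑ i, v i ^ 2 ≤ 2 * ∑ i ∈ univ.filter (0 < v ·), v i ^ 2 generalizing v
  · have hsplit := sum_sq_filter_pos_add_sum_sq_filter_neg v
    obtain ⟨T, hT, hTv⟩ := this (v := -v) (neg_ne_zero.2 hv)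
      (fun i j hj => by simpa using hK i j (by simpa using hj))
      (by simp only [Pi.neg_apply, neg_sq] at *; linarith)
    exact ⟨T, hT, by simpa [sum_neg_distrib] using hTv⟩
  set S := univ.filter (0 < v ·)
  have hv2 := sum_sq_pos_of_ne_zero hv
  have hS : S.Nonempty := nonempty_of_sum_ne_zero (f := fun i => v i ^ 2) (by linarith)
  have hpos : ∀ i ∈ S, 0 < v i := fun i hi => (mem_filter.1 hi).2
  obtain ⟨T, -, hT, hTS⟩ := S.exists_subset_card_mul_sum_sq_le hS hpos fun i hi j hj => by
    simpa [abs_of_pos (hpos i hi), abs_of_pos (hpos j hj)] using hK i j (hpos j hj).ne'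
  refine ⟨T, hT, ?_⟩
  calc #T * ∑ i, v i ^ 2 ≤ #T * (2 * ∑ i ∈ S, v i ^ 2) := by gcongr
    _ = 2 * (#T * ∑ i ∈ S, v i ^ 2) := by ring
    _ ≤ 2 * ((∑ i ∈ T, v i) ^ 2 * (1 + log K)) := by gcongr
    _ = (∑ i ∈ T, v i) ^ 2 * (2 * (log K + 1)) := by ring

theorem stmt5_general {n : ℕ} (K : ℝ)
    (z : Fin n → ℝ) (hz : z ≠ 0) (hl : logDiamR z ≤ K) :
    ∃ ξ : Fin n → ℝ, (∀ i, ξ i = 0 ∨ ξ i = 1) ∧ ξ ≠ 0 ∧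
      |∑ i, z i * ξ i| / (enR z * enR ξ) ≥
        1 / Real.sqrt (2 * (Real.log K + 1)) := by
  obtain ⟨T, ⟨i₀, hi₀⟩, hT⟩ :=
    exists_finset_card_mul_sum_sq_le hz fun i _ hj => abs_le_mul_abs_of_logDiamR_le hl i hj
  refine ⟨fun i => if i ∈ T then 1 else 0, fun i => by by_cases h : i ∈ T <;> simp [h],
    fun h => by simpa [hi₀] using congrFun h i₀, ?_⟩
  have hT0 : (0 : ℝ) < #T := Nat.cast_pos.2 (card_pos.2 ⟨i₀, hi₀⟩)
  simpa [enR] using one_div_sqrt_le_abs_div (sum_sq_pos_of_ne_zero hz) hT0 hT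

theorem stmt5 {n : ℕ} (hn : 1 ≤ n) (K : ℝ) (hK : 1 ≤ K)
    (z : Fin n → ℝ) (hz : z ≠ 0) (hl : logDiamR z ≤ K) :
    ∃ ξ : Fin n → ℝ, (∀ i, ξ i = 0 ∨ ξ i = 1) ∧ ξ ≠ 0 ∧
      |∑ i, z i * ξ i| / (enR z * enR ξ) ≥
        1 / Real.sqrt (2 * (Real.log K + 1)) :=
  stmt5_general K z hz hl
end

section
/- Let n ≥ 1 and K ≥ 1. If z ∈ ℝⁿ is a non-zero vector of height h(z) := √(‖z‖₁‖z‖_∞)/‖z‖ ≤ K, then there exists a non-zero binary vector ξ ∈ {0,1}ⁿ with |⟨z,ξ⟩|/(‖z‖‖ξ‖) ≥ 1/(2√(log(2K²) + 1)). -/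
/-!
If every binary `ξ ≠ 0` had correlation below `c = 1/(2√(log(2K²)+1))` with `z`, then testing
`ξ = 1_T` would give `|∑_{i∈T} z_i| ≤ c‖z‖√|T|` for every set `T`. For positive weights in `(θ, M]`
with this property, Abel summation over the weights in decreasing order bounds their sum of squares
by `c²‖z‖²(1 + log(M/θ))`. With `M = ‖z‖_∞` and `θ = M/(4K²)`, the entries with `|z_i| ≤ θ`
contribute at most `θ‖z‖₁ ≤ ‖z‖²/4` by the height bound, and the large positive and large negative
entries together less than `3‖z‖²/4`, which is absurd.
-/

open scoped BigOperators

/-- The height of a real vector: √(‖z‖₁‖z‖_∞)/‖z‖. -/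
noncomputable def heightR {n : ℕ} (z : Fin n → ℝ) : ℝ :=
  Real.sqrt ((∑ i, |z i|) * ⨆ i, |z i|) / enR z

open Finset

section SqrtCardBound

variable {ι : Type*}

lemma sum_le_sq_div_of_sum_le_mul_sqrt_card {s : Finset ι} {w : ι → ℝ} {c m : ℝ} (hm : 0 < m)
    (hmw : ∀ i ∈ s, m ≤ w i) (hs : ∑ i ∈ s, w i ≤ c * √(#s : ℝ)) :
    ∑ i ∈ s, w i ≤ c ^ 2 / m := by
  set x := √(#s : ℝ)
  have hx : 0 ≤ x := Real.sqrt_nonneg _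
  have hcard : m * x ^ 2 ≤ ∑ i ∈ s, w i := by
    rw [Real.sq_sqrt (Nat.cast_nonneg _), mul_comm, ← nsmul_eq_mul]
    exact card_nsmul_le_sum s w m hmw
  rw [le_div_iff₀ hm]
  nlinarith [sq_nonneg (c - m * x)]

lemma sum_sq_le_mul_sum_add_mul_log [DecidableEq ι] (w : ι → ℝ) {c M : ℝ} (s : Finset ι)
    (hsqrt : ∀ t ⊆ s, ∑ i ∈ t, w i ≤ c * √(#t : ℝ)) (hwM : ∀ i ∈ s, w i ≤ M)
    {m : ℝ} (hm : 0 < m) (hmM : m ≤ M) (hmw : ∀ i ∈ s, m ≤ w i) :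
    ∑ i ∈ s, w i ^ 2 ≤ m * ∑ i ∈ s, w i + c ^ 2 * Real.log (M / m) := by
  induction s using Finset.induction_on_min_value w generalizing m with
  | empty =>
    simpa using mul_nonneg (sq_nonneg c) (Real.log_nonneg ((one_le_div hm).2 hmM))
  | insert a s ha hmin ih =>
    -- Lowering the threshold from `w a` to `m` costs `(w a - m) * ∑ w ≤ c² (1 - m / w a)`,
    -- which `c² log (w a / m)` pays for: a discrete Abel summation over the decreasing weights.
    have hma : m ≤ w a := hmw a (mem_insert_self a s)
    have ha0 : 0 < w a := hm.trans_le hma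
    have hs := ih (fun t ht ↦ hsqrt t (ht.trans (subset_insert a s)))
      (fun i hi ↦ hwM i (mem_insert_of_mem hi)) ha0 (hwM a (mem_insert_self a s)) hmin
    have hF : ∑ i ∈ insert a s, w i ≤ c ^ 2 / w a :=
      sum_le_sq_div_of_sum_le_mul_sqrt_card ha0
        (forall_mem_insert _ _ _ |>.2 ⟨le_rfl, hmin⟩) (hsqrt _ subset_rfl)
    have hlog : 1 - m / w a ≤ Real.log (w a / m) := by
      have h := Real.log_le_sub_one_of_pos (div_pos hm ha0)
      rw [← neg_le_neg_iff, ← Real.log_inv, inv_div] at h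
      linarith
    have hsplit : Real.log (M / m) = Real.log (M / w a) + Real.log (w a / m) := by
      have hM : M ≠ 0 := (hm.trans_le hmM).ne'
      rw [Real.log_div hM hm.ne', Real.log_div hM ha0.ne', Real.log_div ha0.ne' hm.ne']
      ring
    calc ∑ i ∈ insert a s, w i ^ 2
        = w a * ∑ i ∈ insert a s, w i + (∑ i ∈ s, w i ^ 2 - w a * ∑ i ∈ s, w i) := by
          rw [sum_insert ha, sum_insert ha]; ring
      _ ≤ m * ∑ i ∈ insert a s, w i + (w a - m) * (c ^ 2 / w a) + c ^ 2 * Real.log (M / w a) := by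
          nlinarith [mul_le_mul_of_nonneg_left hF (sub_nonneg.2 hma)]
      _ = m * ∑ i ∈ insert a s, w i + c ^ 2 * (1 - m / w a) + c ^ 2 * Real.log (M / w a) := by
          field_simp
      _ ≤ m * ∑ i ∈ insert a s, w i + c ^ 2 * Real.log (M / m) := by
          rw [hsplit]; nlinarith [mul_le_mul_of_nonneg_left hlog (sq_nonneg c)]

lemma sum_sq_filter_lt_le_mul_one_add_log (w : ι → ℝ) {c M θ : ℝ} (s : Finset ι)
    (hsqrt : ∀ t ⊆ s, ∑ i ∈ t, w i ≤ c * √(#t : ℝ)) (hwM : ∀ i ∈ s, w i ≤ M)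
    (hθ : 0 < θ) (hθM : θ ≤ M) :
    ∑ i ∈ s with θ < w i, w i ^ 2 ≤ c ^ 2 * (1 + Real.log (M / θ)) := by
  classical
  have hsqrt' : ∀ t ⊆ s.filter (θ < w ·), ∑ i ∈ t, w i ≤ c * √(#t : ℝ) :=
    fun t ht ↦ hsqrt t (ht.trans (filter_subset _ s))
  have hθw : ∀ i ∈ s.filter (θ < w ·), θ ≤ w i := fun i hi ↦ (mem_filter.1 hi).2.le
  have hF := sum_le_sq_div_of_sum_le_mul_sqrt_card hθ hθw (hsqrt' _ subset_rfl)
  calc ∑ i ∈ s with θ < w i, w i ^ 2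
      ≤ θ * ∑ i ∈ s with θ < w i, w i + c ^ 2 * Real.log (M / θ) :=
        sum_sq_le_mul_sum_add_mul_log w _ hsqrt' (fun i hi ↦ hwM i (filter_subset _ s hi))
          hθ hθM hθw
    _ ≤ θ * (c ^ 2 / θ) + c ^ 2 * Real.log (M / θ) := by gcongr
    _ = c ^ 2 * (1 + Real.log (M / θ)) := by field_simp

lemma sum_sq_le_of_abs_sum_le_mul_sqrt_card [Fintype ι] (z : ι → ℝ) {c M θ : ℝ}
    (hsqrt : ∀ t : Finset ι, |∑ i ∈ t, z i| ≤ c * √(#t : ℝ)) (hzM : ∀ i, |z i| ≤ M)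
    (hθ : 0 < θ) (hθM : θ ≤ M) :
    ∑ i, z i ^ 2 ≤ 2 * (c ^ 2 * (1 + Real.log (M / θ))) + θ * ∑ i, |z i| := by
  have hpos := sum_sq_filter_lt_le_mul_one_add_log z univ
    (fun t _ ↦ (le_abs_self _).trans (hsqrt t))
    (fun i _ ↦ (le_abs_self _).trans (hzM i)) hθ hθM
  have hneg := sum_sq_filter_lt_le_mul_one_add_log (-z) univ
    (fun t _ ↦ by simpa only [Pi.neg_apply, sum_neg_distrib] using (neg_le_abs _).trans (hsqrt t))
    (fun i _ ↦ (neg_le_abs _).trans (hzM i)) hθ hθM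
  have hpointwise : ∀ i, z i ^ 2 ≤ (if θ < z i then z i ^ 2 else 0)
      + (if θ < -z i then (-z i) ^ 2 else 0) + θ * |z i| := by
    intro i
    have hθz : 0 ≤ θ * |z i| := by positivity
    split_ifs with h₁ h₂ h₂
    · nlinarith [sq_nonneg (-z i)]
    · linarith
    · linarith
    · have hzθ : |z i| ≤ θ := abs_le.2 ⟨by linarith, by linarith⟩
      nlinarith [sq_abs (z i), abs_nonneg (z i)]
  calc ∑ i, z i ^ 2 ≤ ∑ i, ((if θ < z i then z i ^ 2 else 0)
        + (if θ < -z i then (-z i) ^ 2 else 0) + θ * |z i|) := sum_le_sum fun i _ ↦ hpointwise i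
    _ = ∑ i with θ < z i, z i ^ 2 + ∑ i with θ < (-z) i, (-z) i ^ 2 + θ * ∑ i, |z i| := by
        rw [sum_add_distrib, sum_add_distrib, sum_filter, sum_filter, mul_sum]; rfl
    _ ≤ 2 * (c ^ 2 * (1 + Real.log (M / θ))) + θ * ∑ i, |z i| := by linarith

end SqrtCardBound

section Binary

variable {n : ℕ}

lemma enR_pos {v : Fin n → ℝ} (hv : v ≠ 0) : 0 < enR v := by
  obtain ⟨i, hi⟩ := Function.ne_iff.1 hv
  exact Real.sqrt_pos.2 <|
    sum_pos' (fun j _ ↦ sq_nonneg (v j)) ⟨i, mem_univ i, pow_two_pos_of_ne_zero hi⟩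

lemma sq_enR (v : Fin n → ℝ) : enR v ^ 2 = ∑ i, v i ^ 2 :=
  Real.sq_sqrt (sum_nonneg fun i _ ↦ sq_nonneg (v i))

lemma enR_ite_mem (T : Finset (Fin n)) :
    enR (fun i ↦ if i ∈ T then (1 : ℝ) else 0) = √(#T : ℝ) := by
  simp [enR, ite_pow, sum_ite_mem]

lemma sum_abs_mul_iSup_abs_le_of_heightR_le {z : Fin n → ℝ} {K : ℝ} (hz : z ≠ 0)
    (hh : heightR z ≤ K) : (∑ i, |z i|) * (⨆ i, |z i|) ≤ K ^ 2 * ∑ i, z i ^ 2 := by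
  rw [heightR, div_le_iff₀ (enR_pos hz), Real.sqrt_le_iff] at hh
  rw [← sq_enR, ← mul_pow]
  exact hh.2

lemma abs_sum_le_of_forall_binary {z : Fin n → ℝ} {c : ℝ} (hz : z ≠ 0)
    (h : ∀ ξ : Fin n → ℝ, (∀ i, ξ i = 0 ∨ ξ i = 1) → ξ ≠ 0 →
      |∑ i, z i * ξ i| / (enR z * enR ξ) < c)
    (T : Finset (Fin n)) : |∑ i ∈ T, z i| ≤ c * enR z * √(#T : ℝ) := by
  rcases T.eq_empty_or_nonempty with rfl | ⟨j, hj⟩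
  · simp
  set ξ : Fin n → ℝ := fun i ↦ if i ∈ T then 1 else 0
  have hξ : ξ ≠ 0 := Function.ne_iff.2 ⟨j, by simp [ξ, hj]⟩
  have hlt := h ξ (fun i ↦ by by_cases hi : i ∈ T <;> simp [ξ, hi]) hξ
  rw [enR_ite_mem, div_lt_iff₀ (mul_pos (enR_pos hz) ((enR_ite_mem T) ▸ enR_pos hξ))] at hlt
  simp only [ξ, mul_ite, mul_one, mul_zero, sum_ite_mem, univ_inter] at hlt
  linarith

end Binary

theorem stmt6_general {n : ℕ} (K : ℝ) (hK : 1 ≤ K)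
    (z : Fin n → ℝ) (hz : z ≠ 0) (hh : heightR z ≤ K) :
    ∃ ξ : Fin n → ℝ, (∀ i, ξ i = 0 ∨ ξ i = 1) ∧ ξ ≠ 0 ∧
      |∑ i, z i * ξ i| / (enR z * enR ξ) ≥
        1 / (2 * Real.sqrt (Real.log (2 * K ^ 2) + 1)) := by
  by_contra! hcon
  set t := Real.log (2 * K ^ 2)
  set M := ⨆ i, |z i|
  set N := ∑ i, z i ^ 2
  have hzM : ∀ i, |z i| ≤ M := le_ciSup (Set.finite_range _).bddAbove
  obtain ⟨i₀, hi₀⟩ := Function.ne_iff.1 hz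
  have hM : 0 < M := (abs_pos.2 hi₀).trans_le (hzM i₀)
  have hN : 0 < N := (pow_pos (enR_pos hz) 2).trans_eq (sq_enR z)
  have hK2 : 1 ≤ K ^ 2 := one_le_pow₀ hK
  have ht : Real.log 2 ≤ t := Real.log_le_log two_pos (by linarith)
  have hθ : 0 < M / (4 * K ^ 2) := by positivity
  have hbound := sum_sq_le_of_abs_sum_le_mul_sqrt_card z (abs_sum_le_of_forall_binary hz hcon) hzM
    hθ (div_le_self hM.le (by linarith))
  have hc : (1 / (2 * √(t + 1)) * enR z) ^ 2 = N / (4 * (t + 1)) := by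
    rw [mul_pow, sq_enR, div_pow, mul_pow, Real.sq_sqrt (by linarith [Real.log_pos one_lt_two])]
    ring
  have hlog : Real.log (M / (M / (4 * K ^ 2))) = Real.log 2 + t := by
    rw [div_div_cancel₀ hM.ne', show (4 : ℝ) * K ^ 2 = 2 * (2 * K ^ 2) by ring,
      Real.log_mul two_ne_zero (by positivity)]
  have htail : M / (4 * K ^ 2) * ∑ i, |z i| ≤ N / 4 := by
    rw [div_mul_eq_mul_div, mul_comm, div_le_div_iff₀ (by positivity) four_pos]
    nlinarith [sum_abs_mul_iSup_abs_le_of_heightR_le hz hh]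
  have hlarge : 2 * (N / (4 * (t + 1)) * (1 + (Real.log 2 + t))) < 3 / 4 * N := by
    rw [show 2 * (N / (4 * (t + 1)) * (1 + (Real.log 2 + t)))
        = N * (1 + (Real.log 2 + t)) / (2 * (t + 1)) by field_simp; ring,
      div_lt_iff₀ (by linarith [Real.log_pos one_lt_two])]
    nlinarith [mul_pos hN (show 0 < 1 - Real.log 2 by linarith [Real.log_two_lt_d9])]
  rw [hc, hlog] at hbound
  linarith

theorem stmt6 {n : ℕ} (hn : 1 ≤ n) (K : ℝ) (hK : 1 ≤ K)
    (z : Fin n → ℝ) (hz : z ≠ 0) (hh : heightR z ≤ K) :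
    ∃ ξ : Fin n → ℝ, (∀ i, ξ i = 0 ∨ ξ i = 1) ∧ ξ ≠ 0 ∧
      |∑ i, z i * ξ i| / (enR z * enR ξ) ≥
        1 / (2 * Real.sqrt (Real.log (2 * K ^ 2) + 1)) :=
  stmt6_general K hK z hz hh
end

section
/- For any non-zero complex m×n matrix A, the discrete norm ‖A‖_Δ := max over non-zero ξ ∈ {0,1}ⁿ of ‖Aξ‖/‖ξ‖ satisfies ‖A‖/(8√2·√(log h(A) + 2)) ≤ ‖A‖_Δ ≤ ‖A‖. -/
open scoped BigOperators

/-- Euclidean norm of a finitely-indexed complex vector. -/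
noncomputable def en {ι : Type*} [Fintype ι] (v : ι → ℂ) : ℝ :=
  Real.sqrt (∑ i, ‖v i‖ ^ 2)

/-- The L¹ norm of a vector. -/
noncomputable def vn1 {ι : Type*} [Fintype ι] (v : ι → ℂ) : ℝ := ∑ i, ‖v i‖

/-- The L^∞ norm of a vector. -/
noncomputable def vnInf {ι : Type*} [Fintype ι] (v : ι → ℂ) : ℝ := ⨆ i, ‖v i‖

/-- The induced L²-operator norm of a matrix. -/
noncomputable def opNorm2 {ι κ : Type*} [Fintype ι] [Fintype κ]
    (A : Matrix ι κ ℂ) : ℝ :=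
  sInf {C | 0 ≤ C ∧ ∀ x : κ → ℂ, en (A.mulVec x) ≤ C * en x}

/-- The induced L¹-operator norm of a matrix. -/
noncomputable def opNorm1 {ι κ : Type*} [Fintype ι] [Fintype κ]
    (A : Matrix ι κ ℂ) : ℝ :=
  sInf {C | 0 ≤ C ∧ ∀ x : κ → ℂ, vn1 (A.mulVec x) ≤ C * vn1 x}

/-- The induced L^∞-operator norm of a matrix. -/
noncomputable def opNormInf {ι κ : Type*} [Fintype ι] [Fintype κ]
    (A : Matrix ι κ ℂ) : ℝ :=
  sInf {C | 0 ≤ C ∧ ∀ x : κ → ℂ, vnInf (A.mulVec x) ≤ C * vnInf x}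

/-- The height of a matrix: √(‖A‖₁‖A‖_∞)/‖A‖. -/
noncomputable def height {ι κ : Type*} [Fintype ι] [Fintype κ]
    (A : Matrix ι κ ℂ) : ℝ :=
  Real.sqrt (opNorm1 A * opNormInf A) / opNorm2 A

/-- The discrete norm: max of ‖Aξ‖/‖ξ‖ over non-zero binary vectors ξ. -/
noncomputable def dnorm {ι κ : Type*} [Fintype ι] [Fintype κ]
    (A : Matrix ι κ ℂ) : ℝ :=
  sSup {r | ∃ ξ : κ → ℂ, (∀ i, ξ i = 0 ∨ ξ i = 1) ∧ ξ ≠ 0 ∧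
    r = en (A.mulVec ξ) / en ξ}

/-- The discrete Rayleigh norm: max of |ξᵗAη|/(‖ξ‖‖η‖) over non-zero binary
vectors ξ, η. -/
noncomputable def pnorm {ι κ : Type*} [Fintype ι] [Fintype κ]
    (A : Matrix ι κ ℂ) : ℝ :=
  sSup {r | ∃ (ξ : ι → ℂ) (η : κ → ℂ),
    (∀ i, ξ i = 0 ∨ ξ i = 1) ∧ ξ ≠ 0 ∧
    (∀ j, η j = 0 ∨ η j = 1) ∧ η ≠ 0 ∧
    r = ‖∑ i, ∑ j, ξ i * A i j * η j‖ / (en ξ * en η)}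

/-!
Write `D = ‖A‖_Δ` and `P = ‖A‖₁ ‖A‖_∞`. Peeling off binary digits gives `‖A v‖ ≤ D √(c ‖v‖₁)`
for `0 ≤ v ≤ c`, hence `‖A v‖ ≤ √2 D ‖v‖` for a dyadic block, a vector whose non-zero entries
lie in `(c/2, c]`. A non-negative `u` is a sum of dyadic blocks `u_k` at scales `2⁻ᵏ M`. For
`|k - l| < W` Cauchy–Schwarz bounds `⟨A u_k, A u_l⟩`, while for `k + W ≤ l` Hölder's inequality
for `ℓ¹ × ℓ^∞` gives `|⟨A u_k, A u_l⟩| ≤ 2^(1-(l-k)) P ‖u_k‖²`; summing,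
`‖A u‖² ≤ (4 W D² + 8 P 2⁻ᵂ) ‖u‖²`. Splitting a complex vector into the positive and negative
parts of its real and imaginary parts costs a factor `2`, so `‖A‖² ≤ 16 W D² + 32 P 2⁻ᵂ`.
By the Schur test `‖A‖² ≤ P`, i.e. `h ≥ 1`, and `P = h² ‖A‖²`; taking `W = ⌈4 log h⌉ + 7`
gives `2ᵂ ≥ 64 h²`, so the second term is at most `‖A‖² / 2` and `‖A‖² ≤ 128 (log h + 2) D²`.
-/

open scoped ENNReal Matrix

open Finset Complex

lemma mul_star_div_norm (z : ℂ) : z * (star z / ‖z‖) = ‖z‖ := by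
  rcases eq_or_ne z 0 with h | h
  · simp [h]
  rw [mul_div_assoc', Complex.star_def, Complex.mul_conj', sq]
  exact mul_div_cancel_right₀ _ (by simpa using h)

lemma sqrt_mul_add_sqrt_mul_le {a b c d : ℝ} (ha : 0 ≤ a) (hb : 0 ≤ b) (hc : 0 ≤ c)
    (hd : 0 ≤ d) : √(a * b) + √(c * d) ≤ √((a + c) * (b + d)) := by
  rw [Real.le_sqrt (by positivity) (by positivity), add_sq, Real.sq_sqrt (by positivity),
    Real.sq_sqrt (by positivity)]
  have h : √(a * b) * √(c * d) = √(a * d) * √(c * b) := by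
    rw [← Real.sqrt_mul (by positivity), ← Real.sqrt_mul (by positivity)]
    ring_nf
  nlinarith [sq_nonneg (√(a * d) - √(c * b)), Real.sq_sqrt (mul_nonneg ha hd),
    Real.sq_sqrt (mul_nonneg hc hb)]

lemma posPart_sq_add_negPart_sq (a : ℝ) : a⁺ ^ 2 + a⁻ ^ 2 = a ^ 2 := by
  rcases le_total 0 a with h | h
  · simp [posPart_eq_self.mpr h, negPart_eq_zero.mpr h]
  · simp [posPart_eq_zero.mpr h, negPart_eq_neg.mpr h]

lemma norm_sum_sq_le_sum_sum_norm_inner {𝕜 E α : Type*} [RCLike 𝕜] [SeminormedAddCommGroup E]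
    [InnerProductSpace 𝕜 E] (s : Finset α) (w : α → E) :
    ‖∑ k ∈ s, w k‖ ^ 2 ≤ ∑ k ∈ s, ∑ l ∈ s, ‖inner 𝕜 (w k) (w l)‖ := by
  rw [norm_sq_eq_re_inner (𝕜 := 𝕜), sum_inner]
  simp_rw [inner_sum]
  exact (RCLike.re_le_norm _).trans
    ((norm_sum_le _ _).trans (sum_le_sum fun k _ => norm_sum_le _ _))

lemma sum_sum_le_of_le_kernel {α : Type*} {s : Finset α} {G K : α → α → ℝ} {β : α → ℝ} {B : ℝ}
    (hβ : ∀ k ∈ s, 0 ≤ β k) (hG : ∀ k ∈ s, ∀ l ∈ s, G k l ≤ K k l * β k + K l k * β l)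
    (hK : ∀ k ∈ s, ∑ l ∈ s, K k l ≤ B) :
    ∑ k ∈ s, ∑ l ∈ s, G k l ≤ 2 * B * ∑ k ∈ s, β k := by
  calc ∑ k ∈ s, ∑ l ∈ s, G k l ≤ ∑ k ∈ s, ∑ l ∈ s, (K k l * β k + K l k * β l) :=
        sum_le_sum fun k hk => sum_le_sum fun l hl => hG k hk l hl
    _ = 2 * ∑ k ∈ s, (∑ l ∈ s, K k l) * β k := by
        simp_rw [sum_add_distrib]
        rw [sum_comm (f := fun k l => K l k * β l)]
        simp_rw [← sum_mul]
        ring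
    _ ≤ 2 * ∑ k ∈ s, B * β k := by
        gcongr with k hk
        exacts [hβ k hk, hK k hk]
    _ = 2 * B * ∑ k ∈ s, β k := by rw [← mul_sum, mul_assoc]

lemma card_filter_lt_add_lt_add_le (T W k : ℕ) :
    #{l ∈ range T | l < k + W ∧ k < l + W} ≤ 2 * W :=
  calc _ ≤ #(Ico (k + 1 - W) (k + W)) :=
        card_le_card fun l hl => by simp only [mem_filter, mem_range, mem_Ico] at hl ⊢; omega
    _ ≤ 2 * W := by simp only [Nat.card_Ico]; omega

lemma sum_filter_half_pow_le (T W k : ℕ) :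
    ∑ l ∈ range T with k + W ≤ l, (1 / 2 : ℝ) ^ (l - k) ≤ 2 * (1 / 2) ^ W := by
  have hfilter : {l ∈ range T | k + W ≤ l} = Ico (k + W) T := by ext; simp; omega
  rw [hfilter, sum_Ico_eq_sum_range]
  calc ∑ i ∈ range (T - (k + W)), (1 / 2 : ℝ) ^ (k + W + i - k)
      = (1 / 2) ^ W * ∑ i ∈ range (T - (k + W)), (1 / 2 : ℝ) ^ i := by
        rw [mul_sum]
        exact sum_congr rfl fun i _ => by rw [← pow_add]; congr 1; omega
    _ ≤ (1 / 2) ^ W * 2 := by gcongr; exact sum_geometric_two_le _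
    _ = 2 * (1 / 2) ^ W := mul_comm _ _

noncomputable def bandFarKernel (a b : ℝ) (W k l : ℕ) : ℝ :=
  (if l < k + W ∧ k < l + W then a / 2 else 0) + if k + W ≤ l then b * (1 / 2) ^ (l - k) else 0

lemma bandFarKernel_nonneg {a b : ℝ} (ha : 0 ≤ a) (hb : 0 ≤ b) (W k l : ℕ) :
    0 ≤ bandFarKernel a b W k l := by
  simp only [bandFarKernel]
  split_ifs <;> positivity

lemma sum_bandFarKernel_le {a b : ℝ} (ha : 0 ≤ a) (hb : 0 ≤ b) (T W k : ℕ) :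
    ∑ l ∈ range T, bandFarKernel a b W k l ≤ a * W + 2 * b * (1 / 2) ^ W := by
  simp only [bandFarKernel, sum_add_distrib, ← sum_filter, sum_const, nsmul_eq_mul, ← mul_sum]
  have h1 : (#{l ∈ range T | l < k + W ∧ k < l + W} : ℝ) ≤ 2 * W := by
    exact_mod_cast card_filter_lt_add_lt_add_le T W k
  have h2 := sum_filter_half_pow_le T W k
  nlinarith

lemma norm_sum_sq_le_of_band_far {E : Type*} [SeminormedAddCommGroup E] [InnerProductSpace ℂ E]
    (w : ℕ → E) {β : ℕ → ℝ} (hβ : ∀ k, 0 ≤ β k) {a b : ℝ} (ha : 0 ≤ a) (hb : 0 ≤ b) (W T : ℕ)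
    (hnorm : ∀ k, ‖w k‖ ^ 2 ≤ a * β k)
    (hfar : ∀ k l, k + W ≤ l → ‖inner ℂ (w k) (w l)‖ ≤ b * (1 / 2) ^ (l - k) * β k) :
    ‖∑ k ∈ range T, w k‖ ^ 2 ≤ (2 * a * W + 4 * b * (1 / 2) ^ W) * ∑ k ∈ range T, β k := by
  set K := bandFarKernel a b W
  have hG (k l : ℕ) : ‖inner ℂ (w k) (w l)‖ ≤ K k l * β k + K l k * β l := by
    have hKk := mul_nonneg (bandFarKernel_nonneg ha hb W k l) (hβ k)
    have hKl := mul_nonneg (bandFarKernel_nonneg ha hb W l k) (hβ l)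
    by_cases hkl : k + W ≤ l
    · have : b * (1 / 2) ^ (l - k) * β k ≤ K k l * β k := by
        refine mul_le_mul_of_nonneg_right ?_ (hβ k)
        simp only [K, bandFarKernel, hkl, if_true]
        split_ifs <;> linarith
      linarith [hfar k l hkl]
    by_cases hlk : l + W ≤ k
    · have : b * (1 / 2) ^ (k - l) * β l ≤ K l k * β l := by
        refine mul_le_mul_of_nonneg_right ?_ (hβ l)
        simp only [K, bandFarKernel, hlk, if_true]
        split_ifs <;> linarith
      linarith [hfar l k hlk, norm_inner_symm (𝕜 := ℂ) (w k) (w l)]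
    · have hband : l < k + W ∧ k < l + W := by omega
      have hKk' : K k l = a / 2 := by simp [K, bandFarKernel, hband, hkl]
      have hKl' : K l k = a / 2 := by simp [K, bandFarKernel, hband.symm, hlk]
      rw [hKk', hKl']
      nlinarith [norm_inner_le_norm (𝕜 := ℂ) (w k) (w l), sq_nonneg (‖w k‖ - ‖w l‖),
        hnorm k, hnorm l]
  calc ‖∑ k ∈ range T, w k‖ ^ 2
      ≤ ∑ k ∈ range T, ∑ l ∈ range T, ‖inner ℂ (w k) (w l)‖ :=
        norm_sum_sq_le_sum_sum_norm_inner _ w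
    _ ≤ 2 * (a * W + 2 * b * (1 / 2) ^ W) * ∑ k ∈ range T, β k :=
        sum_sum_le_of_le_kernel (fun k _ => hβ k) (fun k _ l _ => hG k l)
          (fun k _ => sum_bandFarKernel_le ha hb T W k)
    _ = (2 * a * W + 4 * b * (1 / 2) ^ W) * ∑ k ∈ range T, β k := by ring

def IsDyadicBlock {α : Type*} (c : ℝ) (w : α → ℝ) : Prop :=
  ∀ j, w j = 0 ∨ (c / 2 < w j ∧ w j ≤ c)

namespace IsDyadicBlock

variable {α : Type*} {c : ℝ} {w : α → ℝ}

lemma nonneg (h : IsDyadicBlock c w) (j : α) : 0 ≤ w j := by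
  rcases h j with h | ⟨h1, h2⟩
  · exact h.ge
  · linarith

lemma le (hc : 0 ≤ c) (h : IsDyadicBlock c w) (j : α) : w j ≤ c := by
  rcases h j with h | ⟨-, h2⟩
  · exact h ▸ hc
  · exact h2

lemma mul_sum_le [Fintype α] (h : IsDyadicBlock c w) : c * ∑ j, w j ≤ 2 * ∑ j, w j ^ 2 := by
  rw [mul_sum, mul_sum]
  refine sum_le_sum fun j _ => ?_
  rcases h j with h | ⟨h1, h2⟩
  · simp [h]
  · nlinarith

end IsDyadicBlock

lemma exists_dyadic_decomposition {α : Type*} [Fintype α] (u : α → ℝ) (hu : ∀ j, 0 ≤ u j) :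
    ∃ (M : ℝ) (T : ℕ) (v : ℕ → α → ℝ), 0 < M ∧ (∀ k, IsDyadicBlock ((1 / 2) ^ k * M) (v k)) ∧
      ∑ k ∈ range T, v k = u ∧ ∑ k ∈ range T, ∑ j, v k j ^ 2 = ∑ j, u j ^ 2 := by
  classical
  set M := ∑ j, u j + 1
  have hM : 0 < M := by linarith [sum_nonneg fun j (_ : j ∈ univ) => hu j]
  have hlevel (j : α) :
      ∃ k : ℕ, 0 < u j → (1 / 2) ^ k * M / 2 < u j ∧ u j ≤ (1 / 2) ^ k * M := by
    by_cases hj : 0 < u j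
    · have huM : u j ≤ M := by
        linarith [single_le_sum (fun i _ => hu i) (mem_univ j) (f := u)]
      obtain ⟨k, hk1, hk2⟩ := exists_nat_pow_near ((one_le_div hj).mpr huM) one_lt_two
      rw [le_div_iff₀ hj] at hk1
      rw [div_lt_iff₀ hj, pow_succ] at hk2
      refine ⟨k, fun _ => ⟨?_, ?_⟩⟩
      · rw [one_div_pow, div_mul_eq_mul_div, one_mul, div_div, div_lt_iff₀ (by positivity)]
        linarith
      · rw [one_div_pow, div_mul_eq_mul_div, one_mul, le_div_iff₀ (by positivity)]
        linarith
    · exact ⟨0, fun h => absurd h hj⟩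
  choose level hlevel using hlevel
  refine ⟨M, univ.sup level + 1, fun k j => if level j = k then u j else 0, hM,
    fun k j => ?_, ?_, ?_⟩
  · dsimp only
    split_ifs with h
    · rcases (hu j).eq_or_lt with h0 | h0
      · exact .inl h0.symm
      · exact .inr (h ▸ hlevel j h0)
    · exact .inl rfl
  · ext j
    simp [Finset.sum_apply, Nat.lt_succ_of_le (le_sup (mem_univ j))]
  · rw [sum_comm]
    refine sum_congr rfl fun j _ => ?_
    simp [ite_pow, Nat.lt_succ_of_le (le_sup (mem_univ j))]

lemma exists_eq_add_half_smul_binary {α : Type*} {c : ℝ} {u : α → ℝ} (hu0 : ∀ j, 0 ≤ u j)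
    (huc : ∀ j, u j ≤ c) :
    ∃ v ξ : α → ℝ, (∀ j, 0 ≤ v j ∧ v j ≤ c / 2) ∧ (∀ j, ξ j = 0 ∨ ξ j = 1) ∧
      u = v + (c / 2) • ξ := by
  set ξ : α → ℝ := fun j => if c / 2 ≤ u j then 1 else 0
  refine ⟨u - (c / 2) • ξ, ξ, fun j => ?_, fun j => ?_, by simp⟩
  · simp only [ξ, Pi.sub_apply, Pi.smul_apply, smul_eq_mul]
    split_ifs <;> constructor <;> linarith [hu0 j, huc j]
  · simp only [ξ]
    split_ifs <;> simp

variable {ι κ : Type*} [Fintype ι] [Fintype κ]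

lemma en_nonneg (v : ι → ℂ) : 0 ≤ en v := Real.sqrt_nonneg _

lemma sq_en (v : ι → ℂ) : en v ^ 2 = ∑ i, ‖v i‖ ^ 2 :=
  Real.sq_sqrt (by positivity)

lemma en_eq_norm (v : ι → ℂ) : en v = ‖WithLp.toLp 2 v‖ := by rw [PiLp.norm_eq_of_L2]; rfl

lemma vn1_eq_norm (v : ι → ℂ) : vn1 v = ‖WithLp.toLp 1 v‖ := by rw [PiLp.norm_eq_of_L1]; rfl

lemma vnInf_eq_norm (v : ι → ℂ) : vnInf v = ‖WithLp.toLp ∞ v‖ := by rw [PiLp.norm_eq_ciSup]; rfl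

lemma en_ofReal (u : ι → ℝ) : en (ofReal ∘ u) = √(∑ i, u i ^ 2) := by
  simp [en, Complex.norm_real, sq_abs]

lemma en_ofReal_le {c : ℝ} (hc : 0 ≤ c) {u : ι → ℝ} (hu0 : ∀ i, 0 ≤ u i) (huc : ∀ i, u i ≤ c) :
    en (ofReal ∘ u) ≤ c * √(Fintype.card ι) := by
  rw [en_ofReal, ← Real.sqrt_sq hc, ← Real.sqrt_mul (sq_nonneg c)]
  gcongr
  calc ∑ i, u i ^ 2 ≤ ∑ _i : ι, c ^ 2 := by gcongr with i; exacts [hu0 i, huc i]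
    _ = c ^ 2 * Fintype.card ι := by simp [mul_comm]

lemma en_add_le (v w : ι → ℂ) : en (v + w) ≤ en v + en w := by
  simpa only [en_eq_norm, WithLp.toLp_add] using norm_add_le _ _

lemma en_sub_le (v w : ι → ℂ) : en (v - w) ≤ en v + en w := by
  simpa only [en_eq_norm, WithLp.toLp_sub] using norm_sub_le _ _

lemma en_smul (a : ℂ) (v : ι → ℂ) : en (a • v) = ‖a‖ * en v := by
  simp only [en_eq_norm, WithLp.toLp_smul, norm_smul]

lemma en_add_en_le {x y z : ι → ℂ} (h : ∀ i, ‖x i‖ ^ 2 + ‖y i‖ ^ 2 = ‖z i‖ ^ 2) :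
    en x + en y ≤ √2 * en z := by
  calc en x + en y = √(1 * en x ^ 2) + √(1 * en y ^ 2) := by
        rw [one_mul, one_mul, Real.sqrt_sq (en_nonneg _), Real.sqrt_sq (en_nonneg _)]
    _ ≤ √((1 + 1) * (en x ^ 2 + en y ^ 2)) :=
        sqrt_mul_add_sqrt_mul_le zero_le_one (sq_nonneg _) zero_le_one (sq_nonneg _)
    _ = √2 * en z := by
        rw [sq_en, sq_en, ← sum_add_distrib]
        simp_rw [h]
        rw [← sq_en, Real.sqrt_mul (by norm_num), Real.sqrt_sq (en_nonneg _), one_add_one_eq_two]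

lemma norm_inner_toLp_le_vn1_mul_vnInf (x y : ι → ℂ) :
    ‖inner ℂ (WithLp.toLp 2 x) (WithLp.toLp 2 y)‖ ≤ vn1 x * vnInf y := by
  rw [PiLp.inner_apply, vn1, sum_mul]
  refine (norm_sum_le _ _).trans (sum_le_sum fun i _ => (norm_inner_le_norm _ _).trans ?_)
  gcongr
  exact le_ciSup (f := fun i => ‖y i‖) (Set.finite_range _).bddAbove i

namespace Matrix

noncomputable def toLpCLM (p q : ℝ≥0∞) [Fact (1 ≤ p)] [Fact (1 ≤ q)] (A : Matrix ι κ ℂ) :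
    WithLp p (κ → ℂ) →L[ℂ] WithLp q (ι → ℂ) :=
  LinearMap.toContinuousLinearMap
    ((WithLp.linearEquiv q ℂ (ι → ℂ)).symm.toLinearMap ∘ₗ A.mulVecLin ∘ₗ
      (WithLp.linearEquiv p ℂ (κ → ℂ)).toLinearMap)

lemma sInf_bounds_eq_norm_toLpCLM (p q : ℝ≥0∞) [Fact (1 ≤ p)] [Fact (1 ≤ q)]
    (A : Matrix ι κ ℂ) :
    sInf {C | 0 ≤ C ∧ ∀ x : κ → ℂ, ‖WithLp.toLp q (A *ᵥ x)‖ ≤ C * ‖WithLp.toLp p x‖} =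
      ‖A.toLpCLM p q‖ := by
  rw [ContinuousLinearMap.norm_def]
  congr! 4 with C
  exact (WithLp.equiv p (κ → ℂ)).symm.forall_congr_right
    (q := fun y => ‖A.toLpCLM p q y‖ ≤ C * ‖y‖)

end Matrix

section OperatorNorms

variable (A : Matrix ι κ ℂ)

lemma opNorm2_eq_norm : opNorm2 A = ‖A.toLpCLM 2 2‖ := by
  simp only [opNorm2, en_eq_norm]
  exact A.sInf_bounds_eq_norm_toLpCLM 2 2

lemma opNorm1_eq_norm : opNorm1 A = ‖A.toLpCLM 1 1‖ := by
  simp only [opNorm1, vn1_eq_norm]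
  exact A.sInf_bounds_eq_norm_toLpCLM 1 1

lemma opNormInf_eq_norm : opNormInf A = ‖A.toLpCLM ∞ ∞‖ := by
  simp only [opNormInf, vnInf_eq_norm]
  exact A.sInf_bounds_eq_norm_toLpCLM ∞ ∞

lemma opNorm2_nonneg : 0 ≤ opNorm2 A := opNorm2_eq_norm A ▸ norm_nonneg _

lemma opNorm1_nonneg : 0 ≤ opNorm1 A := opNorm1_eq_norm A ▸ norm_nonneg _

lemma opNormInf_nonneg : 0 ≤ opNormInf A := opNormInf_eq_norm A ▸ norm_nonneg _

lemma en_mulVec_le (x : κ → ℂ) : en (A *ᵥ x) ≤ opNorm2 A * en x := by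
  rw [opNorm2_eq_norm, en_eq_norm, en_eq_norm]
  exact (A.toLpCLM 2 2).le_opNorm (WithLp.toLp 2 x)

lemma vn1_mulVec_le (x : κ → ℂ) : vn1 (A *ᵥ x) ≤ opNorm1 A * vn1 x := by
  rw [opNorm1_eq_norm, vn1_eq_norm, vn1_eq_norm]
  exact (A.toLpCLM 1 1).le_opNorm (WithLp.toLp 1 x)

lemma vnInf_mulVec_le (x : κ → ℂ) : vnInf (A *ᵥ x) ≤ opNormInf A * vnInf x := by
  rw [opNormInf_eq_norm, vnInf_eq_norm, vnInf_eq_norm]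
  exact (A.toLpCLM ∞ ∞).le_opNorm (WithLp.toLp ∞ x)

lemma opNorm2_le_of_bound {C : ℝ} (hC : 0 ≤ C) (h : ∀ x, en (A *ᵥ x) ≤ C * en x) :
    opNorm2 A ≤ C := by
  rw [opNorm2_eq_norm]
  refine (A.toLpCLM 2 2).opNorm_le_bound hC fun y => ?_
  have := h y.ofLp
  rwa [en_eq_norm, en_eq_norm] at this

lemma opNorm2_pos {A : Matrix ι κ ℂ} (hA : A ≠ 0) : 0 < opNorm2 A := by
  classical
  rw [opNorm2_eq_norm, norm_pos_iff]
  refine fun h => hA (Matrix.ext fun i j => ?_)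
  have := congrArg (fun y : WithLp 2 (ι → ℂ) => y.ofLp i)
    (ContinuousLinearMap.ext_iff.mp h (WithLp.toLp 2 (Pi.single j 1)))
  simpa [Matrix.toLpCLM, Matrix.mulVec_single_one] using this

lemma sum_norm_col_le_opNorm1 (j : κ) : ∑ i, ‖A i j‖ ≤ opNorm1 A := by
  classical
  simpa [vn1, Matrix.mulVec_single_one, Pi.single_apply, apply_ite norm]
    using vn1_mulVec_le A (Pi.single j 1)

lemma sum_norm_row_le_opNormInf (i : ι) : ∑ j, ‖A i j‖ ≤ opNormInf A := by
  -- `x` aligns row `i` and has `‖x j‖ ≤ 1`, with `x j = 0 / 0 = 0` where `A i j = 0`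
  set x : κ → ℂ := fun j => star (A i j) / ‖A i j‖
  have hx : vnInf x ≤ 1 := Real.iSup_le (fun j => by
    rcases eq_or_ne (A i j) 0 with h | h <;> simp [x, h]) zero_le_one
  have hAx : (A *ᵥ x) i = ∑ j, ‖A i j‖ := by
    simp only [Matrix.mulVec, dotProduct, x, ofReal_sum]
    exact Finset.sum_congr rfl fun j _ => mul_star_div_norm (A i j)
  calc ∑ j, ‖A i j‖ = ‖(A *ᵥ x) i‖ := by
        rw [hAx, Complex.norm_real, Real.norm_of_nonneg (by positivity)]
    _ ≤ vnInf (A *ᵥ x) := le_ciSup (f := fun i => ‖(A *ᵥ x) i‖) (Set.finite_range _).bddAbove i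
    _ ≤ opNormInf A * vnInf x := vnInf_mulVec_le A x
    _ ≤ opNormInf A := mul_le_of_le_one_right (opNormInf_nonneg A) hx

lemma en_mulVec_sq_le (x : κ → ℂ) :
    en (A *ᵥ x) ^ 2 ≤ opNorm1 A * opNormInf A * en x ^ 2 := by
  have hrow (i : ι) : ‖(A *ᵥ x) i‖ ^ 2 ≤ opNormInf A * ∑ j, ‖A i j‖ * ‖x j‖ ^ 2 := by
    have h1 : ‖(A *ᵥ x) i‖ ≤ ∑ j, ‖A i j‖ * ‖x j‖ :=
      (norm_sum_le _ _).trans_eq (by simp only [norm_mul])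
    calc ‖(A *ᵥ x) i‖ ^ 2 ≤ (∑ j, ‖A i j‖ * ‖x j‖) ^ 2 := by gcongr
      _ ≤ (∑ j, ‖A i j‖) * ∑ j, ‖A i j‖ * ‖x j‖ ^ 2 :=
        sum_sq_le_sum_mul_sum_of_sq_le_mul _ (fun _ _ => norm_nonneg _)
          (fun _ _ => by positivity) (fun _ _ => by rw [mul_pow, ← mul_assoc, ← sq])
      _ ≤ opNormInf A * ∑ j, ‖A i j‖ * ‖x j‖ ^ 2 := by
        gcongr
        exact sum_norm_row_le_opNormInf A i
  calc en (A *ᵥ x) ^ 2 = ∑ i, ‖(A *ᵥ x) i‖ ^ 2 := sq_en _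
    _ ≤ ∑ i, opNormInf A * ∑ j, ‖A i j‖ * ‖x j‖ ^ 2 := sum_le_sum fun i _ => hrow i
    _ = opNormInf A * ∑ j, (∑ i, ‖A i j‖) * ‖x j‖ ^ 2 := by
      simp_rw [← mul_sum, sum_mul]
      rw [sum_comm]
    _ ≤ opNormInf A * ∑ j, opNorm1 A * ‖x j‖ ^ 2 := by
      gcongr with j
      · exact opNormInf_nonneg A
      · exact sum_norm_col_le_opNorm1 A j
    _ = opNorm1 A * opNormInf A * en x ^ 2 := by rw [← mul_sum, sq_en]; ring

lemma opNorm2_sq_le_opNorm1_mul_opNormInf : opNorm2 A ^ 2 ≤ opNorm1 A * opNormInf A := by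
  have hP := mul_nonneg (opNorm1_nonneg A) (opNormInf_nonneg A)
  refine (Real.le_sqrt (opNorm2_nonneg A) hP).mp
    (opNorm2_le_of_bound A (Real.sqrt_nonneg _) fun x => ?_)
  rw [← Real.sqrt_sq (en_nonneg (A *ᵥ x)), ← Real.sqrt_sq (en_nonneg x), ← Real.sqrt_mul hP]
  exact Real.sqrt_le_sqrt (en_mulVec_sq_le A x)

lemma div_le_opNorm2 (x : κ → ℂ) : en (A *ᵥ x) / en x ≤ opNorm2 A :=
  div_le_of_le_mul₀ (en_nonneg _) (opNorm2_nonneg A) (en_mulVec_le A x)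

lemma dnorm_nonneg : 0 ≤ dnorm A :=
  Real.sSup_nonneg (by rintro _ ⟨ξ, -, -, rfl⟩; exact div_nonneg (en_nonneg _) (en_nonneg _))

lemma dnorm_le_opNorm2 : dnorm A ≤ opNorm2 A :=
  Real.sSup_le (by rintro _ ⟨ξ, -, -, rfl⟩; exact div_le_opNorm2 A ξ) (opNorm2_nonneg A)

lemma en_mulVec_le_dnorm_mul {ξ : κ → ℂ} (hξ : ∀ j, ξ j = 0 ∨ ξ j = 1) :
    en (A *ᵥ ξ) ≤ dnorm A * en ξ := by
  rcases eq_or_ne ξ 0 with rfl | hne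
  · simp [en]
  have hpos : 0 < en ξ := by
    rw [en_eq_norm]
    exact norm_pos_iff.mpr ((WithLp.toLp_eq_zero 2).not.mpr hne)
  rw [← div_le_iff₀ hpos]
  exact le_csSup ⟨opNorm2 A, by rintro _ ⟨η, -, -, rfl⟩; exact div_le_opNorm2 A η⟩
    ⟨ξ, hξ, hne, rfl⟩

lemma norm_inner_mulVec_le_of_isDyadicBlock {c c' : ℝ} (hc : 0 < c)
    (hc' : 0 ≤ c') {w v : κ → ℝ} (hw : IsDyadicBlock c w) (hv0 : ∀ j, 0 ≤ v j)
    (hv : ∀ j, v j ≤ c') :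
    ‖inner ℂ (WithLp.toLp 2 (A *ᵥ (ofReal ∘ w))) (WithLp.toLp 2 (A *ᵥ (ofReal ∘ v)))‖ ≤
      2 * (opNorm1 A * opNormInf A) * (c' / c) * ∑ j, w j ^ 2 := by
  have hw1 : vn1 (ofReal ∘ w) = ∑ j, w j := by
    simp [vn1, Complex.norm_real, abs_of_nonneg (hw.nonneg _)]
  have hv1 : vnInf (ofReal ∘ v) ≤ c' :=
    Real.iSup_le (fun j => by simpa [abs_of_nonneg (hv0 j)] using hv j) hc'
  calc _ ≤ vn1 (A *ᵥ (ofReal ∘ w)) * vnInf (A *ᵥ (ofReal ∘ v)) :=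
        norm_inner_toLp_le_vn1_mul_vnInf _ _
    _ ≤ (opNorm1 A * ∑ j, w j) * (opNormInf A * c') :=
      mul_le_mul (hw1 ▸ vn1_mulVec_le A _)
        ((vnInf_mulVec_le A _).trans (mul_le_mul_of_nonneg_left hv1 (opNormInf_nonneg A)))
        (vnInf_eq_norm (A *ᵥ (ofReal ∘ v)) ▸ norm_nonneg _)
        (mul_nonneg (opNorm1_nonneg A) (sum_nonneg fun j _ => hw.nonneg j))
    _ = opNorm1 A * opNormInf A * (c' / c) * (c * ∑ j, w j) := by
      field_simp
    _ ≤ opNorm1 A * opNormInf A * (c' / c) * (2 * ∑ j, w j ^ 2) := by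
      have := mul_nonneg (opNorm1_nonneg A) (opNormInf_nonneg A)
      exact mul_le_mul_of_nonneg_left hw.mul_sum_le (by positivity)
    _ = _ := by ring

end OperatorNorms

section BinaryVectors

variable {A : Matrix ι κ ℂ} {D : ℝ}

lemma en_mulVec_ofReal_le_of_binary
    (hD : ∀ ξ : κ → ℂ, (∀ j, ξ j = 0 ∨ ξ j = 1) → en (A *ᵥ ξ) ≤ D * en ξ) {ξ : κ → ℝ}
    (hξ : ∀ j, ξ j = 0 ∨ ξ j = 1) : en (A *ᵥ (ofReal ∘ ξ)) ≤ D * √(∑ j, ξ j) := by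
  have hsq : ∑ j, ξ j ^ 2 = ∑ j, ξ j :=
    sum_congr rfl fun j _ => by rcases hξ j with h | h <;> simp [h]
  simpa only [en_ofReal, hsq] using hD (ofReal ∘ ξ) fun j => by rcases hξ j with h | h <;> simp [h]

lemma en_mulVec_le_add_half_pow
    (hD : ∀ ξ : κ → ℂ, (∀ j, ξ j = 0 ∨ ξ j = 1) → en (A *ᵥ ξ) ≤ D * en ξ) (hD0 : 0 ≤ D)
    (s : ℕ) {c : ℝ} (hc : 0 ≤ c) {u : κ → ℝ} (hu0 : ∀ j, 0 ≤ u j) (huc : ∀ j, u j ≤ c) :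
    en (A *ᵥ (ofReal ∘ u)) ≤
      D * √(c * ∑ j, u j) + (1 / 2) ^ s * (c * √(Fintype.card κ) * opNorm2 A) := by
  induction s generalizing c u with
  | zero =>
    calc en (A *ᵥ (ofReal ∘ u)) ≤ opNorm2 A * (c * √(Fintype.card κ)) :=
          (en_mulVec_le A _).trans
            (mul_le_mul_of_nonneg_left (en_ofReal_le hc hu0 huc) (opNorm2_nonneg A))
      _ ≤ _ := by
          rw [pow_zero, one_mul, mul_comm]
          linarith [mul_nonneg hD0 (Real.sqrt_nonneg (c * ∑ j, u j))]
  | succ s ih =>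
    obtain ⟨v, ξ, hv, hξ, rfl⟩ := exists_eq_add_half_smul_binary hu0 huc
    have hsplit : ofReal ∘ (v + (c / 2) • ξ) = ofReal ∘ v + ((c / 2 : ℝ) : ℂ) • (ofReal ∘ ξ) := by
      ext j
      simp
    have hsum : ∑ j, (v + (c / 2) • ξ) j = ∑ j, v j + c / 2 * ∑ j, ξ j := by
      simp [sum_add_distrib, mul_sum]
    have hsqrt : √(c / 2 * (c / 2 * ∑ j, ξ j)) = c / 2 * √(∑ j, ξ j) := by
      rw [← mul_assoc, Real.sqrt_mul (mul_self_nonneg _), Real.sqrt_mul_self (by positivity)]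
    have hv0 : 0 ≤ ∑ j, v j := sum_nonneg fun j _ => (hv j).1
    have hξ0 : 0 ≤ ∑ j, ξ j := sum_nonneg fun j _ => by rcases hξ j with h | h <;> simp [h]
    calc en (A *ᵥ (ofReal ∘ (v + (c / 2) • ξ)))
        ≤ en (A *ᵥ (ofReal ∘ v)) + c / 2 * en (A *ᵥ (ofReal ∘ ξ)) := by
          rw [hsplit, Matrix.mulVec_add, Matrix.mulVec_smul]
          refine (en_add_le _ _).trans_eq ?_
          rw [en_smul, Complex.norm_real, Real.norm_of_nonneg (by positivity)]
      _ ≤ (D * √(c / 2 * ∑ j, v j) + (1 / 2) ^ s * (c / 2 * √(Fintype.card κ) * opNorm2 A))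
            + c / 2 * (D * √(∑ j, ξ j)) :=
          add_le_add (ih (by positivity) (fun j => (hv j).1) (fun j => (hv j).2))
            (mul_le_mul_of_nonneg_left (en_mulVec_ofReal_le_of_binary hD hξ) (by positivity))
      _ = D * (√(c / 2 * ∑ j, v j) + √(c / 2 * (c / 2 * ∑ j, ξ j)))
            + (1 / 2) ^ (s + 1) * (c * √(Fintype.card κ) * opNorm2 A) := by
          rw [hsqrt]
          ring
      _ ≤ D * √((c / 2 + c / 2) * (∑ j, v j + c / 2 * ∑ j, ξ j))
            + (1 / 2) ^ (s + 1) * (c * √(Fintype.card κ) * opNorm2 A) := by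
          gcongr
          exact sqrt_mul_add_sqrt_mul_le (by positivity) hv0 (by positivity) (by positivity)
      _ = _ := by rw [hsum, add_halves]

lemma en_mulVec_le_sqrt_mul_sum
    (hD : ∀ ξ : κ → ℂ, (∀ j, ξ j = 0 ∨ ξ j = 1) → en (A *ᵥ ξ) ≤ D * en ξ) (hD0 : 0 ≤ D)
    {c : ℝ} (hc : 0 ≤ c) {u : κ → ℝ} (hu0 : ∀ j, 0 ≤ u j) (huc : ∀ j, u j ≤ c) :
    en (A *ᵥ (ofReal ∘ u)) ≤ D * √(c * ∑ j, u j) := by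
  refine ge_of_tendsto' (x := Filter.atTop) ?_
    fun s => en_mulVec_le_add_half_pow hD hD0 s hc hu0 huc
  have h := tendsto_pow_atTop_nhds_zero_of_lt_one (by norm_num) (by norm_num : (1 / 2 : ℝ) < 1)
  simpa using (h.mul_const (c * √(Fintype.card κ) * opNorm2 A)).const_add (D * √(c * ∑ j, u j))

lemma en_mulVec_sq_le_of_isDyadicBlock
    (hD : ∀ ξ : κ → ℂ, (∀ j, ξ j = 0 ∨ ξ j = 1) → en (A *ᵥ ξ) ≤ D * en ξ) (hD0 : 0 ≤ D)
    {c : ℝ} (hc : 0 ≤ c) {w : κ → ℝ} (hw : IsDyadicBlock c w) :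
    en (A *ᵥ (ofReal ∘ w)) ^ 2 ≤ 2 * D ^ 2 * ∑ j, w j ^ 2 := by
  have hcw : 0 ≤ c * ∑ j, w j := mul_nonneg hc (sum_nonneg fun j _ => hw.nonneg j)
  calc en (A *ᵥ (ofReal ∘ w)) ^ 2 ≤ (D * √(c * ∑ j, w j)) ^ 2 :=
        pow_le_pow_left₀ (en_nonneg _) (en_mulVec_le_sqrt_mul_sum hD hD0 hc hw.nonneg (hw.le hc)) 2
    _ = D ^ 2 * (c * ∑ j, w j) := by rw [mul_pow, Real.sq_sqrt hcw]
    _ ≤ 2 * D ^ 2 * ∑ j, w j ^ 2 := by nlinarith [hw.mul_sum_le, sq_nonneg D]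

lemma en_mulVec_sq_le_of_nonneg
    (hD : ∀ ξ : κ → ℂ, (∀ j, ξ j = 0 ∨ ξ j = 1) → en (A *ᵥ ξ) ≤ D * en ξ) (hD0 : 0 ≤ D)
    (W : ℕ) {u : κ → ℝ} (hu : ∀ j, 0 ≤ u j) :
    en (A *ᵥ (ofReal ∘ u)) ^ 2 ≤
      (4 * W * D ^ 2 + 8 * (opNorm1 A * opNormInf A) * (1 / 2) ^ W) * ∑ j, u j ^ 2 := by
  obtain ⟨M, T, v, hM, hblock, hsum, hsq⟩ := exists_dyadic_decomposition u hu
  set w : ℕ → EuclideanSpace ℂ ι := fun k => WithLp.toLp 2 (A *ᵥ (ofReal ∘ v k))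
  have hw : en (A *ᵥ (ofReal ∘ u)) = ‖∑ k ∈ range T, w k‖ := by
    rw [en_eq_norm, ← hsum, ← WithLp.toLp_sum, ← Matrix.mulVec_sum]
    congr 3
    ext j
    simp
  have hnorm (k : ℕ) : ‖w k‖ ^ 2 ≤ 2 * D ^ 2 * ∑ j, v k j ^ 2 := by
    rw [← en_eq_norm]
    exact en_mulVec_sq_le_of_isDyadicBlock hD hD0 (by positivity) (hblock k)
  have hP := mul_nonneg (opNorm1_nonneg A) (opNormInf_nonneg A)
  have hfar (k l : ℕ) (hkl : k + W ≤ l) : ‖inner ℂ (w k) (w l)‖ ≤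
      2 * (opNorm1 A * opNormInf A) * (1 / 2) ^ (l - k) * ∑ j, v k j ^ 2 := by
    have h := norm_inner_mulVec_le_of_isDyadicBlock A (by positivity) (by positivity) (hblock k)
      (hblock l).nonneg ((hblock l).le (by positivity))
    have hratio : (1 / 2 : ℝ) ^ l * M / ((1 / 2) ^ k * M) = (1 / 2) ^ (l - k) := by
      rw [mul_div_mul_right _ _ hM.ne', pow_sub₀ _ (by norm_num) (by omega : k ≤ l),
        div_eq_mul_inv]
    rwa [hratio] at h
  have := norm_sum_sq_le_of_band_far w (fun k => by positivity) (by positivity) (by positivity)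
    W T hnorm hfar
  rw [hw, ← hsq]
  linarith

end BinaryVectors

section ComplexVectors

variable {A : Matrix ι κ ℂ} {L : ℝ}

lemma en_mulVec_ofReal_le (hL0 : 0 ≤ L)
    (hL : ∀ u : κ → ℝ, (∀ j, 0 ≤ u j) → en (A *ᵥ (ofReal ∘ u)) ≤ L * en (ofReal ∘ u))
    (v : κ → ℝ) : en (A *ᵥ (ofReal ∘ v)) ≤ √2 * L * en (ofReal ∘ v) := by
  have hsplit : ofReal ∘ v = ofReal ∘ v⁺ - ofReal ∘ v⁻ := by
    ext j
    simp [Pi.posPart_apply, Pi.negPart_apply, ← ofReal_sub, posPart_sub_negPart]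
  calc en (A *ᵥ (ofReal ∘ v))
      ≤ en (A *ᵥ (ofReal ∘ v⁺)) + en (A *ᵥ (ofReal ∘ v⁻)) := by
        rw [hsplit, Matrix.mulVec_sub]
        exact en_sub_le _ _
    _ ≤ L * (en (ofReal ∘ v⁺) + en (ofReal ∘ v⁻)) := by
        rw [mul_add]
        exact add_le_add (hL _ fun j => posPart_nonneg _) (hL _ fun j => negPart_nonneg _)
    _ ≤ L * (√2 * en (ofReal ∘ v)) := by
        gcongr
        refine en_add_en_le fun j => ?_
        simp [Complex.norm_real, sq_abs, posPart_sq_add_negPart_sq]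
    _ = √2 * L * en (ofReal ∘ v) := by ring

lemma en_mulVec_le_two_mul (hL0 : 0 ≤ L)
    (hL : ∀ u : κ → ℝ, (∀ j, 0 ≤ u j) → en (A *ᵥ (ofReal ∘ u)) ≤ L * en (ofReal ∘ u))
    (x : κ → ℂ) : en (A *ᵥ x) ≤ 2 * L * en x := by
  set xr : κ → ℝ := fun j => (x j).re
  set xi : κ → ℝ := fun j => (x j).im
  have hsplit : x = ofReal ∘ xr + I • (ofReal ∘ xi) := by
    ext j
    simp [xr, xi, mul_comm I, Complex.re_add_im]
  calc en (A *ᵥ x) ≤ en (A *ᵥ (ofReal ∘ xr)) + en (A *ᵥ (ofReal ∘ xi)) := by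
        conv_lhs => rw [hsplit, Matrix.mulVec_add, Matrix.mulVec_smul]
        refine (en_add_le _ _).trans_eq ?_
        rw [en_smul, Complex.norm_I, one_mul]
    _ ≤ √2 * L * (en (ofReal ∘ xr) + en (ofReal ∘ xi)) := by
        rw [mul_add]
        exact add_le_add (en_mulVec_ofReal_le hL0 hL xr) (en_mulVec_ofReal_le hL0 hL xi)
    _ ≤ √2 * L * (√2 * en x) := by
        gcongr
        refine en_add_en_le fun j => ?_
        rw [Complex.sq_norm (x j), Complex.normSq_apply]
        simp [xr, xi, Complex.norm_real, sq]
    _ = 2 * L * en x := by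
        rw [← mul_assoc, mul_right_comm _ L, Real.mul_self_sqrt zero_le_two]

end ComplexVectors

lemma opNorm2_sq_le_of_dnorm (A : Matrix ι κ ℂ) (W : ℕ) :
    opNorm2 A ^ 2 ≤ 16 * W * dnorm A ^ 2 + 32 * (opNorm1 A * opNormInf A) * (1 / 2) ^ W := by
  set K := 4 * W * dnorm A ^ 2 + 8 * (opNorm1 A * opNormInf A) * (1 / 2) ^ W
  have hK : 0 ≤ K := by
    have := mul_nonneg (opNorm1_nonneg A) (opNormInf_nonneg A)
    positivity
  have hL (u : κ → ℝ) (hu : ∀ j, 0 ≤ u j) : en (A *ᵥ (ofReal ∘ u)) ≤ √K * en (ofReal ∘ u) := by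
    rw [← Real.sqrt_sq (en_nonneg (A *ᵥ _)), en_ofReal, ← Real.sqrt_mul hK]
    exact Real.sqrt_le_sqrt
      (en_mulVec_sq_le_of_nonneg (fun ξ hξ => en_mulVec_le_dnorm_mul A hξ) (dnorm_nonneg A) W hu)
  have hN := opNorm2_le_of_bound A (by positivity) (en_mulVec_le_two_mul (Real.sqrt_nonneg K) hL)
  calc opNorm2 A ^ 2 ≤ (2 * √K) ^ 2 := pow_le_pow_left₀ (opNorm2_nonneg A) hN 2
    _ = 16 * W * dnorm A ^ 2 + 32 * (opNorm1 A * opNormInf A) * (1 / 2) ^ W := by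
      rw [mul_pow, Real.sq_sqrt hK]
      ring

lemma div_le_of_forall_sq_le {N D P : ℝ} (hN : 0 < N) (hD : 0 ≤ D) (hNP : N ^ 2 ≤ P)
    (hW : ∀ W : ℕ, N ^ 2 ≤ 16 * W * D ^ 2 + 32 * P * (1 / 2) ^ W) :
    N / (8 * √2 * √(Real.log (√P / N) + 2)) ≤ D := by
  set h := √P / N
  have hh : 1 ≤ h := by
    rw [le_div_iff₀ hN, one_mul]
    exact (Real.le_sqrt hN.le (hNP.trans' (sq_nonneg N))).mpr hNP
  have hlog : 0 ≤ Real.log h := Real.log_nonneg hh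
  have hP : P = h ^ 2 * N ^ 2 := by
    rw [div_pow, Real.sq_sqrt (hNP.trans' (sq_nonneg N)), div_mul_cancel₀ _ (by positivity)]
  set W := ⌈4 * Real.log h⌉₊ + 7
  have hW_le : (W : ℝ) ≤ 4 * Real.log h + 8 := by
    have := Nat.ceil_lt_add_one (by positivity : 0 ≤ 4 * Real.log h)
    push_cast [W]
    linarith
  have hW_ge : 4 * Real.log h + 7 ≤ W := by
    have := Nat.le_ceil (4 * Real.log h)
    push_cast [W]
    linarith
  have h2W : 64 * h ^ 2 ≤ 2 ^ W := by
    rw [← Real.log_le_log_iff (by positivity) (by positivity), Real.log_mul (by norm_num)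
      (by positivity), Real.log_pow, Real.log_pow, show (64 : ℝ) = 2 ^ 6 by norm_num,
      Real.log_pow]
    have := Real.log_two_gt_d9
    push_cast
    nlinarith
  have hfar : 32 * P * (1 / 2) ^ W ≤ N ^ 2 / 2 := by
    rw [hP, one_div_pow, ← div_eq_mul_one_div, div_le_iff₀ (by positivity)]
    nlinarith [sq_nonneg N]
  have hmain : N ^ 2 ≤ (D * (8 * √2 * √(Real.log h + 2))) ^ 2 := by
    rw [mul_pow, mul_pow, mul_pow, Real.sq_sqrt zero_le_two, Real.sq_sqrt (by positivity)]
    nlinarith [hW W, sq_nonneg D]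
  rw [div_le_iff₀ (by positivity)]
  exact le_of_pow_le_pow_left₀ two_ne_zero (by positivity) hmain

theorem stmt8 {m n : ℕ} (A : Matrix (Fin m) (Fin n) ℂ) (hA : A ≠ 0) :
    opNorm2 A / (8 * Real.sqrt 2 * Real.sqrt (Real.log (height A) + 2)) ≤
        dnorm A ∧ dnorm A ≤ opNorm2 A :=
  ⟨div_le_of_forall_sq_le (opNorm2_pos hA) (dnorm_nonneg A)
      (opNorm2_sq_le_opNorm1_mul_opNormInf A) (opNorm2_sq_le_of_dnorm A),
    dnorm_le_opNorm2 A⟩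
end

section
/- Let (V,E) be a non-empty graph with spectral radius ρ and maximum degree Δ. Then there exists a non-empty subset X ⊆ V such that Σ_{v ∈ V} |N_X(v)|² ≥ (ρ²/(128(log(Δ/ρ) + 2)))·|X|. -/
open scoped BigOperators

/-- The spectral radius of a graph: the L²-operator norm of its adjacency
matrix. -/
noncomputable def specRad {V : Type*} [Fintype V] [DecidableEq V]
    (G : SimpleGraph V) [DecidableRel G.Adj] : ℝ :=
  opNorm2 (G.adjMatrix ℂ)

/-!
The adjacency operator `A` is symmetric, so `ρ = sup |⟪A x, x⟫| / ‖x‖²`, and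
`|⟪A x, x⟫| ≤ ⟪A |x|, |x|⟫`: it suffices to bound `x ⬝ A x` for `x ≥ 0`. Let `K` be the largest
ratio `∑_v |N_X(v)|² / |X|`. Sort the vertices with `x v > 0` into dyadic levels
`2^i ≤ x v < 2^(i+1)`. Edges joining levels more than `t` apart carry at most
`2Δ 2^(-t) ‖x‖²`. Summing over `u` in level `X_i` and its neighbours `v` in the levels within `t`
of `i`, Cauchy–Schwarz and the definition of `K` give at most `2√K ‖x|X_i‖ ‖y_i‖`, where `y_i` is
`x` restricted to those levels; Cauchy–Schwarz over `i`, each vertex lying in at most `2t + 1` of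
the `y_i`, bounds the near edges by `2√K √(2t+1) ‖x‖²`. With `t ≈ 2 log(Δ/ρ)` the far edges
carry at most `ρ‖x‖²/2`, whence `ρ² ≤ 16 K (2t + 1)`.
-/

lemma opNorm2_eq_norm_toEuclideanCLM {ι : Type*} [Fintype ι] [DecidableEq ι]
    (A : Matrix ι ι ℂ) : opNorm2 A = ‖Matrix.toEuclideanCLM (𝕜 := ℂ) A‖ := by
  rw [ContinuousLinearMap.norm_def, opNorm2]
  congr! 4 with C
  refine ⟨fun h x => ?_, fun h x => ?_⟩
  · simpa [en, EuclideanSpace.norm_eq] using h x.ofLp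
  · simpa [en, EuclideanSpace.norm_eq] using h (WithLp.toLp 2 x)

namespace Finset

lemma sum_fiberwise_of_maps_to_dep {ι κ M : Type*} [AddCommMonoid M] [DecidableEq κ]
    {s : Finset ι} {t : Finset κ} {g : ι → κ} (h : ∀ i ∈ s, g i ∈ t) (f : κ → ι → M) :
    ∑ j ∈ t, ∑ i ∈ s with g i = j, f j i = ∑ i ∈ s, f (g i) i := by
  rw [← sum_fiberwise_of_maps_to h fun i => f (g i) i]
  exact sum_congr rfl fun j _ => sum_congr rfl fun i hi => by rw [(mem_filter.1 hi).2]

end Finset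

section

open Finset

lemma mul_le_sq_div_of_log_add_lt {a b : ℝ} {t : ℕ} (ha : 0 ≤ a)
    (h : Int.log 2 b + t < Int.log 2 a) : a * b ≤ a ^ 2 / 2 ^ t := by
  rcases ha.eq_or_lt with rfl | ha
  · simp
  have hb : b ≤ a / 2 ^ t :=
    calc b ≤ (2 : ℝ) ^ (Int.log 2 b + 1) := (Int.lt_zpow_succ_log_self one_lt_two b).le
      _ ≤ (2 : ℝ) ^ (Int.log 2 a - t) := zpow_le_zpow_right₀ one_le_two (by omega)
      _ = (2 : ℝ) ^ Int.log 2 a / 2 ^ t := by rw [zpow_sub₀ two_ne_zero, zpow_natCast]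
      _ ≤ a / 2 ^ t := by gcongr; exact_mod_cast Int.zpow_log_le_self one_lt_two ha
  calc a * b ≤ a * (a / 2 ^ t) := by gcongr
    _ = a ^ 2 / 2 ^ t := by ring

lemma mul_le_sq_add_sq_div_of_lt_abs_log_sub {a b : ℝ} {t : ℕ} (ha : 0 ≤ a) (hb : 0 ≤ b)
    (h : t < |Int.log 2 a - Int.log 2 b|) : a * b ≤ (a ^ 2 + b ^ 2) / 2 ^ t := by
  rcases lt_abs.1 h with h | h
  · have := mul_le_sq_div_of_log_add_lt ha (t := t) (b := b) (by omega)
    have : 0 ≤ b ^ 2 / 2 ^ t := by positivity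
    rw [add_div]; linarith
  · have := mul_le_sq_div_of_log_add_lt hb (t := t) (b := a) (by omega)
    have : 0 ≤ a ^ 2 / 2 ^ t := by positivity
    rw [add_div]; linarith [mul_comm a b]

lemma sum_sum_sq_ite_abs_sub_le {V : Type*} [Fintype V] (L : Finset ℤ) (ℓ : V → ℤ)
    (y : V → ℝ) (t : ℕ) :
    ∑ i ∈ L, ∑ v, (if |ℓ v - i| ≤ t then y v else 0) ^ 2 ≤ (2 * t + 1) * ∑ v, y v ^ 2 := by
  rw [sum_comm, mul_sum]
  gcongr with v
  calc ∑ i ∈ L, (if |ℓ v - i| ≤ t then y v else 0) ^ 2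
      = #{i ∈ L | |ℓ v - i| ≤ t} * y v ^ 2 := by
        rw [← nsmul_eq_mul, ← sum_const, sum_filter]
        exact sum_congr rfl fun i _ => by split_ifs <;> simp
    _ ≤ #(Icc (ℓ v - t) (ℓ v + t)) * y v ^ 2 := by
        gcongr
        intro i
        simp only [mem_filter, mem_Icc, abs_le]
        omega
    _ = (2 * t + 1) * y v ^ 2 := by
        rw [Int.card_Icc, show ℓ v + t + 1 - (ℓ v - t) = ((2 * t + 1 : ℕ) : ℤ) by push_cast; ring,
          Int.toNat_natCast]
        push_cast
        ring

lemma sq_le_mul_log_add_two_of_forall_le {ρ Δ K : ℝ} (hρ : 0 < ρ) (hρΔ : ρ ≤ Δ) (hK : 0 ≤ K)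
    (h : ∀ t : ℕ, ρ ≤ 2 * Δ / 2 ^ t + 2 * √K * √(2 * t + 1)) :
    ρ ^ 2 ≤ 128 * (Real.log (Δ / ρ) + 2) * K := by
  set L := Real.log (Δ / ρ)
  have hL : 0 ≤ L := Real.log_nonneg ((one_le_div hρ).2 hρΔ)
  set n := ⌈2 * L⌉₊
  have hn : (n : ℝ) < 2 * L + 1 := Nat.ceil_lt_add_one (by positivity)
  have hpow : Δ / ρ ≤ 2 ^ n :=
    calc Δ / ρ = Real.exp L := (Real.exp_log (div_pos (hρ.trans_le hρΔ) hρ)).symm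
      _ ≤ Real.exp (n * Real.log 2) :=
        Real.exp_le_exp.2 (by nlinarith [Nat.le_ceil (2 * L), Real.log_two_gt_d9])
      _ = 2 ^ n := by rw [Real.exp_nat_mul, Real.exp_log two_pos]
  have hfar : 2 * Δ / 2 ^ (n + 2) ≤ ρ / 2 := by
    rw [div_le_iff₀ hρ] at hpow
    rw [div_le_iff₀ (by positivity), pow_add]
    nlinarith
  have hnear : (ρ / 2) ^ 2 ≤ (2 * √K * √(2 * (n + 2 : ℕ) + 1)) ^ 2 :=
    pow_le_pow_left₀ (by positivity) (by linarith [h (n + 2)]) 2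
  rw [mul_pow, mul_pow, Real.sq_sqrt hK, Real.sq_sqrt (by positivity)] at hnear
  push_cast at hnear
  nlinarith [mul_le_mul_of_nonneg_left (show 2 * (n + 2 : ℝ) + 1 ≤ 8 * (L + 2) by linarith) hK]

end

namespace SimpleGraph

open Finset Matrix

variable {V : Type*} [Fintype V] (G : SimpleGraph V) [DecidableRel G.Adj]

lemma sum_sum_neighborFinset_eq_sum_card_nsmul {M : Type*} [AddCommMonoid M] (X : Finset V)
    (y : V → M) :
    ∑ u ∈ X, ∑ v ∈ G.neighborFinset u, y v = ∑ v, #{u ∈ X | G.Adj v u} • y v := by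
  rw [Finset.sum_comm' (t' := univ) (s' := fun v => {u ∈ X | G.Adj v u})
    (by simp [G.adj_comm])]
  simp

lemma sum_sum_neighborFinset_sq_add_sq_le (x : V → ℝ) :
    ∑ u, ∑ v ∈ G.neighborFinset u, (x u ^ 2 + x v ^ 2) ≤ 2 * G.maxDegree * ∑ v, x v ^ 2 := by
  have hdeg : ∀ v, #{u | G.Adj v u} = G.degree v := fun v => by
    rw [← card_neighborFinset_eq_degree, neighborFinset_eq_filter]
  simp_rw [sum_add_distrib, sum_const, card_neighborFinset_eq_degree,
    G.sum_sum_neighborFinset_eq_sum_card_nsmul, hdeg, ← two_nsmul, ← sum_nsmul, mul_assoc,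
    mul_sum, nsmul_eq_mul]
  push_cast
  gcongr with v
  exact_mod_cast G.degree_le_maxDegree v

lemma dotProduct_adjMatrix_mulVec_self (x : V → ℝ) :
    x ⬝ᵥ G.adjMatrix ℝ *ᵥ x = ∑ u, ∑ v ∈ G.neighborFinset u, x u * x v := by
  simp [dotProduct, adjMatrix_mulVec_apply, mul_sum]

lemma dotProduct_adjMatrix_mulVec_self_le_maxDegree (x : V → ℝ) :
    x ⬝ᵥ G.adjMatrix ℝ *ᵥ x ≤ G.maxDegree * ∑ v, x v ^ 2 := by
  rw [dotProduct_adjMatrix_mulVec_self]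
  calc ∑ u, ∑ v ∈ G.neighborFinset u, x u * x v
      ≤ ∑ u, ∑ v ∈ G.neighborFinset u, (x u ^ 2 + x v ^ 2) / 2 := by
        gcongr with u _ v _
        nlinarith [sq_nonneg (x u - x v)]
    _ ≤ _ := by
        simp_rw [← sum_div]
        linarith [G.sum_sum_neighborFinset_sq_add_sq_le x]

section Spectral

variable [DecidableEq V]

lemma norm_inner_toEuclideanCLM_adjMatrix_le (x : EuclideanSpace ℂ V) :
    ‖inner ℂ (toEuclideanCLM (𝕜 := ℂ) (G.adjMatrix ℂ) x) x‖ ≤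
      (fun v => ‖x v‖) ⬝ᵥ G.adjMatrix ℝ *ᵥ fun v => ‖x v‖ := by
  rw [PiLp.inner_apply]
  refine (norm_sum_le _ _).trans (Finset.sum_le_sum fun u _ => ?_)
  rw [RCLike.inner_apply, norm_mul, RCLike.norm_conj, ofLp_toEuclideanCLM,
    adjMatrix_mulVec_apply, adjMatrix_mulVec_apply]
  exact mul_le_mul_of_nonneg_left (norm_sum_le _ _) (norm_nonneg _)

lemma specRad_le_of_forall_nonneg {M : ℝ} (hM : 0 ≤ M)
    (h : ∀ x : V → ℝ, 0 ≤ x → x ⬝ᵥ G.adjMatrix ℝ *ᵥ x ≤ M * ∑ v, x v ^ 2) :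
    specRad G ≤ M := by
  set T := toEuclideanCLM (𝕜 := ℂ) (G.adjMatrix ℂ)
  have hT : (T : EuclideanSpace ℂ V →ₗ[ℂ] EuclideanSpace ℂ V).IsSymmetric := by
    simp [T, coe_toEuclideanCLM_eq_toEuclideanLin]
  rw [specRad, opNorm2_eq_norm_toEuclideanCLM, T.norm_eq_iSup_rayleighQuotient hT]
  refine ciSup_le fun x => ?_
  rw [abs_div, abs_sq]
  refine div_le_of_le_mul₀ (sq_nonneg _) hM ?_
  calc |RCLike.re (inner ℂ (T x) x)| ≤ ‖inner ℂ (T x) x‖ := RCLike.abs_re_le_norm _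
    _ ≤ _ := G.norm_inner_toEuclideanCLM_adjMatrix_le x
    _ ≤ M * ∑ v, ‖x v‖ ^ 2 := h _ fun v => norm_nonneg _
    _ = M * ‖x‖ ^ 2 := by rw [EuclideanSpace.norm_sq_eq]

lemma specRad_le_maxDegree : specRad G ≤ G.maxDegree :=
  G.specRad_le_of_forall_nonneg (Nat.cast_nonneg _) fun x _ =>
    G.dotProduct_adjMatrix_mulVec_self_le_maxDegree x

lemma one_le_specRad {a b : V} (hab : G.Adj a b) : 1 ≤ specRad G := by
  set T := toEuclideanCLM (𝕜 := ℂ) (G.adjMatrix ℂ)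
  calc (1 : ℝ) = ‖T (EuclideanSpace.single b 1) a‖ := by
        simp [T, ofLp_toEuclideanCLM, hab]
    _ ≤ ‖T (EuclideanSpace.single b 1)‖ := PiLp.norm_apply_le _ _
    _ ≤ ‖T‖ * ‖EuclideanSpace.single b (1 : ℂ)‖ := T.le_opNorm _
    _ = specRad G := by simp [specRad, opNorm2_eq_norm_toEuclideanCLM, T]

end Spectral

def sumSqNeighborCard (X : Finset V) : ℝ := ∑ v, (#{u ∈ X | G.Adj v u} : ℝ) ^ 2

lemma sumSqNeighborCard_nonneg (X : Finset V) : 0 ≤ G.sumSqNeighborCard X :=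
  sum_nonneg fun _ _ => sq_nonneg _

lemma exists_forall_sumSqNeighborCard_le [Nonempty V] :
    ∃ X₀ : Finset V, X₀.Nonempty ∧
      ∀ X, G.sumSqNeighborCard X ≤ G.sumSqNeighborCard X₀ / #X₀ * #X := by
  obtain ⟨X₀, hX₀, hmax⟩ := exists_max_image {X : Finset V | X.Nonempty}
    (fun X => G.sumSqNeighborCard X / #X) ⟨{Classical.arbitrary V}, by simp⟩
  refine ⟨X₀, (mem_filter.1 hX₀).2, fun X => ?_⟩
  rcases X.eq_empty_or_nonempty with rfl | hX
  · simp [sumSqNeighborCard]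
  · rw [← div_le_iff₀ (by exact_mod_cast hX.card_pos)]
    exact hmax X (by simpa using hX)

section Dyadic

variable {G} {K : ℝ} {x : V → ℝ}

lemma sum_far_levels_le (t : ℕ) (hx : 0 ≤ x) :
    ∑ u, ∑ v ∈ G.neighborFinset u with t < |Int.log 2 (x u) - Int.log 2 (x v)|, x u * x v ≤
      2 * G.maxDegree / 2 ^ t * ∑ v, x v ^ 2 := by
  calc _ ≤ ∑ u, ∑ v ∈ G.neighborFinset u with t < |Int.log 2 (x u) - Int.log 2 (x v)|,
          (x u ^ 2 + x v ^ 2) / 2 ^ t := by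
        gcongr with u _ v hv
        exact mul_le_sq_add_sq_div_of_lt_abs_log_sub (hx u) (hx v) (mem_filter.1 hv).2
    _ ≤ ∑ u, ∑ v ∈ G.neighborFinset u, (x u ^ 2 + x v ^ 2) / 2 ^ t := by
        gcongr with u _
        exact filter_subset _ _
    _ ≤ _ := by
        simp_rw [← sum_div]
        rw [div_mul_eq_mul_div]
        gcongr
        exact G.sum_sum_neighborFinset_sq_add_sq_le x

lemma sum_sum_neighborFinset_le (hF : ∀ X, G.sumSqNeighborCard X ≤ K * #X) (X : Finset V)
    (y : V → ℝ) :
    ∑ u ∈ X, ∑ v ∈ G.neighborFinset u, y v ≤ √K * √(#X : ℝ) * √(∑ v, y v ^ 2) := by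
  rw [G.sum_sum_neighborFinset_eq_sum_card_nsmul]
  simp_rw [nsmul_eq_mul]
  calc _ ≤ √(G.sumSqNeighborCard X) * √(∑ v, y v ^ 2) := Real.sum_mul_le_sqrt_mul_sqrt _ _ _
    _ ≤ _ := by
        rw [← Real.sqrt_mul' K (Nat.cast_nonneg _)]
        gcongr
        exact hF X

lemma sum_mul_sum_neighborFinset_le_of_log_eq (hF : ∀ X, G.sumSqNeighborCard X ≤ K * #X)
    {X : Finset V} {i : ℤ} (hX : ∀ u ∈ X, 0 < x u ∧ Int.log 2 (x u) = i) {y : V → ℝ}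
    (hy : 0 ≤ y) :
    ∑ u ∈ X, x u * ∑ v ∈ G.neighborFinset u, y v ≤
      2 * √K * (√(∑ u ∈ X, x u ^ 2) * √(∑ v, y v ^ 2)) := by
  have hupper : ∀ u ∈ X, x u ≤ 2 * (2 : ℝ) ^ i := fun u hu => by
    have := (Int.lt_zpow_succ_log_self one_lt_two (x u)).le
    push_cast at this
    rw [(hX u hu).2, zpow_add_one₀ two_ne_zero] at this
    linarith
  have hlower : (2 : ℝ) ^ i * √(#X : ℝ) ≤ √(∑ u ∈ X, x u ^ 2) := by
    rw [← Real.sqrt_sq (zpow_nonneg zero_le_two i), ← Real.sqrt_mul (sq_nonneg _)]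
    gcongr
    rw [mul_comm, ← nsmul_eq_mul, ← sum_const]
    gcongr with u hu
    have := Int.zpow_log_le_self one_lt_two (hX u hu).1
    rw [(hX u hu).2] at this
    exact_mod_cast this
  calc _ ≤ ∑ u ∈ X, 2 * (2 : ℝ) ^ i * ∑ v ∈ G.neighborFinset u, y v := by
        gcongr with u hu
        · exact sum_nonneg fun v _ => hy v
        · exact hupper u hu
    _ = 2 * 2 ^ i * ∑ u ∈ X, ∑ v ∈ G.neighborFinset u, y v := by rw [mul_sum]
    _ ≤ 2 * 2 ^ i * (√K * √(#X : ℝ) * √(∑ v, y v ^ 2)) := by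
        gcongr
        exact sum_sum_neighborFinset_le hF X y
    _ = 2 * √K * (2 ^ i * √(#X : ℝ) * √(∑ v, y v ^ 2)) := by ring
    _ ≤ _ := by gcongr

lemma sum_near_levels_le (hF : ∀ X, G.sumSqNeighborCard X ≤ K * #X) (t : ℕ) (hx : 0 ≤ x) :
    ∑ u, ∑ v ∈ G.neighborFinset u with |Int.log 2 (x u) - Int.log 2 (x v)| ≤ t, x u * x v ≤
      2 * √K * √(2 * t + 1) * ∑ v, x v ^ 2 := by
  set ℓ : V → ℤ := fun v => Int.log 2 (x v)
  -- `Int.log 2 0 = 0` is a junk level, so vertices are sorted into levels only on the support.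
  set S : Finset V := {v | 0 < x v}
  set Y : ℤ → V → ℝ := fun i v => if |ℓ v - i| ≤ t then x v else 0
  have hY : ∀ i, 0 ≤ Y i := fun i v => by
    by_cases h : |ℓ v - i| ≤ t
    · simpa [Y, h] using hx v
    · simp [Y, h]
  calc _ = ∑ u, x u * ∑ v ∈ G.neighborFinset u, Y (ℓ u) v := by
        refine sum_congr rfl fun u _ => ?_
        rw [sum_filter, mul_sum]
        exact sum_congr rfl fun v _ => by
          simp only [Y, ℓ, abs_sub_comm (Int.log 2 (x u)), mul_ite, mul_zero]
    _ = ∑ u ∈ S, x u * ∑ v ∈ G.neighborFinset u, Y (ℓ u) v := by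
        refine (sum_filter_of_ne fun u _ hu => ?_).symm
        exact (hx u).lt_of_ne (left_ne_zero_of_mul hu).symm
    _ = ∑ i ∈ S.image ℓ, ∑ u ∈ S with ℓ u = i, x u * ∑ v ∈ G.neighborFinset u, Y i v :=
        (sum_fiberwise_of_maps_to_dep (fun u hu => mem_image_of_mem ℓ hu)
          fun i u => x u * ∑ v ∈ G.neighborFinset u, Y i v).symm
    _ ≤ 2 * √K * ∑ i ∈ S.image ℓ, √(∑ u ∈ S with ℓ u = i, x u ^ 2) * √(∑ v, Y i v ^ 2) := by
        rw [mul_sum]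
        gcongr with i
        refine sum_mul_sum_neighborFinset_le_of_log_eq hF (i := i) (fun u hu => ?_) (hY i)
        simpa [S, ℓ] using hu
    _ ≤ 2 * √K * (√(∑ i ∈ S.image ℓ, ∑ u ∈ S with ℓ u = i, x u ^ 2) *
          √(∑ i ∈ S.image ℓ, ∑ v, Y i v ^ 2)) := by
        gcongr
        exact Real.sum_sqrt_mul_sqrt_le _ (fun i => sum_nonneg fun u _ => sq_nonneg _)
          (fun i => sum_nonneg fun v _ => sq_nonneg _)
    _ ≤ 2 * √K * (√(∑ v, x v ^ 2) * √((2 * t + 1) * ∑ v, x v ^ 2)) := by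
        gcongr
        · rw [sum_fiberwise_of_maps_to fun u hu => mem_image_of_mem ℓ hu]
          exact sum_le_sum_of_subset_of_nonneg (subset_univ _) fun v _ _ => sq_nonneg _
        · exact sum_sum_sq_ite_abs_sub_le _ ℓ x t
    _ = 2 * √K * √(2 * t + 1) * ∑ v, x v ^ 2 := by
        rw [Real.sqrt_mul (by positivity)]
        linear_combination 2 * √K * √(2 * t + 1) *
          Real.mul_self_sqrt (sum_nonneg fun v _ => sq_nonneg (x v))

lemma dotProduct_adjMatrix_mulVec_self_le (hF : ∀ X, G.sumSqNeighborCard X ≤ K * #X) (t : ℕ)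
    (hx : 0 ≤ x) :
    x ⬝ᵥ G.adjMatrix ℝ *ᵥ x ≤
      (2 * G.maxDegree / 2 ^ t + 2 * √K * √(2 * t + 1)) * ∑ v, x v ^ 2 := by
  have hsplit : ∀ u, ∑ v ∈ G.neighborFinset u, x u * x v =
      ∑ v ∈ G.neighborFinset u with t < |Int.log 2 (x u) - Int.log 2 (x v)|, x u * x v +
        ∑ v ∈ G.neighborFinset u with |Int.log 2 (x u) - Int.log 2 (x v)| ≤ t, x u * x v :=
    fun u => by simp only [← not_lt, sum_filter_add_sum_filter_not]
  rw [dotProduct_adjMatrix_mulVec_self, sum_congr rfl fun u _ => hsplit u, sum_add_distrib, add_mul]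
  exact add_le_add (sum_far_levels_le t hx) (sum_near_levels_le hF t hx)

end Dyadic

variable [DecidableEq V]

lemma specRad_le_of_sumSqNeighborCard_le {K : ℝ}
    (hF : ∀ X, G.sumSqNeighborCard X ≤ K * #X) (t : ℕ) :
    specRad G ≤ 2 * G.maxDegree / 2 ^ t + 2 * √K * √(2 * t + 1) :=
  G.specRad_le_of_forall_nonneg (by positivity) fun _ hx =>
    dotProduct_adjMatrix_mulVec_self_le hF t hx

end SimpleGraph

theorem stmt11 {V : Type*} [Fintype V] [DecidableEq V]
    (G : SimpleGraph V) [DecidableRel G.Adj]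
    (hne : ∃ v w, G.Adj v w) :
    ∃ X : Finset V, X.Nonempty ∧
      ∑ v : V, ((X.filter (fun u => G.Adj v u)).card : ℝ) ^ 2 ≥
        specRad G ^ 2 /
          (128 * (Real.log ((G.maxDegree : ℝ) / specRad G) + 2)) * X.card := by
  obtain ⟨a, b, hab⟩ := hne
  have : Nonempty V := ⟨a⟩
  obtain ⟨X₀, hX₀, hF⟩ := G.exists_forall_sumSqNeighborCard_le
  have hρ : 0 < specRad G := one_pos.trans_le (G.one_le_specRad hab)
  have hρΔ := G.specRad_le_maxDegree
  have hcard : (0 : ℝ) < X₀.card := by exact_mod_cast hX₀.card_pos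
  have hbound := sq_le_mul_log_add_two_of_forall_le hρ hρΔ
    (div_nonneg (G.sumSqNeighborCard_nonneg X₀) hcard.le)
    (G.specRad_le_of_sumSqNeighborCard_le hF)
  have hlog : 0 ≤ Real.log (G.maxDegree / specRad G) :=
    Real.log_nonneg ((one_le_div hρ).2 hρΔ)
  refine ⟨X₀, hX₀, ?_⟩
  calc _ ≤ G.sumSqNeighborCard X₀ / X₀.card * X₀.card := by
        refine mul_le_mul_of_nonneg_right ?_ hcard.le
        rw [div_le_iff₀ (by positivity)]
        linarith
    _ = _ := div_mul_cancel₀ _ hcard.ne'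
end

section
/- Let (V,E) be a non-empty graph with spectral radius ρ and maximum degree Δ. Then there exist non-empty subsets X, Y ⊆ V such that e(X,Y) ≥ (ρ/(32√2·(log(Δ/ρ) + 4)))·√(|X||Y|). -/
open scoped BigOperators

open Finset

set_option linter.unusedSectionVars false

namespace Stmt13Aux

variable {V : Type*} [Fintype V] [DecidableEq V] (G : SimpleGraph V) [DecidableRel G.Adj]

/-- adjacency weight -/
def aw (v w : V) : ℝ := if G.Adj v w then 1 else 0

lemma aw_nonneg (v w : V) : 0 ≤ aw G v w := by unfold aw; positivity

lemma aw_symm (v w : V) : aw G v w = aw G w v := by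
  unfold aw
  congr 1
  · exact propext (SimpleGraph.adj_comm G v w)

lemma awsum (v : V) : ∑ w, aw G v w = (G.degree v : ℝ) := by
  unfold aw
  rw [Finset.sum_boole, SimpleGraph.degree]
  congr 1
  rw [SimpleGraph.neighborFinset_eq_filter]

lemma neigh_sum (v : V) (h : V → ℝ) :
    ∑ u ∈ G.neighborFinset v, h u = ∑ u, aw G v u * h u := by
  rw [SimpleGraph.neighborFinset_eq_filter, Finset.sum_filter]
  unfold aw
  congr 1; ext u
  by_cases hadj : G.Adj v u <;> simp [hadj]

lemma Ecard (X Y : Finset V) :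
    ∑ v ∈ X, ∑ w ∈ Y, aw G v w
      = (((X ×ˢ Y).filter (fun p => G.Adj p.1 p.2)).card : ℝ) := by
  rw [Finset.card_filter]
  push_cast
  rw [Finset.sum_product]
  unfold aw
  apply Finset.sum_congr rfl; intro v _
  apply Finset.sum_congr rfl; intro w _
  by_cases hadj : G.Adj v w <;> simp [hadj]

lemma EdegX (X Y : Finset V) :
    ∑ v ∈ X, ∑ w ∈ Y, aw G v w ≤ (G.maxDegree : ℝ) * X.card := by
  have h1 : ∀ v ∈ X, ∑ w ∈ Y, aw G v w ≤ (G.maxDegree : ℝ) := by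
    intro v _
    calc ∑ w ∈ Y, aw G v w ≤ ∑ w, aw G v w :=
          Finset.sum_le_sum_of_subset_of_nonneg (Finset.subset_univ Y)
            (fun w _ _ => aw_nonneg G v w)
      _ = (G.degree v : ℝ) := awsum G v
      _ ≤ (G.maxDegree : ℝ) := by exact_mod_cast G.degree_le_maxDegree v
  calc ∑ v ∈ X, ∑ w ∈ Y, aw G v w ≤ ∑ _v ∈ X, (G.maxDegree : ℝ) :=
        Finset.sum_le_sum h1
    _ = (G.maxDegree : ℝ) * X.card := by
        rw [Finset.sum_const, nsmul_eq_mul, mul_comm]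

lemma EdegY (X Y : Finset V) :
    ∑ v ∈ X, ∑ w ∈ Y, aw G v w ≤ (G.maxDegree : ℝ) * Y.card := by
  rw [Finset.sum_comm]
  calc ∑ w ∈ Y, ∑ v ∈ X, aw G v w = ∑ w ∈ Y, ∑ v ∈ X, aw G w v := by
        apply Finset.sum_congr rfl; intro w _
        exact Finset.sum_congr rfl fun v _ => aw_symm G v w
    _ ≤ (G.maxDegree : ℝ) * Y.card := EdegX G Y X

lemma sum_partition (p : V → ℝ) (X : ℕ → Finset V) (N : ℕ)
    (hdisj : (↑(Finset.range N) : Set ℕ).PairwiseDisjoint X)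
    (hcov : ∀ v, 0 < p v → ∃ i ∈ Finset.range N, v ∈ X i)
    (hmem : ∀ i ∈ Finset.range N, ∀ v ∈ X i, 0 < p v)
    (h : V → ℝ) (hz : ∀ v, p v ≤ 0 → h v = 0) :
    ∑ v, h v = ∑ i ∈ Finset.range N, ∑ v ∈ X i, h v := by
  classical
  have hU : Finset.univ.filter (fun v => 0 < p v) = (Finset.range N).biUnion X := by
    ext v
    simp only [Finset.mem_filter, Finset.mem_univ, true_and, Finset.mem_biUnion]
    exact ⟨hcov v, fun ⟨i, hi, hvi⟩ => hmem i hi v hvi⟩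
  rw [← Finset.sum_biUnion hdisj, ← hU]
  exact (Finset.sum_filter_of_ne (fun v _ hv => lt_of_not_ge fun hle => hv (hz v hle))).symm

lemma geom_tail (N m : ℕ) :
    ∑ j ∈ (Finset.range N).filter (fun j => m < j), (1/2 : ℝ)^j ≤ (1/2)^m := by
  have h1 : (Finset.range N).filter (fun j => m < j) = Finset.Ico (m+1) N := by
    ext j; simp [Finset.mem_Ico]; omega
  rw [h1, Finset.sum_Ico_eq_sum_range]
  have heq : ∀ i, (1/2:ℝ)^(m+1+i) = (1/2:ℝ)^(m+1) * (1/2:ℝ)^i := fun i => pow_add _ _ _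
  calc ∑ i ∈ Finset.range (N - (m+1)), (1/2:ℝ)^(m+1+i)
      = (1/2:ℝ)^(m+1) * ∑ i ∈ Finset.range (N - (m+1)), (1/2:ℝ)^i := by
        rw [Finset.mul_sum]; exact Finset.sum_congr rfl fun i _ => heq i
    _ ≤ (1/2:ℝ)^(m+1) * 2 :=
        mul_le_mul_of_nonneg_left (sum_geometric_two_le _) (by positivity)
    _ = (1/2)^m := by ring

lemma sum_filter_product_left {M : Type*} [AddCommMonoid M] (N : ℕ)
    (c : ℕ × ℕ → Prop) [DecidablePred c] (F : ℕ × ℕ → M) :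
    ∑ q ∈ (Finset.range N ×ˢ Finset.range N).filter c, F q
      = ∑ i ∈ Finset.range N, ∑ j ∈ (Finset.range N).filter (fun j => c (i, j)), F (i, j) := by
  rw [Finset.sum_filter, Finset.sum_product]
  simp [Finset.sum_filter]

lemma sum_filter_product_right {M : Type*} [AddCommMonoid M] (N : ℕ)
    (c : ℕ × ℕ → Prop) [DecidablePred c] (F : ℕ × ℕ → M) :
    ∑ q ∈ (Finset.range N ×ˢ Finset.range N).filter c, F q
      = ∑ j ∈ Finset.range N, ∑ i ∈ (Finset.range N).filter (fun i => c (i, j)), F (i, j) := by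
  rw [Finset.sum_filter, Finset.sum_product_right]
  simp [Finset.sum_filter]

lemma near_count (N k i : ℕ) (c : ℕ → Prop) [DecidablePred c]
    (hc : ∀ x, c x → i ≤ x + k ∧ x ≤ i + k) :
    ((Finset.range N).filter c).card ≤ 2*k+1 := by
  have hsub : (Finset.range N).filter c ⊆ Finset.Icc (i - k) (i + k) := by
    intro j hj
    simp only [Finset.mem_filter, Finset.mem_range] at hj
    have := hc j hj.2
    simp only [Finset.mem_Icc]
    omega
  calc _ ≤ (Finset.Icc (i - k) (i + k)).card := Finset.card_le_card hsub
    _ ≤ 2*k+1 := by rw [Nat.card_Icc]; omega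


set_option maxHeartbeats 2000000 in
theorem unit_bound (hV : Nonempty V) (K : ℝ) (hK0 : 0 ≤ K) (k : ℕ)
    (hK : ∀ X Y : Finset V, (((X ×ˢ Y).filter (fun p => G.Adj p.1 p.2)).card : ℝ)
        ≤ K * Real.sqrt ((X.card : ℝ) * Y.card))
    (p q : V → ℝ) (hp0 : ∀ v, 0 ≤ p v) (hq0 : ∀ v, 0 ≤ q v)
    (hp1 : ∑ v, p v ^ 2 ≤ 1) (hq1 : ∑ v, q v ^ 2 ≤ 1) :
    ∑ v, ∑ w, p v * aw G v w * q w
      ≤ 4*K*(2*(k:ℝ)+1) + 8*(G.maxDegree : ℝ)*(1/2)^k := by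
  classical
  -- choose N below the minimum positive entry
  obtain ⟨N, hN⟩ : ∃ N : ℕ, ∀ v, (0 < p v → (1/2:ℝ)^N < p v) ∧ (0 < q v → (1/2:ℝ)^N < q v) := by
    set F : V → ℝ := fun v => min (if 0 < p v then p v else 1) (if 0 < q v then q v else 1) with hF
    have hpos : (0:ℝ) < Finset.univ.inf' Finset.univ_nonempty F := by
      rw [Finset.lt_inf'_iff]
      intro v _
      apply lt_min
      · by_cases h : 0 < p v <;> simp [hF, h]
      · by_cases h : 0 < q v <;> simp [hF, h]
    obtain ⟨N, hN2⟩ := exists_pow_lt_of_lt_one hpos (by norm_num : (1/2:ℝ) < 1)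
    refine ⟨N, fun v => ⟨fun h => ?_, fun h => ?_⟩⟩
    · calc (1/2:ℝ)^N < _ := hN2
        _ ≤ F v := Finset.inf'_le F (Finset.mem_univ v)
        _ ≤ _ := min_le_left _ _
        _ = p v := by simp [h]
    · calc (1/2:ℝ)^N < _ := hN2
        _ ≤ F v := Finset.inf'_le F (Finset.mem_univ v)
        _ ≤ _ := min_le_right _ _
        _ = q v := by simp [h]
  set X : ℕ → Finset V :=
    fun i => Finset.univ.filter (fun v => (1/2:ℝ)^(i+1) < p v ∧ p v ≤ (1/2)^i) with hX
  set Y : ℕ → Finset V :=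
    fun j => Finset.univ.filter (fun w => (1/2:ℝ)^(j+1) < q w ∧ q w ≤ (1/2)^j) with hY
  have hXmem : ∀ i v, v ∈ X i ↔ ((1/2:ℝ)^(i+1) < p v ∧ p v ≤ (1/2)^i) := by
    intro i v; simp [hX]
  have hYmem : ∀ j w, w ∈ Y j ↔ ((1/2:ℝ)^(j+1) < q w ∧ q w ≤ (1/2)^j) := by
    intro j w; simp [hY]
  -- entries at most 1
  have hle1 : ∀ (r : V → ℝ), (∀ v, 0 ≤ r v) → (∑ v, r v ^ 2 ≤ 1) → ∀ v, r v ≤ 1 := by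
    intro r hr0 hr1 v
    have h2 : r v ^ 2 ≤ 1 :=
      le_trans (Finset.single_le_sum (f := fun v => r v ^ 2)
        (fun v _ => sq_nonneg _) (Finset.mem_univ v)) hr1
    nlinarith [hr0 v]
  -- covering
  have hcov : ∀ (r : V → ℝ), (∀ v, r v ≤ 1) → ∀ v, 0 < r v → ((1/2:ℝ)^N < r v) →
      ∃ i ∈ Finset.range N, (1/2:ℝ)^(i+1) < r v ∧ r v ≤ (1/2)^i := by
    intro r hr1 v hv hNv
    set P : ℕ → Prop := fun i => r v ≤ (1/2:ℝ)^i with hP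
    have hP0 : P 0 := by simpa [hP] using hr1 v
    set i0 := Nat.findGreatest P N with hi0
    have hspec : P i0 := Nat.findGreatest_spec (Nat.zero_le N) hP0
    have hlt : i0 < N := by
      rcases lt_or_eq_of_le (Nat.findGreatest_le (P := P) N) with h | h
      · exact h
      · exfalso; rw [hi0, h] at hspec; exact absurd hspec (not_le.2 hNv)
    have hgt : ¬ P (i0 + 1) :=
      Nat.findGreatest_is_greatest (Nat.lt_succ_self i0) hlt
    exact ⟨i0, Finset.mem_range.2 hlt, lt_of_not_ge hgt, hspec⟩
  have hcovX : ∀ v, 0 < p v → ∃ i ∈ Finset.range N, v ∈ X i := by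
    intro v hv
    obtain ⟨i, hi, h1, h2⟩ := hcov p (hle1 p hp0 hp1) v hv ((hN v).1 hv)
    exact ⟨i, hi, (hXmem i v).2 ⟨h1, h2⟩⟩
  have hcovY : ∀ w, 0 < q w → ∃ j ∈ Finset.range N, w ∈ Y j := by
    intro w hw
    obtain ⟨j, hj, h1, h2⟩ := hcov q (hle1 q hq0 hq1) w hw ((hN w).2 hw)
    exact ⟨j, hj, (hYmem j w).2 ⟨h1, h2⟩⟩
  -- disjointness
  have hdisjgen : ∀ (r : V → ℝ) (Z : ℕ → Finset V),
      (∀ i v, v ∈ Z i ↔ ((1/2:ℝ)^(i+1) < r v ∧ r v ≤ (1/2)^i)) →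
      (↑(Finset.range N) : Set ℕ).PairwiseDisjoint Z := by
    intro r Z hZ i _ j _ hij
    apply Finset.disjoint_left.2
    intro v hvi hvj
    rw [hZ i v] at hvi; rw [hZ j v] at hvj
    rcases Nat.lt_or_ge i j with h | h
    · have : (1/2:ℝ)^j ≤ (1/2)^(i+1) :=
        pow_le_pow_of_le_one (by norm_num) (by norm_num) (by omega)
      linarith [hvi.1, hvj.2]
    · have hji : j < i := lt_of_le_of_ne h (Ne.symm hij)
      have : (1/2:ℝ)^i ≤ (1/2)^(j+1) :=
        pow_le_pow_of_le_one (by norm_num) (by norm_num) (by omega)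
      linarith [hvi.2, hvj.1]
  have hdisjX := hdisjgen p X hXmem
  have hdisjY := hdisjgen q Y hYmem
  have hmemX : ∀ i ∈ Finset.range N, ∀ v ∈ X i, 0 < p v := by
    intro i _ v hv
    have := ((hXmem i v).1 hv).1
    have h0 : (0:ℝ) < (1/2:ℝ)^(i+1) := by positivity
    linarith
  have hmemY : ∀ j ∈ Finset.range N, ∀ w ∈ Y j, 0 < q w := by
    intro j _ w hw
    have := ((hYmem j w).1 hw).1
    have h0 : (0:ℝ) < (1/2:ℝ)^(j+1) := by positivity
    linarith
  -- weights
  set u : ℕ → ℝ := fun i => (1/2:ℝ)^i * Real.sqrt ((X i).card) with hu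
  set z : ℕ → ℝ := fun j => (1/2:ℝ)^j * Real.sqrt ((Y j).card) with hz
  have hu0 : ∀ i, 0 ≤ u i := fun i => by positivity
  have hz0 : ∀ j, 0 ≤ z j := fun j => by positivity
  have husq : ∀ i, u i ^ 2 = ((1/2:ℝ)^i)^2 * ((X i).card : ℝ) := by
    intro i; rw [hu]; rw [mul_pow, Real.sq_sqrt (Nat.cast_nonneg _)]
  have hzsq : ∀ j, z j ^ 2 = ((1/2:ℝ)^j)^2 * ((Y j).card : ℝ) := by
    intro j; rw [hz]; rw [mul_pow, Real.sq_sqrt (Nat.cast_nonneg _)]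
  have husum : ∀ (r : V → ℝ) (Z : ℕ → Finset V) (hr0 : ∀ v, 0 ≤ r v),
      (∀ i v, v ∈ Z i ↔ ((1/2:ℝ)^(i+1) < r v ∧ r v ≤ (1/2)^i)) →
      (↑(Finset.range N) : Set ℕ).PairwiseDisjoint Z →
      (∀ v, 0 < r v → ∃ i ∈ Finset.range N, v ∈ Z i) →
      (∑ v, r v ^ 2 ≤ 1) →
      ∑ i ∈ Finset.range N, ((1/2:ℝ)^i)^2 * ((Z i).card : ℝ) ≤ 4 := by
    intro r Z hr0 hZ hdisj hcovZ hr1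
    have h1 : ∀ i ∈ Finset.range N,
        ((1/2:ℝ)^i)^2 * ((Z i).card : ℝ) ≤ ∑ v ∈ Z i, 4 * r v ^ 2 := by
      intro i _
      have : ((1/2:ℝ)^i)^2 * ((Z i).card : ℝ) = ∑ _v ∈ Z i, ((1/2:ℝ)^i)^2 := by
        rw [Finset.sum_const, nsmul_eq_mul, mul_comm]
      rw [this]
      apply Finset.sum_le_sum
      intro v hv
      have h2 := ((hZ i v).1 hv).1
      have h3 : (1/2:ℝ)^(i+1) = (1/2:ℝ)^i / 2 := by ring
      nlinarith [pow_nonneg (by norm_num : (0:ℝ) ≤ 1/2) i]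
    calc ∑ i ∈ Finset.range N, ((1/2:ℝ)^i)^2 * ((Z i).card : ℝ)
        ≤ ∑ i ∈ Finset.range N, ∑ v ∈ Z i, 4 * r v ^ 2 := Finset.sum_le_sum h1
      _ = ∑ v, 4 * r v ^ 2 := by
          refine (sum_partition r Z N hdisj hcovZ
            (fun i hi v hv => ?_) (fun v => 4 * r v ^ 2) (fun v hv => ?_)).symm
          · exact lt_of_lt_of_le (by positivity) (le_of_lt (((hZ i v).1 hv).1))
          · have h5 : r v = 0 := le_antisymm hv (hr0 v)
            rw [h5]; ring
      _ = 4 * ∑ v, r v ^ 2 := by rw [Finset.mul_sum]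
      _ ≤ 4 := by linarith
  have hu4 : ∑ i ∈ Finset.range N, u i ^ 2 ≤ 4 := by
    calc ∑ i ∈ Finset.range N, u i ^ 2
        = ∑ i ∈ Finset.range N, ((1/2:ℝ)^i)^2 * ((X i).card : ℝ) :=
          Finset.sum_congr rfl fun i _ => husq i
      _ ≤ 4 := husum p X hp0 hXmem hdisjX hcovX hp1
  have hz4 : ∑ j ∈ Finset.range N, z j ^ 2 ≤ 4 := by
    calc ∑ j ∈ Finset.range N, z j ^ 2
        = ∑ j ∈ Finset.range N, ((1/2:ℝ)^j)^2 * ((Y j).card : ℝ) :=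
          Finset.sum_congr rfl fun j _ => hzsq j
      _ ≤ 4 := husum q Y hq0 hYmem hdisjY hcovY hq1
  -- the edge-count function on levels
  set E : ℕ → ℕ → ℝ := fun i j => ∑ v ∈ X i, ∑ w ∈ Y j, aw G v w with hE
  have hEK : ∀ i j, E i j
      ≤ K * (Real.sqrt ((X i).card) * Real.sqrt ((Y j).card)) := by
    intro i j
    calc E i j = (((X i ×ˢ Y j).filter (fun pr => G.Adj pr.1 pr.2)).card : ℝ) :=
          Ecard G (X i) (Y j)
      _ ≤ K * Real.sqrt (((X i).card : ℝ) * ((Y j).card : ℝ)) := hK _ _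
      _ = K * (Real.sqrt ((X i).card) * Real.sqrt ((Y j).card)) := by
          rw [Real.sqrt_mul (Nat.cast_nonneg _)]
  have hEdX : ∀ i j, E i j ≤ (G.maxDegree : ℝ) * ((X i).card : ℝ) := fun i j => EdegX G _ _
  have hEdY : ∀ i j, E i j ≤ (G.maxDegree : ℝ) * ((Y j).card : ℝ) := fun i j => EdegY G _ _
  -- partition the bilinear sum
  have hBB : ∑ v, ∑ w, p v * aw G v w * q w
      = ∑ i ∈ Finset.range N, ∑ j ∈ Finset.range N,
          ∑ v ∈ X i, ∑ w ∈ Y j, p v * aw G v w * q w := by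
    rw [sum_partition p X N hdisjX hcovX hmemX
      (fun v => ∑ w, p v * aw G v w * q w)
      (fun v hv => by
        have h5 : p v = 0 := le_antisymm hv (hp0 v)
        apply Finset.sum_eq_zero; intro w _; rw [h5]; ring)]
    apply Finset.sum_congr rfl; intro i _
    calc ∑ v ∈ X i, ∑ w, p v * aw G v w * q w
        = ∑ v ∈ X i, ∑ j ∈ Finset.range N, ∑ w ∈ Y j, p v * aw G v w * q w := by
          apply Finset.sum_congr rfl; intro v _
          exact sum_partition q Y N hdisjY hcovY hmemY
            (fun w => p v * aw G v w * q w)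
            (fun w hw => by
              have h5 : q w = 0 := le_antisymm hw (hq0 w)
              rw [h5]; ring)
      _ = ∑ j ∈ Finset.range N, ∑ v ∈ X i, ∑ w ∈ Y j, p v * aw G v w * q w :=
          Finset.sum_comm
  have hstep : ∑ v, ∑ w, p v * aw G v w * q w
      ≤ ∑ i ∈ Finset.range N, ∑ j ∈ Finset.range N, ((1/2:ℝ)^i * (1/2)^j) * E i j := by
    rw [hBB]
    apply Finset.sum_le_sum; intro i _
    apply Finset.sum_le_sum; intro j _
    calc ∑ v ∈ X i, ∑ w ∈ Y j, p v * aw G v w * q w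
        ≤ ∑ v ∈ X i, ∑ w ∈ Y j, ((1/2:ℝ)^i * (1/2)^j) * aw G v w := by
          apply Finset.sum_le_sum; intro v hv
          apply Finset.sum_le_sum; intro w hw
          have h1 := ((hXmem i v).1 hv).2
          have h2 := ((hYmem j w).1 hw).2
          calc p v * aw G v w * q w = (p v * q w) * aw G v w := by ring
            _ ≤ ((1/2:ℝ)^i * (1/2)^j) * aw G v w := by
                apply mul_le_mul_of_nonneg_right _ (aw_nonneg G v w)
                exact mul_le_mul h1 h2 (hq0 w) (by positivity)
      _ = ((1/2:ℝ)^i * (1/2)^j) * E i j := by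
          rw [hE]
          simp only []
          rw [Finset.mul_sum]
          apply Finset.sum_congr rfl; intro v _
          rw [Finset.mul_sum]
  -- pass to the product finset and split into near and far regimes
  have hprod : ∑ i ∈ Finset.range N, ∑ j ∈ Finset.range N, ((1/2:ℝ)^i * (1/2)^j) * E i j
      = ∑ pr ∈ Finset.range N ×ˢ Finset.range N, ((1/2:ℝ)^pr.1 * (1/2)^pr.2) * E pr.1 pr.2 :=
    (Finset.sum_product (Finset.range N) (Finset.range N)
      (fun pr => ((1/2:ℝ)^pr.1 * (1/2)^pr.2) * E pr.1 pr.2)).symm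
  set Fq : ℕ × ℕ → ℝ := fun pr => ((1/2:ℝ)^pr.1 * (1/2)^pr.2) * E pr.1 pr.2 with hFq
  set Pr : Finset (ℕ × ℕ) := Finset.range N ×ˢ Finset.range N with hPr
  set cnear : ℕ × ℕ → Prop := fun pr => pr.1 ≤ pr.2 + k ∧ pr.2 ≤ pr.1 + k with hcn
  have hsplit1 : ∑ pr ∈ Pr, Fq pr
      = ∑ pr ∈ Pr.filter cnear, Fq pr
        + ∑ pr ∈ Pr.filter (fun pr => ¬ cnear pr), Fq pr :=
    (Finset.sum_filter_add_sum_filter_not _ _ _).symm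
  have hsplit2 : ∑ pr ∈ Pr.filter (fun pr => ¬ cnear pr), Fq pr
      = ∑ pr ∈ Pr.filter (fun pr => pr.1 + k < pr.2), Fq pr
        + ∑ pr ∈ Pr.filter (fun pr => pr.2 + k < pr.1), Fq pr := by
    rw [← Finset.sum_filter_add_sum_filter_not
      (Pr.filter (fun pr => ¬ cnear pr)) (fun pr => pr.1 + k < pr.2) Fq]
    congr 1
    · rw [Finset.filter_filter]
      apply Finset.sum_congr _ (fun _ _ => rfl)
      apply Finset.filter_congr
      intro pr _
      simp only [hcn]
      omega
    · rw [Finset.filter_filter]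
      apply Finset.sum_congr _ (fun _ _ => rfl)
      apply Finset.filter_congr
      intro pr _
      simp only [hcn]
      omega
  -- near regime
  have hnear : ∑ pr ∈ Pr.filter cnear, Fq pr ≤ K * ((2*(k:ℝ)+1) * 4) := by
    have h1 : ∑ pr ∈ Pr.filter cnear, Fq pr
        ≤ ∑ pr ∈ Pr.filter cnear, K * (u pr.1 * z pr.2) := by
      apply Finset.sum_le_sum; intro pr _
      calc Fq pr ≤ ((1/2:ℝ)^pr.1 * (1/2)^pr.2)
            * (K * (Real.sqrt ((X pr.1).card) * Real.sqrt ((Y pr.2).card))) := by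
            rw [hFq]
            exact mul_le_mul_of_nonneg_left (hEK pr.1 pr.2) (by positivity)
        _ = K * (u pr.1 * z pr.2) := by rw [hu, hz]; simp only []; ring
    have hfib1 : ∑ pr ∈ Pr.filter cnear, u pr.1 ^ 2 ≤ (2*(k:ℝ)+1) * 4 := by
      rw [hPr, sum_filter_product_left N cnear (fun pr => u pr.1 ^ 2)]
      have h2 : ∀ i ∈ Finset.range N,
          ∑ j ∈ (Finset.range N).filter (fun j => cnear (i, j)), u (i, j).1 ^ 2
            ≤ (2*(k:ℝ)+1) * u i ^ 2 := by
        intro i _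
        show ∑ _j ∈ (Finset.range N).filter (fun j => cnear (i, j)), u i ^ 2
          ≤ (2*(k:ℝ)+1) * u i ^ 2
        rw [Finset.sum_const, nsmul_eq_mul]
        have hcard : (((Finset.range N).filter (fun j => cnear (i, j))).card : ℝ)
            ≤ 2*(k:ℝ)+1 := by
          have := near_count N k i (fun j => cnear (i, j)) (fun x hx => by
            rw [hcn] at hx; exact ⟨hx.1, hx.2⟩)
          exact_mod_cast this
        exact mul_le_mul_of_nonneg_right hcard (sq_nonneg _)
      calc _ ≤ ∑ i ∈ Finset.range N, (2*(k:ℝ)+1) * u i ^ 2 := Finset.sum_le_sum h2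
        _ = (2*(k:ℝ)+1) * ∑ i ∈ Finset.range N, u i ^ 2 := (Finset.mul_sum _ _ _).symm
        _ ≤ (2*(k:ℝ)+1) * 4 := by
            apply mul_le_mul_of_nonneg_left hu4 (by positivity)
    have hfib2 : ∑ pr ∈ Pr.filter cnear, z pr.2 ^ 2 ≤ (2*(k:ℝ)+1) * 4 := by
      rw [hPr, sum_filter_product_right N cnear (fun pr => z pr.2 ^ 2)]
      have h2 : ∀ j ∈ Finset.range N,
          ∑ i ∈ (Finset.range N).filter (fun i => cnear (i, j)), z (i, j).2 ^ 2
            ≤ (2*(k:ℝ)+1) * z j ^ 2 := by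
        intro j _
        show ∑ _i ∈ (Finset.range N).filter (fun i => cnear (i, j)), z j ^ 2
          ≤ (2*(k:ℝ)+1) * z j ^ 2
        rw [Finset.sum_const, nsmul_eq_mul]
        have hcard : (((Finset.range N).filter (fun i => cnear (i, j))).card : ℝ)
            ≤ 2*(k:ℝ)+1 := by
          have := near_count N k j (fun i => cnear (i, j)) (fun x hx => by
            rw [hcn] at hx; exact ⟨hx.2, hx.1⟩)
          exact_mod_cast this
        exact mul_le_mul_of_nonneg_right hcard (sq_nonneg _)
      calc _ ≤ ∑ j ∈ Finset.range N, (2*(k:ℝ)+1) * z j ^ 2 := Finset.sum_le_sum h2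
        _ = (2*(k:ℝ)+1) * ∑ j ∈ Finset.range N, z j ^ 2 := (Finset.mul_sum _ _ _).symm
        _ ≤ (2*(k:ℝ)+1) * 4 := by
            apply mul_le_mul_of_nonneg_left hz4 (by positivity)
    have hCS := Finset.sum_mul_sq_le_sq_mul_sq (Pr.filter cnear)
      (fun pr => u pr.1) (fun pr => z pr.2)
    have hSUW0 : (0:ℝ) ≤ ∑ pr ∈ Pr.filter cnear, u pr.1 * z pr.2 :=
      Finset.sum_nonneg fun pr _ => mul_nonneg (hu0 _) (hz0 _)
    have hSUW : ∑ pr ∈ Pr.filter cnear, u pr.1 * z pr.2 ≤ (2*(k:ℝ)+1) * 4 := by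
      have hk0 : (0:ℝ) ≤ (2*(k:ℝ)+1) * 4 := by positivity
      nlinarith [hCS, hfib1, hfib2, hSUW0, hk0,
        Finset.sum_nonneg (s := Pr.filter cnear) (fun pr _ => sq_nonneg (u pr.1)),
        Finset.sum_nonneg (s := Pr.filter cnear) (fun pr _ => sq_nonneg (z pr.2))]
    calc ∑ pr ∈ Pr.filter cnear, Fq pr
        ≤ ∑ pr ∈ Pr.filter cnear, K * (u pr.1 * z pr.2) := h1
      _ = K * ∑ pr ∈ Pr.filter cnear, u pr.1 * z pr.2 := (Finset.mul_sum _ _ _).symm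
      _ ≤ K * ((2*(k:ℝ)+1) * 4) := mul_le_mul_of_nonneg_left hSUW hK0
  -- far regimes
  have hfarA : ∑ pr ∈ Pr.filter (fun pr => pr.1 + k < pr.2), Fq pr
      ≤ (G.maxDegree : ℝ) * (1/2)^k * 4 := by
    rw [hPr, hFq, sum_filter_product_left N (fun pr => pr.1 + k < pr.2)
      (fun pr => ((1/2:ℝ)^pr.1 * (1/2)^pr.2) * E pr.1 pr.2)]
    have h2 : ∀ i ∈ Finset.range N,
        ∑ j ∈ (Finset.range N).filter (fun j => (i, j).1 + k < j),
          ((1/2:ℝ)^i * (1/2)^j) * E i j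
          ≤ ((G.maxDegree : ℝ) * (1/2)^k) * u i ^ 2 := by
      intro i _
      calc ∑ j ∈ (Finset.range N).filter (fun j => (i, j).1 + k < j),
            ((1/2:ℝ)^i * (1/2)^j) * E i j
          ≤ ∑ j ∈ (Finset.range N).filter (fun j => (i, j).1 + k < j),
            ((1/2:ℝ)^i * ((G.maxDegree : ℝ) * ((X i).card : ℝ))) * (1/2)^j := by
            apply Finset.sum_le_sum; intro j _
            calc ((1/2:ℝ)^i * (1/2)^j) * E i j
                ≤ ((1/2:ℝ)^i * (1/2)^j) * ((G.maxDegree : ℝ) * ((X i).card : ℝ)) :=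
                  mul_le_mul_of_nonneg_left (hEdX i j) (by positivity)
              _ = ((1/2:ℝ)^i * ((G.maxDegree : ℝ) * ((X i).card : ℝ))) * (1/2)^j := by ring
        _ = ((1/2:ℝ)^i * ((G.maxDegree : ℝ) * ((X i).card : ℝ)))
            * ∑ j ∈ (Finset.range N).filter (fun j => (i, j).1 + k < j), (1/2:ℝ)^j :=
            (Finset.mul_sum _ _ _).symm
        _ ≤ ((1/2:ℝ)^i * ((G.maxDegree : ℝ) * ((X i).card : ℝ))) * (1/2)^(i+k) := by
            apply mul_le_mul_of_nonneg_left _ (by positivity)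
            exact geom_tail N (i+k)
        _ = ((G.maxDegree : ℝ) * (1/2)^k) * u i ^ 2 := by
            rw [husq i, pow_add]; ring
    calc _ ≤ ∑ i ∈ Finset.range N, ((G.maxDegree : ℝ) * (1/2:ℝ)^k) * u i ^ 2 :=
          Finset.sum_le_sum h2
      _ = ((G.maxDegree : ℝ) * (1/2:ℝ)^k) * ∑ i ∈ Finset.range N, u i ^ 2 :=
          (Finset.mul_sum _ _ _).symm
      _ ≤ ((G.maxDegree : ℝ) * (1/2:ℝ)^k) * 4 :=
          mul_le_mul_of_nonneg_left hu4 (by positivity)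
      _ = (G.maxDegree : ℝ) * (1/2:ℝ)^k * 4 := by ring
  have hfarB : ∑ pr ∈ Pr.filter (fun pr => pr.2 + k < pr.1), Fq pr
      ≤ (G.maxDegree : ℝ) * (1/2)^k * 4 := by
    rw [hPr, hFq, sum_filter_product_right N (fun pr => pr.2 + k < pr.1)
      (fun pr => ((1/2:ℝ)^pr.1 * (1/2)^pr.2) * E pr.1 pr.2)]
    have h2 : ∀ j ∈ Finset.range N,
        ∑ i ∈ (Finset.range N).filter (fun i => (i, j).2 + k < i),
          ((1/2:ℝ)^i * (1/2)^j) * E i j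
          ≤ ((G.maxDegree : ℝ) * (1/2)^k) * z j ^ 2 := by
      intro j _
      calc ∑ i ∈ (Finset.range N).filter (fun i => (i, j).2 + k < i),
            ((1/2:ℝ)^i * (1/2)^j) * E i j
          ≤ ∑ i ∈ (Finset.range N).filter (fun i => (i, j).2 + k < i),
            ((1/2:ℝ)^j * ((G.maxDegree : ℝ) * ((Y j).card : ℝ))) * (1/2)^i := by
            apply Finset.sum_le_sum; intro i _
            calc ((1/2:ℝ)^i * (1/2)^j) * E i j
                ≤ ((1/2:ℝ)^i * (1/2)^j) * ((G.maxDegree : ℝ) * ((Y j).card : ℝ)) :=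
                  mul_le_mul_of_nonneg_left (hEdY i j) (by positivity)
              _ = ((1/2:ℝ)^j * ((G.maxDegree : ℝ) * ((Y j).card : ℝ))) * (1/2)^i := by ring
        _ = ((1/2:ℝ)^j * ((G.maxDegree : ℝ) * ((Y j).card : ℝ)))
            * ∑ i ∈ (Finset.range N).filter (fun i => (i, j).2 + k < i), (1/2:ℝ)^i :=
            (Finset.mul_sum _ _ _).symm
        _ ≤ ((1/2:ℝ)^j * ((G.maxDegree : ℝ) * ((Y j).card : ℝ))) * (1/2)^(j+k) := by
            apply mul_le_mul_of_nonneg_left _ (by positivity)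
            exact geom_tail N (j+k)
        _ = ((G.maxDegree : ℝ) * (1/2)^k) * z j ^ 2 := by
            rw [hzsq j, pow_add]; ring
    calc _ ≤ ∑ j ∈ Finset.range N, ((G.maxDegree : ℝ) * (1/2:ℝ)^k) * z j ^ 2 :=
          Finset.sum_le_sum h2
      _ = ((G.maxDegree : ℝ) * (1/2:ℝ)^k) * ∑ j ∈ Finset.range N, z j ^ 2 :=
          (Finset.mul_sum _ _ _).symm
      _ ≤ ((G.maxDegree : ℝ) * (1/2:ℝ)^k) * 4 :=
          mul_le_mul_of_nonneg_left hz4 (by positivity)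
      _ = (G.maxDegree : ℝ) * (1/2:ℝ)^k * 4 := by ring
  -- put everything together
  calc ∑ v, ∑ w, p v * aw G v w * q w
      ≤ ∑ i ∈ Finset.range N, ∑ j ∈ Finset.range N, ((1/2:ℝ)^i * (1/2)^j) * E i j := hstep
    _ = ∑ pr ∈ Pr, Fq pr := hprod
    _ = ∑ pr ∈ Pr.filter cnear, Fq pr
        + (∑ pr ∈ Pr.filter (fun pr => pr.1 + k < pr.2), Fq pr
          + ∑ pr ∈ Pr.filter (fun pr => pr.2 + k < pr.1), Fq pr) := by
        rw [hsplit1, hsplit2]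
    _ ≤ K * ((2*(k:ℝ)+1) * 4)
        + ((G.maxDegree : ℝ) * (1/2)^k * 4 + (G.maxDegree : ℝ) * (1/2)^k * 4) :=
        add_le_add hnear (add_le_add hfarA hfarB)
    _ = 4*K*(2*(k:ℝ)+1) + 8*(G.maxDegree : ℝ)*(1/2)^k := by ring

theorem homog_bound (C : ℝ)
    (hunit : ∀ p q : V → ℝ, (∀ v, 0 ≤ p v) → (∀ v, 0 ≤ q v) →
      (∑ v, p v ^ 2 ≤ 1) → (∑ v, q v ^ 2 ≤ 1) →
      ∑ v, ∑ w, p v * aw G v w * q w ≤ C)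
    (p q : V → ℝ) (hp0 : ∀ v, 0 ≤ p v) (hq0 : ∀ v, 0 ≤ q v) :
    ∑ v, ∑ w, p v * aw G v w * q w
      ≤ C * Real.sqrt (∑ v, p v ^ 2) * Real.sqrt (∑ v, q v ^ 2) := by
  classical
  have hSp0 : (0:ℝ) ≤ ∑ v, p v ^ 2 := Finset.sum_nonneg fun v _ => sq_nonneg _
  have hSq0 : (0:ℝ) ≤ ∑ v, q v ^ 2 := Finset.sum_nonneg fun v _ => sq_nonneg _
  by_cases hp : ∑ v, p v ^ 2 = 0
  · have hz : ∀ v, p v = 0 := by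
      intro v
      have h1 := (Finset.sum_eq_zero_iff_of_nonneg
        (fun v _ => sq_nonneg (p v))).1 hp v (Finset.mem_univ v)
      nlinarith [hp0 v]
    have hL : ∑ v, ∑ w, p v * aw G v w * q w = 0 :=
      Finset.sum_eq_zero fun v _ => Finset.sum_eq_zero fun w _ => by rw [hz v]; ring
    rw [hL, hp, Real.sqrt_zero, mul_zero, zero_mul]
  by_cases hq : ∑ v, q v ^ 2 = 0
  · have hz : ∀ w, q w = 0 := by
      intro w
      have h1 := (Finset.sum_eq_zero_iff_of_nonneg
        (fun w _ => sq_nonneg (q w))).1 hq w (Finset.mem_univ w)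
      nlinarith [hq0 w]
    have hL : ∑ v, ∑ w, p v * aw G v w * q w = 0 :=
      Finset.sum_eq_zero fun v _ => Finset.sum_eq_zero fun w _ => by rw [hz w]; ring
    rw [hL, hq, Real.sqrt_zero, mul_zero]
  · have hPpos : 0 < Real.sqrt (∑ v, p v ^ 2) :=
      Real.sqrt_pos.2 (lt_of_le_of_ne hSp0 (Ne.symm hp))
    have hQpos : 0 < Real.sqrt (∑ v, q v ^ 2) :=
      Real.sqrt_pos.2 (lt_of_le_of_ne hSq0 (Ne.symm hq))
    set P := Real.sqrt (∑ v, p v ^ 2) with hP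
    set Q := Real.sqrt (∑ v, q v ^ 2) with hQ
    have hP2 : P ^ 2 = ∑ v, p v ^ 2 := Real.sq_sqrt hSp0
    have hQ2 : Q ^ 2 = ∑ v, q v ^ 2 := Real.sq_sqrt hSq0
    have hnorm : ∀ (r : V → ℝ) (R : ℝ), 0 < R → R ^ 2 = ∑ v, r v ^ 2 →
        ∑ v, (r v / R) ^ 2 ≤ 1 := by
      intro r R hR hR2
      have : ∑ v, (r v / R) ^ 2 = (∑ v, r v ^ 2) / R ^ 2 := by
        rw [Finset.sum_div]
        exact Finset.sum_congr rfl fun v _ => by rw [div_pow]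
      rw [this, ← hR2, div_self (by positivity)]
    have hu := hunit (fun v => p v / P) (fun w => q w / Q)
      (fun v => div_nonneg (hp0 v) hPpos.le)
      (fun w => div_nonneg (hq0 w) hQpos.le)
      (hnorm p P hPpos hP2) (hnorm q Q hQpos hQ2)
    have hrw : ∑ v, ∑ w, (p v / P) * aw G v w * (q w / Q)
        = (∑ v, ∑ w, p v * aw G v w * q w) / (P * Q) := by
      rw [Finset.sum_div]
      apply Finset.sum_congr rfl; intro v _
      rw [Finset.sum_div]
      apply Finset.sum_congr rfl; intro w _
      field_simp
    rw [hrw] at hu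
    calc ∑ v, ∑ w, p v * aw G v w * q w
        = ((∑ v, ∑ w, p v * aw G v w * q w) / (P * Q)) * (P * Q) := by
          field_simp
      _ ≤ C * (P * Q) := mul_le_mul_of_nonneg_right hu (by positivity)
      _ = C * P * Q := by ring

theorem core_bound (C : ℝ) (hC0 : 0 ≤ C)
    (hB : ∀ p q : V → ℝ, (∀ v, 0 ≤ p v) → (∀ v, 0 ≤ q v) →
      ∑ v, ∑ w, p v * aw G v w * q w
        ≤ C * Real.sqrt (∑ v, p v ^ 2) * Real.sqrt (∑ v, q v ^ 2))
    (f : V → ℝ) (hf0 : ∀ v, 0 ≤ f v) :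
    ∑ v, (∑ u ∈ G.neighborFinset v, f u) ^ 2 ≤ C ^ 2 * ∑ v, f v ^ 2 := by
  classical
  set g : V → ℝ := fun v => ∑ u ∈ G.neighborFinset v, f u with hg
  have hg0 : ∀ v, 0 ≤ g v := fun v => Finset.sum_nonneg fun u _ => hf0 u
  have hF0 : (0:ℝ) ≤ ∑ v, f v ^ 2 := Finset.sum_nonneg fun v _ => sq_nonneg _
  have hT0 : (0:ℝ) ≤ ∑ v, g v ^ 2 := Finset.sum_nonneg fun v _ => sq_nonneg _
  have hrw : ∑ v, g v ^ 2 = ∑ v, ∑ w, g v * aw G v w * f w := by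
    apply Finset.sum_congr rfl; intro v _
    have h1 := neigh_sum G v f
    calc g v ^ 2 = g v * ∑ u, aw G v u * f u := by rw [← h1, hg]; ring
      _ = ∑ u, g v * aw G v u * f u := by
          rw [Finset.mul_sum]
          exact Finset.sum_congr rfl fun u _ => by ring
  have h1 : ∑ v, g v ^ 2
      ≤ C * Real.sqrt (∑ v, g v ^ 2) * Real.sqrt (∑ v, f v ^ 2) := by
    have h0 := hB g f hg0 hf0
    rw [← hrw] at h0
    exact h0
  by_cases hT : ∑ v, g v ^ 2 = 0
  · rw [hT]; positivity
  · have hTpos : 0 < ∑ v, g v ^ 2 := lt_of_le_of_ne hT0 (Ne.symm hT)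
    have hsT : 0 < Real.sqrt (∑ v, g v ^ 2) := Real.sqrt_pos.2 hTpos
    have h2 : Real.sqrt (∑ v, g v ^ 2) ≤ C * Real.sqrt (∑ v, f v ^ 2) := by
      have h3 : Real.sqrt (∑ v, g v ^ 2) * Real.sqrt (∑ v, g v ^ 2)
          ≤ (C * Real.sqrt (∑ v, f v ^ 2)) * Real.sqrt (∑ v, g v ^ 2) := by
        rw [Real.mul_self_sqrt hT0]
        calc ∑ v, g v ^ 2 ≤ C * Real.sqrt (∑ v, g v ^ 2) * Real.sqrt (∑ v, f v ^ 2) := h1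
          _ = (C * Real.sqrt (∑ v, f v ^ 2)) * Real.sqrt (∑ v, g v ^ 2) := by ring
      exact le_of_mul_le_mul_right h3 hsT
    calc ∑ v, g v ^ 2 = Real.sqrt (∑ v, g v ^ 2) ^ 2 := (Real.sq_sqrt hT0).symm
      _ ≤ (C * Real.sqrt (∑ v, f v ^ 2)) ^ 2 := by
          apply pow_le_pow_left₀ (Real.sqrt_nonneg _) h2
      _ = C ^ 2 * Real.sqrt (∑ v, f v ^ 2) ^ 2 := by ring
      _ = C ^ 2 * ∑ v, f v ^ 2 := by rw [Real.sq_sqrt hF0]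

theorem en_bound (C : ℝ) (hC0 : 0 ≤ C)
    (hcore : ∀ f : V → ℝ, (∀ v, 0 ≤ f v) →
      ∑ v, (∑ u ∈ G.neighborFinset v, f u) ^ 2 ≤ C ^ 2 * ∑ v, f v ^ 2) :
    ∀ x : V → ℂ, en ((G.adjMatrix ℂ).mulVec x) ≤ C * en x := by
  intro x
  set f : V → ℝ := fun u => ‖x u‖ with hf
  have hf0 : ∀ u, 0 ≤ f u := fun u => norm_nonneg _
  have h1 : ∀ v, ‖((G.adjMatrix ℂ).mulVec x) v‖ ≤ ∑ u ∈ G.neighborFinset v, f u := by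
    intro v
    rw [SimpleGraph.adjMatrix_mulVec_apply]
    exact norm_sum_le _ _
  have h2 : ∑ v, ‖((G.adjMatrix ℂ).mulVec x) v‖ ^ 2 ≤ C ^ 2 * ∑ v, f v ^ 2 := by
    refine le_trans (Finset.sum_le_sum fun v _ => ?_) (hcore f hf0)
    exact pow_le_pow_left₀ (norm_nonneg _) (h1 v) 2
  show Real.sqrt (∑ v, ‖((G.adjMatrix ℂ).mulVec x) v‖ ^ 2)
      ≤ C * Real.sqrt (∑ v, ‖x v‖ ^ 2)
  calc Real.sqrt (∑ v, ‖((G.adjMatrix ℂ).mulVec x) v‖ ^ 2)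
      ≤ Real.sqrt (C ^ 2 * ∑ v, f v ^ 2) := Real.sqrt_le_sqrt h2
    _ = C * Real.sqrt (∑ v, f v ^ 2) := by
        rw [Real.sqrt_mul (sq_nonneg C), Real.sqrt_sq hC0]

theorem deg_core (f : V → ℝ) (hf0 : ∀ v, 0 ≤ f v) :
    ∑ v, (∑ u ∈ G.neighborFinset v, f u) ^ 2
      ≤ ((G.maxDegree : ℝ)) ^ 2 * ∑ v, f v ^ 2 := by
  classical
  have step1 : ∀ v, (∑ u ∈ G.neighborFinset v, f u) ^ 2
      ≤ (G.maxDegree : ℝ) * ∑ u ∈ G.neighborFinset v, f u ^ 2 := by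
    intro v
    calc (∑ u ∈ G.neighborFinset v, f u) ^ 2
        ≤ ((G.neighborFinset v).card : ℝ) * ∑ u ∈ G.neighborFinset v, f u ^ 2 :=
          sq_sum_le_card_mul_sum_sq
      _ ≤ (G.maxDegree : ℝ) * ∑ u ∈ G.neighborFinset v, f u ^ 2 := by
          apply mul_le_mul_of_nonneg_right _ (Finset.sum_nonneg fun u _ => sq_nonneg _)
          exact_mod_cast G.degree_le_maxDegree v
  calc ∑ v, (∑ u ∈ G.neighborFinset v, f u) ^ 2
      ≤ ∑ v, (G.maxDegree : ℝ) * ∑ u ∈ G.neighborFinset v, f u ^ 2 :=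
        Finset.sum_le_sum fun v _ => step1 v
    _ = (G.maxDegree : ℝ) * ∑ v, ∑ u, aw G v u * f u ^ 2 := by
        rw [Finset.mul_sum]
        exact Finset.sum_congr rfl fun v _ => by
          rw [neigh_sum G v (fun u => f u ^ 2)]
    _ = (G.maxDegree : ℝ) * ∑ u, (G.degree u : ℝ) * f u ^ 2 := by
        congr 1
        rw [Finset.sum_comm]
        apply Finset.sum_congr rfl; intro u _
        rw [← Finset.sum_mul]
        congr 1
        calc ∑ v, aw G v u = ∑ v, aw G u v :=
              Finset.sum_congr rfl fun v _ => aw_symm G v u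
          _ = (G.degree u : ℝ) := awsum G u
    _ ≤ (G.maxDegree : ℝ) * ∑ u, (G.maxDegree : ℝ) * f u ^ 2 := by
        apply mul_le_mul_of_nonneg_left _ (Nat.cast_nonneg _)
        apply Finset.sum_le_sum; intro u _
        apply mul_le_mul_of_nonneg_right _ (sq_nonneg _)
        exact_mod_cast G.degree_le_maxDegree u
    _ = ((G.maxDegree : ℝ)) ^ 2 * ∑ v, f v ^ 2 := by
        rw [← Finset.mul_sum]
        ring

theorem maxDegree_mem :
    ((G.maxDegree : ℝ)) ∈ {C : ℝ | 0 ≤ C ∧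
      ∀ x : V → ℂ, en ((G.adjMatrix ℂ).mulVec x) ≤ C * en x} :=
  ⟨Nat.cast_nonneg _, en_bound G _ (Nat.cast_nonneg _) (deg_core G)⟩

theorem main_bound (hV : Nonempty V) (K : ℝ) (hK0 : 0 ≤ K) (k : ℕ)
    (hK : ∀ X Y : Finset V, (((X ×ˢ Y).filter (fun p => G.Adj p.1 p.2)).card : ℝ)
        ≤ K * Real.sqrt ((X.card : ℝ) * Y.card))
    (hC0 : 0 ≤ 4*K*(2*(k:ℝ)+1) + 8*(G.maxDegree : ℝ)*(1/2)^k) :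
    ∀ x : V → ℂ, en ((G.adjMatrix ℂ).mulVec x)
      ≤ (4*K*(2*(k:ℝ)+1) + 8*(G.maxDegree : ℝ)*(1/2)^k) * en x := by
  apply en_bound G _ hC0
  apply core_bound G _ hC0
  apply homog_bound G _
  intro p q hp0 hq0 hp1 hq1
  exact unit_bound G hV K hK0 k hK p q hp0 hq0 hp1 hq1

end Stmt13Aux

theorem stmt13 {V : Type*} [Fintype V] [DecidableEq V]
    (G : SimpleGraph V) [DecidableRel G.Adj]
    (hne : ∃ v w, G.Adj v w) :
    ∃ X Y : Finset V, X.Nonempty ∧ Y.Nonempty ∧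
      (((X ×ˢ Y).filter (fun p => G.Adj p.1 p.2)).card : ℝ) ≥
        specRad G /
            (32 * Real.sqrt 2 *
              (Real.log ((G.maxDegree : ℝ) / specRad G) + 4)) *
          Real.sqrt ((X.card : ℝ) * Y.card) := by
  classical
  by_contra hcon
  push_neg at hcon
  obtain ⟨v0, w0, hvw⟩ := hne
  have hV : Nonempty V := ⟨v0⟩
  set S : Set ℝ := {C : ℝ | 0 ≤ C ∧
    ∀ x : V → ℂ, en ((G.adjMatrix ℂ).mulVec x) ≤ C * en x} with hSdef
  have hρdef : specRad G = sInf S := rfl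
  have hbdd : BddBelow S := ⟨0, fun C hC => hC.1⟩
  have hΔS : ((G.maxDegree : ℝ)) ∈ S := Stmt13Aux.maxDegree_mem G
  have hρΔ : specRad G ≤ (G.maxDegree : ℝ) := by
    rw [hρdef]; exact csInf_le hbdd hΔS
  have hρ1 : 1 ≤ specRad G := by
    rw [hρdef]
    apply le_csInf ⟨_, hΔS⟩
    intro C hC
    set x : V → ℂ := fun u => if u = w0 then 1 else 0 with hx
    have hen : en x = 1 := by
      show Real.sqrt (∑ u, ‖x u‖ ^ 2) = 1
      have h1 : ∀ u, ‖x u‖ ^ 2 = if u = w0 then (1:ℝ) else 0 := by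
        intro u; rw [hx]; by_cases h : u = w0 <;> simp [h]
      rw [Finset.sum_congr rfl fun u _ => h1 u]
      rw [Finset.sum_ite_eq' Finset.univ w0 (fun _ => (1:ℝ))]
      simp
    have hAx : (1:ℝ) ≤ en ((G.adjMatrix ℂ).mulVec x) := by
      have h1 : ((G.adjMatrix ℂ).mulVec x) v0 = 1 := by
        rw [SimpleGraph.adjMatrix_mulVec_apply, hx]
        rw [Finset.sum_ite_eq' (G.neighborFinset v0) w0 (fun _ => (1:ℂ))]
        simp [SimpleGraph.mem_neighborFinset, hvw]
      have h2 : (1:ℝ) ≤ ∑ u, ‖((G.adjMatrix ℂ).mulVec x) u‖ ^ 2 := by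
        calc (1:ℝ) = ‖((G.adjMatrix ℂ).mulVec x) v0‖ ^ 2 := by rw [h1]; simp
          _ ≤ ∑ u, ‖((G.adjMatrix ℂ).mulVec x) u‖ ^ 2 :=
            Finset.single_le_sum (f := fun u => ‖((G.adjMatrix ℂ).mulVec x) u‖ ^ 2)
              (fun u _ => sq_nonneg _) (Finset.mem_univ v0)
      calc (1:ℝ) = Real.sqrt 1 := Real.sqrt_one.symm
        _ ≤ Real.sqrt (∑ u, ‖((G.adjMatrix ℂ).mulVec x) u‖ ^ 2) := Real.sqrt_le_sqrt h2
        _ = en ((G.adjMatrix ℂ).mulVec x) := rfl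
    have h3 := hC.2 x
    rw [hen, mul_one] at h3
    linarith
  have hρ0 : (0:ℝ) < specRad G := lt_of_lt_of_le one_pos hρ1
  have hΔ1 : (1:ℝ) ≤ (G.maxDegree : ℝ) := le_trans hρ1 hρΔ
  set ρ := specRad G
  set Δ : ℝ := (G.maxDegree : ℝ) with hΔdef
  set L := Real.log (Δ / ρ) with hLdef
  have hL0 : (0:ℝ) ≤ L := Real.log_nonneg ((one_le_div hρ0).2 hρΔ)
  have hden : (0:ℝ) < 32 * Real.sqrt 2 * (L + 4) := by positivity
  set K := ρ / (32 * Real.sqrt 2 * (L + 4)) with hKdef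
  have hK0 : (0:ℝ) ≤ K := le_of_lt (div_pos hρ0 hden)
  have hKbound : ∀ X Y : Finset V, (((X ×ˢ Y).filter (fun p => G.Adj p.1 p.2)).card : ℝ)
      ≤ K * Real.sqrt ((X.card : ℝ) * Y.card) := by
    intro X Y
    rcases Finset.eq_empty_or_nonempty X with hX | hX
    · rw [hX]; simp
    rcases Finset.eq_empty_or_nonempty Y with hY | hY
    · rw [hY]; simp
    exact le_of_lt (hcon X Y hX hY)
  set m : ℕ := ⌈(1.443:ℝ) * L⌉₊ with hm
  set k : ℕ := m + 5 with hk
  have hlog2 : (0:ℝ) < Real.log 2 := Real.log_pos one_lt_two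
  have hexpm : Real.exp L ≤ (2:ℝ)^m := by
    have h1 : L / Real.log 2 ≤ 1.443 * L := by
      rw [div_le_iff₀ hlog2]
      nlinarith [Real.log_two_gt_d9, hL0]
    have h2 : (1.443:ℝ) * L ≤ (m:ℝ) := Nat.le_ceil _
    have h3 : Real.exp L = (2:ℝ)^(L / Real.log 2 : ℝ) := by
      rw [Real.rpow_def_of_pos two_pos]
      congr 1
      field_simp
    calc Real.exp L = (2:ℝ)^(L / Real.log 2 : ℝ) := h3
      _ ≤ (2:ℝ)^((m:ℝ)) := Real.rpow_le_rpow_of_exponent_le one_le_two (le_trans h1 h2)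
      _ = (2:ℝ)^m := by rw [Real.rpow_natCast]
  have hΔeq : Δ = ρ * Real.exp L := by
    rw [hLdef, Real.exp_log (div_pos (by linarith) hρ0)]
    field_simp
  have h2k : 32 * Δ ≤ 2^k * ρ := by
    have h4 : (2:ℝ)^k = 2^m * 32 := by rw [hk, pow_add]; norm_num
    calc 32 * Δ = 32 * (ρ * Real.exp L) := by rw [hΔeq]
      _ ≤ 32 * (ρ * (2:ℝ)^m) := by
          apply mul_le_mul_of_nonneg_left _ (by norm_num)
          exact mul_le_mul_of_nonneg_left hexpm (le_of_lt hρ0)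
      _ = 2^k * ρ := by rw [h4]; ring
  have hfar : 8 * Δ * (1/2:ℝ)^k ≤ ρ / 4 := by
    have hinv : (1/2:ℝ)^k * 2^k = 1 := by
      rw [← mul_pow]; norm_num
    nlinarith [pow_pos (by norm_num : (0:ℝ) < 1/2) k, pow_pos (by norm_num : (0:ℝ) < 2) k,
      h2k, mul_le_mul_of_nonneg_right h2k (le_of_lt (pow_pos (by norm_num : (0:ℝ) < 1/2) k))]
  have hsqrt2 : (1.414:ℝ) ≤ Real.sqrt 2 := by
    rw [show (1.414:ℝ) = Real.sqrt (1.414^2) by rw [Real.sqrt_sq (by norm_num)]]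
    apply Real.sqrt_le_sqrt; norm_num
  have hkR : (k:ℝ) < 1.443 * L + 6 := by
    have h5 : (m:ℝ) < 1.443 * L + 1 := Nat.ceil_lt_add_one (by positivity)
    rw [hk]; push_cast; linarith
  have hKD : K * (32 * Real.sqrt 2 * (L + 4)) = ρ := by
    rw [hKdef]; field_simp
  have hKpos : 0 < K := div_pos hρ0 hden
  have hnear : 4*K*(2*(k:ℝ)+1) < 3/4 * ρ := by
    have h6 : 16 * (2*(k:ℝ)+1) < 3 * (32 * Real.sqrt 2 * (L + 4)) := by
      have h7 : (1.414:ℝ) * (L+4) ≤ Real.sqrt 2 * (L+4) :=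
        mul_le_mul_of_nonneg_right hsqrt2 (by linarith)
      nlinarith [hkR, hL0]
    calc 4*K*(2*(k:ℝ)+1) = K * (16 * (2*(k:ℝ)+1)) / 4 := by ring
      _ < K * (3 * (32 * Real.sqrt 2 * (L + 4))) / 4 := by
          apply div_lt_div_of_pos_right _ (by norm_num)
          exact mul_lt_mul_of_pos_left h6 hKpos
      _ = 3/4 * ρ := by rw [← hKD]; ring
  set C := 4*K*(2*(k:ℝ)+1) + 8*Δ*(1/2:ℝ)^k with hCdef
  have hC0 : (0:ℝ) ≤ C := by
    apply add_nonneg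
    · exact mul_nonneg (mul_nonneg (by norm_num) hK0) (by positivity)
    · apply mul_nonneg (mul_nonneg (by norm_num) _) (by positivity)
      rw [hΔdef]; exact Nat.cast_nonneg _
  have hCmem : C ∈ S := ⟨hC0, Stmt13Aux.main_bound G hV K hK0 k hKbound hC0⟩
  have hle : ρ ≤ C := csInf_le hbdd hCmem
  have hlt : C < ρ := by
    calc C = 4*K*(2*(k:ℝ)+1) + 8*Δ*(1/2:ℝ)^k := hCdef
      _ < 3/4 * ρ + ρ/4 := add_lt_add_of_lt_of_le hnear hfar
      _ = ρ := by ring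
  linarith
end

section
/- The function f(x,y) := (1−x)H(y/(1−x)) + (1−y)H(x/(1−y)), defined on the triangle Ω = {(x,y) : x ≥ 0, y ≥ 0, x+y ≤ 1} (extended by continuity), attains its maximum over Ω uniquely at x₀ = y₀ = (5−√5)/10, and the maximum value is 2·log φ where φ = (1+√5)/2. -/
/-!
With `u = 1 - x`, `v = 1 - y`, `z = 1 - x - y` and `h = negMulLog`, the function is
`f = h x + h y + 2 h z - h u - h v`. For `u, v > 0`, the gap `2 log φ - f x y` is exactly a
sum of nonnegative terms: three Gibbs terms `(q / c) · klFun (c p / q)` for the pairs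
`(p, q, c) = (x, v, φ²), (y, u, φ²), (z, √u √v, φ)` (the last one counted twice), and
`(√u - √v)² / φ`. That the sum is exact comes down to `1 / φ² + 1 / φ = 1`. The gap vanishes
only when `u = v` and `φ² x = v`, i.e. at `x = y = 1 / (φ² + 1) = (5 - √5) / 10`. The corners
`(1, 0)` and `(0, 1)`, where `f = 0`, are checked directly.
-/

/-- The natural-logarithm entropy function (with the convention
`Real.log 0 = 0`, this agrees with the continuous extension `H 0 = H 1 = 0`). -/
noncomputable def H (x : ℝ) : ℝ := -(x * Real.log x) - (1 - x) * Real.log (1 - x)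

/-- The function f(x,y) = (1−x)H(y/(1−x)) + (1−y)H(x/(1−y)); with Lean's
convention `a / 0 = 0` this agrees with the continuous extension of the
formula to the whole triangle Ω. -/
noncomputable def f (x y : ℝ) : ℝ :=
  (1 - x) * H (y / (1 - x)) + (1 - y) * H (x / (1 - y))

open Real InformationTheory
open scoped goldenRatio

lemma H_eq_negMulLog_add (t : ℝ) : H t = negMulLog t + negMulLog (1 - t) := by
  simp only [H, negMulLog]; ring

lemma mul_negMulLog_div {y s : ℝ} (hs : s ≠ 0) :
    s * negMulLog (y / s) = negMulLog y + y * log s := by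
  rw [div_eq_mul_inv, negMulLog_mul, negMulLog, negMulLog, log_inv]
  field_simp

lemma add_mul_H_div_add (y z : ℝ) :
    (y + z) * H (y / (y + z)) = negMulLog y + negMulLog z - negMulLog (y + z) := by
  rcases eq_or_ne (y + z) 0 with hs | hs
  · obtain rfl : z = -y := by linarith
    simp [negMulLog, log_neg_eq_log]
  · have hz : 1 - y / (y + z) = z / (y + z) := by field_simp; ring
    rw [H_eq_negMulLog_add, hz, mul_add, mul_negMulLog_div hs, mul_negMulLog_div hs]
    simp only [negMulLog]
    ring

lemma f_eq_negMulLog (x y : ℝ) :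
    f x y = negMulLog x + negMulLog y + 2 * negMulLog (1 - x - y)
      - negMulLog (1 - x) - negMulLog (1 - y) := by
  have hu := add_mul_H_div_add y (1 - x - y)
  have hv := add_mul_H_div_add x (1 - x - y)
  rw [show y + (1 - x - y) = 1 - x by ring] at hu
  rw [show x + (1 - x - y) = 1 - y by ring] at hv
  rw [f, hu, hv]
  ring

lemma div_mul_klFun_mul_div {c q : ℝ} (hc : c ≠ 0) (hq : q ≠ 0) (p : ℝ) :
    q / c * klFun (c * p / q) = p * log c - negMulLog p - p * log q + q / c - p := by
  rcases eq_or_ne p 0 with rfl | hp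
  · simp [klFun_apply]
  · rw [klFun_apply, negMulLog, log_div (by positivity) hq, log_mul hc hp]
    field_simp
    ring

lemma two_log_goldenRatio_sub_f {x y : ℝ} (hx : x < 1) (hy : y < 1) :
    2 * log φ - f x y =
      (1 - y) / φ ^ 2 * klFun (φ ^ 2 * x / (1 - y))
        + (1 - x) / φ ^ 2 * klFun (φ ^ 2 * y / (1 - x))
        + 2 * (√(1 - x) * √(1 - y) / φ * klFun (φ * (1 - x - y) / (√(1 - x) * √(1 - y))))
        + (√(1 - x) - √(1 - y)) ^ 2 / φ := by
  have hu : 0 < 1 - x := by linarith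
  have hv : 0 < 1 - y := by linarith
  have hw : 0 < √(1 - x) * √(1 - y) := by positivity
  have hφ2 : 0 < φ ^ 2 := by positivity
  rw [div_mul_klFun_mul_div hφ2.ne' hv.ne', div_mul_klFun_mul_div hφ2.ne' hu.ne',
    div_mul_klFun_mul_div goldenRatio_ne_zero hw.ne', f_eq_negMulLog,
    log_mul (sqrt_pos.2 hu).ne' (sqrt_pos.2 hv).ne', log_sqrt hu.le, log_sqrt hv.le, log_pow]
  simp only [negMulLog]
  have hsu := sq_sqrt hu.le
  have hsv := sq_sqrt hv.le
  have hsq := goldenRatio_sq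
  have hg := goldenRatio_ne_zero
  generalize φ = g at *
  push_cast
  field_simp
  linear_combination (2 - x - y) * hsq - g * hsu - g * hsv

lemma goldenRatio_sq_mul_eq_one_sub_iff {x : ℝ} : φ ^ 2 * x = 1 - x ↔ x = (φ ^ 2 + 1)⁻¹ := by
  rw [← mul_eq_one_iff_eq_inv₀ (by positivity)]
  constructor <;> intro h <;> linarith

lemma f_inv_goldenRatio_sq_add_one :
    f (φ ^ 2 + 1)⁻¹ (φ ^ 2 + 1)⁻¹ = 2 * log φ := by
  set x₀ := (φ ^ 2 + 1)⁻¹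
  have hx₀ : x₀ < 1 :=
    inv_lt_one_of_one_lt₀ (lt_add_of_pos_left 1 (pow_pos goldenRatio_pos 2))
  have hu : 0 < 1 - x₀ := by linarith
  have hφx₀ : φ ^ 2 * x₀ = 1 - x₀ := goldenRatio_sq_mul_eq_one_sub_iff.2 rfl
  have h₁ : φ ^ 2 * x₀ / (1 - x₀) = 1 := by
    rw [div_eq_one_iff_eq hu.ne', hφx₀]
  have h₂ : φ * (1 - x₀ - x₀) / (√(1 - x₀) * √(1 - x₀)) = 1 := by
    rw [mul_self_sqrt hu.le, div_eq_one_iff_eq hu.ne']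
    linear_combination (1 - φ) * hφx₀ + φ * x₀ * goldenRatio_sq
  have h := two_log_goldenRatio_sub_f hx₀ hx₀
  rw [h₁, h₂, klFun_one] at h
  norm_num at h
  linarith

lemma five_sub_sqrt_five_div_ten_eq_inv : (5 - √5) / 10 = (φ ^ 2 + 1)⁻¹ := by
  rw [goldenRatio_sq, goldenRatio]
  have h5 : √5 ^ 2 = 5 := sq_sqrt (by norm_num)
  field_simp
  linear_combination -h5

lemma f_lt_two_log_goldenRatio {x y : ℝ} (hx : 0 ≤ x) (hy : 0 ≤ y) (hxy : x + y ≤ 1)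
    (hne : (x, y) ≠ ((φ ^ 2 + 1)⁻¹, (φ ^ 2 + 1)⁻¹)) : f x y < 2 * log φ := by
  have hlog : 0 < log φ := log_pos one_lt_goldenRatio
  rcases eq_or_lt_of_le (show x ≤ 1 by linarith) with rfl | hx₁
  · obtain rfl : y = 0 := by linarith
    norm_num [f, H, hlog]
  rcases eq_or_lt_of_le (show y ≤ 1 by linarith) with rfl | hy₁
  · obtain rfl : x = 0 := by linarith
    norm_num [f, H, hlog]
  have hu : 0 < 1 - x := by linarith
  have hv : 0 < 1 - y := by linarith
  have hφ := goldenRatio_pos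
  have k₁ := klFun_nonneg (div_nonneg (by positivity : 0 ≤ φ ^ 2 * x) hv.le)
  have k₂ := klFun_nonneg (div_nonneg (by positivity : 0 ≤ φ ^ 2 * y) hu.le)
  have k₃ := klFun_nonneg (div_nonneg (mul_nonneg hφ.le (by linarith : 0 ≤ 1 - x - y))
    (by positivity : 0 ≤ √(1 - x) * √(1 - y)))
  rw [← sub_pos, two_log_goldenRatio_sub_f hx₁ hy₁]
  rcases eq_or_ne x y with rfl | hxy'
  · have hk : klFun (φ ^ 2 * x / (1 - x)) ≠ 0 := by
      rw [Ne, klFun_eq_zero_iff (by positivity), div_eq_one_iff_eq hu.ne',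
        goldenRatio_sq_mul_eq_one_sub_iff]
      rintro rfl
      exact hne rfl
    have := mul_pos (by positivity : 0 < (1 - x) / φ ^ 2) (k₁.lt_of_ne hk.symm)
    positivity
  · have hsqrt : √(1 - x) - √(1 - y) ≠ 0 := by
      rw [sub_ne_zero, Ne, sqrt_inj hu.le hv.le]
      intro h
      exact hxy' (by linarith)
    positivity

theorem stmt18 :
    f ((5 - Real.sqrt 5) / 10) ((5 - Real.sqrt 5) / 10) =
        2 * Real.log ((1 + Real.sqrt 5) / 2) ∧
      ∀ x y : ℝ, 0 ≤ x → 0 ≤ y → x + y ≤ 1 →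
        (x, y) ≠ ((5 - Real.sqrt 5) / 10, (5 - Real.sqrt 5) / 10) →
        f x y < 2 * Real.log ((1 + Real.sqrt 5) / 2) := by
  rw [five_sub_sqrt_five_div_ten_eq_inv, ← goldenRatio]
  exact ⟨f_inv_goldenRatio_sq_add_one, fun x y hx hy hxy ↦ f_lt_two_log_goldenRatio hx hy hxy⟩
end
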